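/- arXiv:2412.05652 — 11 statements merged into one kernel-verified Lean document; each statement's English description precedes it below -/
import Mathlib

section
/- A complex number u satisfies tanh(u) = u if and only if u = v·i for some real number v which is a fixed point of the tangent function, i.e., if and only if the real part of u is zero and tan(Im u) = Im u. -/
open Complex in
private lemma aux_sinh_lt (x : ℝ) (hx : 0 < x) : Real.sinh x < x * Real.cosh x := by
  have h : StrictMonoOn (fun t : ℝ => t * Real.cosh t - Real.sinh t) (Set.Ici 0) := by
    apply strictMonoOn_of_deriv_pos (convex_Ici 0)
    · exact ((continuous_id.mul Real.continuous_cosh).sub Real.continuous_sinh).continuousOn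
    · intro t ht
      rw [interior_Ici, Set.mem_Ioi] at ht
      have hd : HasDerivAt (fun t : ℝ => t * Real.cosh t - Real.sinh t) (t * Real.sinh t) t := by
        have h1 : HasDerivAt (fun t : ℝ => t * Real.cosh t)
            (1 * Real.cosh t + t * Real.sinh t) t :=
          (hasDerivAt_id t).mul (Real.hasDerivAt_cosh t)
        have h2 := h1.sub (Real.hasDerivAt_sinh t)
        exact h2.congr_deriv (by ring)
      rw [hd.deriv]
      exact mul_pos ht (Real.sinh_pos_iff.2 ht)
  have h0 := h (Set.self_mem_Ici) (Set.mem_Ici.2 hx.le) hx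
  simp only [Real.cosh_zero, Real.sinh_zero, zero_mul, sub_zero] at h0
  linarith

/-- A complex number `u` satisfies `tanh u = u` iff `u = v·i`
for a real fixed point `v` of the tangent function, i.e. iff `re u = 0` and
`tan (im u) = im u`. -/
theorem stmt_3 (u : ℂ) :
    Complex.tanh u = u ↔ u.re = 0 ∧ Real.tan u.im = u.im := by
  constructor
  · intro h
    -- cosh u ≠ 0
    have hc : Complex.cosh u ≠ 0 := by
      intro hc0
      rw [Complex.tanh_eq_sinh_div_cosh, hc0, div_zero] at h
      rw [← h] at hc0
      simp [Complex.cosh_zero] at hc0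
    have hs : Complex.sinh u = u * Complex.cosh u := by
      rw [Complex.tanh_eq_sinh_div_cosh, div_eq_iff hc] at h
      exact h.symm ▸ rfl
    set D : ℝ := Complex.normSq (Complex.cosh u) with hDdef
    have hD : Complex.cosh u * (starRingEnd ℂ) (Complex.cosh u) = (D : ℂ) :=
      Complex.mul_conj _
    have hDpos : 0 < D := Complex.normSq_pos.2 hc
    have hconj : Complex.sinh ((starRingEnd ℂ) u)
        = (starRingEnd ℂ) u * Complex.cosh ((starRingEnd ℂ) u) := by
      rw [Complex.sinh_conj, Complex.cosh_conj, hs, map_mul]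
    -- equation for the real part
    have h1 : Real.sinh (2 * u.re) = 2 * u.re * D := by
      have e : Complex.sinh (u + (starRingEnd ℂ) u)
          = (u + (starRingEnd ℂ) u) * ((D : ℝ) : ℂ) := by
        rw [Complex.sinh_add, hconj, hs, Complex.cosh_conj, ← hD]
        ring_nf
      rw [Complex.add_conj] at e
      rw [← Complex.ofReal_sinh, ← Complex.ofReal_mul] at e
      exact_mod_cast e
    -- equation for the imaginary part
    have h2 : Real.sin (2 * u.im) = 2 * u.im * D := by
      have e : Complex.sinh (u - (starRingEnd ℂ) u)
          = (u - (starRingEnd ℂ) u) * ((D : ℝ) : ℂ) := by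
        rw [Complex.sinh_sub, hconj, hs, Complex.cosh_conj, ← hD]
        ring
      rw [Complex.sub_conj, Complex.sinh_mul_I] at e
      have e3 : Complex.sin (2 * (u.im : ℂ)) = 2 * (u.im : ℂ) * ((D : ℝ) : ℂ) :=
        mul_right_cancel₀ Complex.I_ne_zero (by push_cast at e ⊢; linear_combination e)
      rw [show (2 : ℂ) * (u.im : ℂ) = ((2 * u.im : ℝ) : ℂ) by push_cast; ring,
        ← Complex.ofReal_sin] at e3
      exact_mod_cast e3
    -- real part is zero
    have hx : u.re = 0 := by
      by_contra hx
      have h2x : (2 : ℝ) * u.re ≠ 0 := by simpa using hx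
      have hD1 : 1 < D := by
        have habs : Real.sinh |2 * u.re| > |2 * u.re| :=
          Real.self_lt_sinh_iff.2 (abs_pos.2 h2x)
        have h1abs : |Real.sinh (2 * u.re)| = Real.sinh |2 * u.re| := Real.abs_sinh _
        have : |2 * u.re| * D = Real.sinh |2 * u.re| := by
          rw [← h1abs, h1, abs_mul (2 * u.re) D, abs_of_pos hDpos]
        nlinarith [abs_pos.2 h2x]
      have hy : u.im = 0 := by
        by_contra hy
        have h2y : (2 : ℝ) * u.im ≠ 0 := by simpa using hy
        have hlt : |Real.sin (2 * u.im)| < |2 * u.im| := Real.abs_sin_lt_abs h2y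
        have : |Real.sin (2 * u.im)| = |2 * u.im| * D := by
          rw [h2, abs_mul, abs_of_pos hDpos]
        nlinarith [abs_pos.2 h2y]
      -- now u is real with sinh x = x cosh x, contradiction
      have hu : u = (u.re : ℂ) := Complex.ext rfl (by simp [hy])
      have hDval : D = Real.cosh u.re * Real.cosh u.re := by
        rw [hDdef, hu, ← Complex.ofReal_cosh, Complex.normSq_ofReal]
        simp
      have hE : Real.sinh u.re = u.re * Real.cosh u.re := by
        have h2m := Real.sinh_two_mul u.re
        have hcp := Real.cosh_pos u.re
        rw [h1, hDval] at h2m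
        nlinarith
      rcases lt_or_gt_of_ne hx with hneg | hpos
      · have := aux_sinh_lt (-u.re) (by linarith)
        rw [Real.sinh_neg, Real.cosh_neg] at this
        nlinarith
      · have := aux_sinh_lt u.re hpos
        linarith
    -- conclude the tangent equation
    refine ⟨hx, ?_⟩
    have hu : u = (u.im : ℂ) * Complex.I := Complex.ext (by simp [hx]) (by simp)
    rw [hu, Complex.tanh_mul_I] at h
    have := mul_right_cancel₀ Complex.I_ne_zero h
    rw [← Complex.ofReal_tan] at this
    exact_mod_cast this
  · rintro ⟨hx, ht⟩
    have hu : u = (u.im : ℂ) * Complex.I := by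
      apply Complex.ext <;> simp [hx]
    rw [hu, Complex.tanh_mul_I, ← Complex.ofReal_tan, ht]
end

section
/- Let a < b be real numbers and define S : ℂ → ℂ by S(λ) := (e^{λa} + e^{λb})/2 − (1/(b−a)) ∫_a^b e^{λx} dx. Then for every λ ∈ ℂ one has S(λ) = 0 if and only if u := λ(b−a)/2 satisfies tanh(u) = u. -/
lemma tanh_iff (u : ℂ) : Complex.tanh u = u ↔ Complex.sinh u = u * Complex.cosh u := by
  rw [Complex.tanh_eq_sinh_div_cosh]
  by_cases hc : Complex.cosh u = 0
  · have hs : Complex.sinh u ≠ 0 := by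
      intro hs
      have := Complex.cosh_sq_sub_sinh_sq u
      rw [hc, hs] at this; simp at this
    constructor
    · intro h
      exfalso
      rw [hc, div_zero] at h
      rw [← h] at hc; simp [Complex.cosh_zero] at hc
    · intro h; exact absurd (by rw [h, hc, mul_zero]) hs
  · rw [div_eq_iff hc, mul_comm]

/-- For `a < b` and `S(λ) = (e^{λa}+e^{λb})/2 − (1/(b−a))∫_a^b e^{λx} dx`,
one has `S(λ) = 0` iff `u := λ(b−a)/2` satisfies `tanh u = u`. -/
theorem stmt_5 (a b : ℝ) (hab : a < b) (l : ℂ) :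
    (Complex.exp (l * a) + Complex.exp (l * b)) / 2
        - (1 / ((b : ℂ) - (a : ℂ))) * (∫ x in a..b, Complex.exp (l * x)) = 0
      ↔ Complex.tanh (l * ((b : ℂ) - (a : ℂ)) / 2) = l * ((b : ℂ) - (a : ℂ)) / 2 := by
  have hba : (b : ℂ) - a ≠ 0 := by
    rw [sub_ne_zero]
    exact_mod_cast hab.ne'
  rw [tanh_iff]
  by_cases hl : l = 0
  · subst hl
    simp [intervalIntegral.integral_const, hba]
  · rw [integral_exp_mul_complex hl, Complex.sinh, Complex.cosh]
    have ea : Complex.exp (l * a) =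
        Complex.exp (l * ((a : ℂ) + b) / 2) * Complex.exp (-(l * ((b : ℂ) - a) / 2)) := by
      rw [← Complex.exp_add]; ring_nf
    have eb : Complex.exp (l * b) =
        Complex.exp (l * ((a : ℂ) + b) / 2) * Complex.exp (l * ((b : ℂ) - a) / 2) := by
      rw [← Complex.exp_add]; ring_nf
    rw [ea, eb]
    set E := Complex.exp (l * ((a : ℂ) + b) / 2) with hE
    set P := Complex.exp (l * ((b : ℂ) - a) / 2) with hP
    set M := Complex.exp (-(l * ((b : ℂ) - a) / 2)) with hM
    have hEne : E ≠ 0 := Complex.exp_ne_zero _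
    constructor
    · intro h
      field_simp [hl] at h ⊢
      have h2 : E * ((M + P) * (((b:ℂ) - a) * l) - 2 * (P - M)) = 0 := by linear_combination h
      have h3 := (mul_eq_zero.1 h2).resolve_left hEne
      linear_combination (-1 : ℂ) * h3
    · intro h
      field_simp [hl] at h ⊢
      linear_combination (-E) * h
end

section
/- Let a < b be real numbers and define S : ℂ → ℂ by S(λ) := (e^{λa} + e^{λb})/2 − (1/(b−a)) ∫_a^b e^{λx} dx. Then S(0) = 0, S′(0) = 0 and S″(0) = (b−a)²/6 ≠ 0; moreover, for every λ ∈ ℂ \ {0} with S(λ) = 0, one has S′(λ) = e^{λ(a+b)/2} · cosh(λ(b−a)/2) · λ · ((b−a)/2)² ≠ 0. Consequently, every nonzero root of S is a simple zero of S and 0 is a zero of S of multiplicity exactly 2. -/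
open intervalIntegral MeasureTheory Metric in
lemma stmt6_int_hasDerivAt (a b : ℝ) (n : ℕ) (l0 : ℂ) :
    HasDerivAt (fun l : ℂ => ∫ x in a..b, (x:ℂ)^n * Complex.exp (l * x))
      (∫ x in a..b, (x:ℂ)^(n+1) * Complex.exp (l0 * x)) l0 := by
  have h := intervalIntegral.hasDerivAt_integral_of_dominated_loc_of_deriv_le
    (F := fun (l : ℂ) (x : ℝ) => (x:ℂ)^n * Complex.exp (l * x))
    (F' := fun (l : ℂ) (x : ℝ) => (x:ℂ)^(n+1) * Complex.exp (l * x))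
    (bound := fun t => |t|^(n+1) * Real.exp ((‖l0‖+1)*|t|))
    (μ := volume) (a := a) (b := b) (x₀ := l0) (ball_mem_nhds l0 zero_lt_one)
    ?meas ?int ?meas' ?bnd ?bint ?diff
  · exact h.2
  case meas =>
    filter_upwards with l
    exact (Continuous.aestronglyMeasurable (by fun_prop)).restrict
  case int => exact (Continuous.intervalIntegrable (by fun_prop) a b)
  case meas' => exact (Continuous.aestronglyMeasurable (by fun_prop)).restrict
  case bnd =>
    filter_upwards with t _ x hx
    rw [norm_mul, norm_pow, Complex.norm_exp]
    have h1 : ‖(t:ℂ)‖ = |t| := Complex.norm_real t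
    have h2 : (x * t).re ≤ (‖l0‖+1) * |t| := by
      calc (x * (t:ℂ)).re ≤ ‖x * (t:ℂ)‖ := Complex.re_le_norm _
        _ = ‖x‖ * |t| := by rw [norm_mul, h1]
        _ ≤ (‖l0‖+1) * |t| := by
            apply mul_le_mul_of_nonneg_right _ (abs_nonneg t)
            have := mem_ball_iff_norm.mp hx
            calc ‖x‖ ≤ ‖x - l0‖ + ‖l0‖ := by simpa using norm_add_le (x - l0) l0
              _ ≤ ‖l0‖ + 1 := by linarith
    rw [h1]
    exact mul_le_mul_of_nonneg_left (Real.exp_le_exp.mpr h2) (by positivity)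
  case bint => exact (Continuous.intervalIntegrable (by fun_prop) a b)
  case diff =>
    filter_upwards with t _ x _
    have h1 : HasDerivAt (fun l : ℂ => l * (t:ℂ)) (t:ℂ) x := hasDerivAt_mul_const _
    have := (h1.cexp).const_mul ((t:ℂ)^n)
    refine this.congr_deriv ?_
    ring

/-- For `a < b` let `S(λ) = (e^{λa}+e^{λb})/2 − (1/(b−a))∫_a^b e^{λx} dx`.
Then `S(0) = 0`, `S′(0) = 0`, `S″(0) = (b−a)²/6 ≠ 0`, and for every nonzero root `λ` of `S`,
`S′(λ) = e^{λ(a+b)/2} · cosh(λ(b−a)/2) · λ · ((b−a)/2)² ≠ 0`.  Hence every nonzero root of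
`S` is simple and `0` is a root of multiplicity exactly `2`. -/
theorem stmt_6 (a b : ℝ) (hab : a < b) (S : ℂ → ℂ)
    (hS : ∀ l : ℂ, S l = (Complex.exp (l * a) + Complex.exp (l * b)) / 2
        - (1 / ((b : ℂ) - (a : ℂ))) * (∫ x in a..b, Complex.exp (l * x))) :
    S 0 = 0 ∧ deriv S 0 = 0 ∧
    deriv (deriv S) 0 = ((b : ℂ) - (a : ℂ)) ^ 2 / 6 ∧
    ((b : ℂ) - (a : ℂ)) ^ 2 / 6 ≠ 0 ∧
    ∀ l : ℂ, l ≠ 0 → S l = 0 →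
      deriv S l = Complex.exp (l * ((a : ℂ) + (b : ℂ)) / 2)
          * Complex.cosh (l * ((b : ℂ) - (a : ℂ)) / 2) * l * (((b : ℂ) - (a : ℂ)) / 2) ^ 2
        ∧ deriv S l ≠ 0 := by
  have hba : (a : ℂ) ≠ (b : ℂ) := by exact_mod_cast hab.ne
  have hd : (b : ℂ) - (a : ℂ) ≠ 0 := sub_ne_zero.mpr (Ne.symm hba)
  have hSf : S = fun l : ℂ => (Complex.exp (l * a) + Complex.exp (l * b)) / 2
      - (1 / ((b : ℂ) - (a : ℂ))) * (∫ x in a..b, Complex.exp (l * x)) := funext hS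
  subst hSf
  have hea : ∀ l : ℂ, HasDerivAt (fun l : ℂ => Complex.exp (l * (a:ℂ)))
      ((a:ℂ) * Complex.exp (l * a)) l := fun l => by
    simpa [mul_comm] using (hasDerivAt_mul_const (a:ℂ) (x := l)).cexp
  have heb : ∀ l : ℂ, HasDerivAt (fun l : ℂ => Complex.exp (l * (b:ℂ)))
      ((b:ℂ) * Complex.exp (l * b)) l := fun l => by
    simpa [mul_comm] using (hasDerivAt_mul_const (b:ℂ) (x := l)).cexp
  have hI0 : ∀ l : ℂ, HasDerivAt (fun l : ℂ => ∫ x in a..b, Complex.exp (l * x))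
      (∫ x in a..b, (x:ℂ) * Complex.exp (l * x)) l := fun l => by
    simpa using stmt6_int_hasDerivAt a b 0 l
  set S1 : ℂ → ℂ := fun l => ((a:ℂ) * Complex.exp (l * a) + (b:ℂ) * Complex.exp (l * b)) / 2
      - (1 / ((b : ℂ) - (a : ℂ))) * (∫ x in a..b, (x:ℂ) * Complex.exp (l * x)) with hS1def
  have hS1 : ∀ l : ℂ, HasDerivAt (fun l : ℂ => (Complex.exp (l * a) + Complex.exp (l * b)) / 2
      - (1 / ((b : ℂ) - (a : ℂ))) * (∫ x in a..b, Complex.exp (l * x))) (S1 l) l := fun l =>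
    (((hea l).add (heb l)).div_const 2).sub ((hI0 l).const_mul _)
  have hderivS : deriv (fun l : ℂ => (Complex.exp (l * a) + Complex.exp (l * b)) / 2
      - (1 / ((b : ℂ) - (a : ℂ))) * (∫ x in a..b, Complex.exp (l * x))) = S1 :=
    funext fun l => (hS1 l).deriv
  have hint1 : (∫ x in a..b, Complex.exp ((0:ℂ) * x)) = ((b:ℂ) - a) := by
    simp [Complex.exp_zero]
  have hintx : (∫ x in a..b, (x:ℂ)) = (((b^2 - a^2)/2 : ℝ) : ℂ) := by
    rw [← integral_id]
    exact intervalIntegral.integral_ofReal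
  have hintx2 : (∫ x in a..b, (x:ℂ)^2) = (((b^3 - a^3)/3 : ℝ) : ℂ) := by
    rw [show (fun x : ℝ => ((x:ℂ))^2) = fun x : ℝ => (((x^2 : ℝ)) : ℂ) by push_cast; rfl,
      intervalIntegral.integral_ofReal]
    norm_num [integral_pow]
  refine ⟨?_, ?_, ?_, ?_, ?_⟩
  · simp only [zero_mul, Complex.exp_zero, hint1]
    field_simp
    simp
    ring
  · rw [hderivS, hS1def]
    simp only [zero_mul, Complex.exp_zero, mul_one, hintx]
    push_cast
    field_simp
    ring
  · rw [hderivS]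
    have hS2 : HasDerivAt S1 (((a:ℂ)^2 * Complex.exp ((0:ℂ) * a) + (b:ℂ)^2 * Complex.exp ((0:ℂ) * b)) / 2
        - (1 / ((b : ℂ) - (a : ℂ))) * (∫ x in a..b, (x:ℂ)^2 * Complex.exp ((0:ℂ) * x))) 0 := by
      have hIx : HasDerivAt (fun l : ℂ => ∫ x in a..b, (x:ℂ) * Complex.exp (l * x))
          (∫ x in a..b, (x:ℂ)^2 * Complex.exp ((0:ℂ) * x)) 0 := by
        simpa using stmt6_int_hasDerivAt a b 1 0
      have h := ((((hea 0).const_mul (a:ℂ)).add ((heb 0).const_mul (b:ℂ))).div_const 2).sub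
        (hIx.const_mul (1 / ((b : ℂ) - (a : ℂ))))
      refine h.congr_deriv ?_
      ring
    rw [hS2.deriv]
    simp only [zero_mul, Complex.exp_zero, mul_one, hintx2]
    push_cast
    field_simp
    ring
  · exact div_ne_zero (pow_ne_zero 2 hd) (by norm_num)
  · intro l hl hroot
    rw [hderivS, hS1def]
    simp only at hroot ⊢
    have hintexp : (∫ x in a..b, Complex.exp (l * x))
        = (Complex.exp (l * b) - Complex.exp (l * a)) / l := integral_exp_mul_complex hl
    have hintxexp : (∫ x in a..b, (x:ℂ) * Complex.exp (l * x))
        = ((b:ℂ)/l - 1/l^2) * Complex.exp (l * b) - ((a:ℂ)/l - 1/l^2) * Complex.exp (l * a) := by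
      have hG : ∀ z : ℂ, HasDerivAt (fun z : ℂ => (z/l - 1/l^2) * Complex.exp (l * z))
          (z * Complex.exp (l * z)) z := by
        intro z
        have h1 : HasDerivAt (fun z : ℂ => z/l - 1/l^2) (1/l) z :=
          ((hasDerivAt_id z).div_const l).sub_const (1/l^2)
        have h2 : HasDerivAt (fun z : ℂ => Complex.exp (l * z)) (Complex.exp (l * z) * l) z := by
          simpa using ((hasDerivAt_id z).const_mul l).cexp
        have h3 := h1.mul h2
        refine h3.congr_deriv ?_
        field_simp
        ring
      exact intervalIntegral.integral_eq_sub_of_hasDerivAt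
        (f := fun x : ℝ => (((x:ℂ))/l - 1/l^2) * Complex.exp (l * x))
        (fun x _ => (hG x).comp_ofReal)
        (Continuous.intervalIntegrable (by fun_prop) a b)
    rw [hintexp] at hroot
    rw [hintxexp]
    have hvu : Complex.exp (l * b) - Complex.exp (l * a)
        = l * ((b:ℂ) - a) * (Complex.exp (l * a) + Complex.exp (l * b)) / 2 := by
      field_simp at hroot
      linear_combination -hroot/2
    have hEC : Complex.exp (l * ((a : ℂ) + (b : ℂ)) / 2)
        * Complex.cosh (l * ((b : ℂ) - (a : ℂ)) / 2)
        = (Complex.exp (l * a) + Complex.exp (l * b)) / 2 := by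
      have h2c := Complex.two_cosh (l * ((b:ℂ) - a) / 2)
      have e1 : Complex.exp (l * ((a:ℂ) + b) / 2) * Complex.exp (l * ((b:ℂ) - a) / 2)
          = Complex.exp (l * b) := by rw [← Complex.exp_add]; congr 1; ring
      have e2 : Complex.exp (l * ((a:ℂ) + b) / 2) * Complex.exp (-(l * ((b:ℂ) - a) / 2))
          = Complex.exp (l * a) := by rw [← Complex.exp_add]; congr 1; ring
      have key : Complex.exp (l * ((a:ℂ) + b) / 2) * (2 * Complex.cosh (l * ((b:ℂ) - a) / 2))
          = Complex.exp (l * a) + Complex.exp (l * b) := by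
        rw [h2c, mul_add, e1, e2]; ring
      linear_combination key / 2
    have hsum : Complex.exp (l * a) + Complex.exp (l * b) ≠ 0 := by
      intro h0
      rw [h0] at hvu
      have h1 : Complex.exp (l * b) = Complex.exp (l * a) := by
        have h := hvu
        rw [mul_zero, zero_div] at h
        exact sub_eq_zero.mp h
      have h2 : (2:ℂ) * Complex.exp (l * a) = 0 := by rw [← h0, h1]; ring
      simp [Complex.exp_ne_zero] at h2
    have hkey : ((a:ℂ) * Complex.exp (l * ↑a) + ↑b * Complex.exp (l * ↑b)) / 2 -
          1 / (↑b - ↑a) * ((↑b / l - 1 / l ^ 2) * Complex.exp (l * ↑b) -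
            (↑a / l - 1 / l ^ 2) * Complex.exp (l * ↑a))
        = (Complex.exp (l * a) + Complex.exp (l * b)) / 2 * l * (((b:ℂ) - a)/2)^2 := by
      have hvu2 : 2 * (Complex.exp (l * b) - Complex.exp (l * a))
          = l * ((b:ℂ) - a) * (Complex.exp (l * a) + Complex.exp (l * b)) := by
        linear_combination 2 * hvu
      field_simp [hd, hl]
      rw [mul_comm (a:ℂ) l]
      linear_combination (l^2*((b:ℂ)-a)^2 - 2*l*((a:ℂ)+b) + 4) * hvu2
    refine ⟨by rw [hkey, hEC], ?_⟩
    rw [hkey]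
    exact mul_ne_zero (mul_ne_zero (div_ne_zero hsum two_ne_zero) hl)
      (pow_ne_zero 2 (div_ne_zero hd two_ne_zero))
end

section
/- Let n ∈ ℕ, c = (c₀,…,cₙ) ∈ 𝕂^{n+1} with cₙ = 1, and let ω_c : ℝ → 𝕂 be the characteristic solution of D_c(ω) = 0. Then for every n-times continuously differentiable function f : [a,b] → 𝕂 and all x, a ∈ [a,b], one has f(x) = Σ_{j=0}^{n−1} ( f^{(j)}(a) · Σ_{i=0}^{n−1−j} c_{i+j+1} ω_c^{(i)}(x−a) ) + ∫_a^x D_c(f)(t) · ω_c(x−t) dt. -/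
lemma alg7 {𝕂 : Type*} [RCLike 𝕂] (n : ℕ) (hn : 0 < n) (c : ℕ → 𝕂) (hc : c n = 1)
    (w a : ℕ → 𝕂) (hw : ∑ i ∈ Finset.range (n + 1), c i * w i = 0) :
    ∑ j ∈ Finset.range n,
      (a (j + 1) * ∑ i ∈ Finset.range (n - j), c (i + j + 1) * w i
        - a j * ∑ i ∈ Finset.range (n - j), c (i + j + 1) * w (i + 1))
      = (∑ i ∈ Finset.range (n + 1), c i * a i) * w 0 := by
  obtain ⟨m, rfl⟩ : ∃ m, n = m + 1 := ⟨n - 1, by omega⟩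
  set Ψ : ℕ → 𝕂 := fun j => ∑ i ∈ Finset.range (m + 1 - j), c (i + j + 1) * w i with hΨ
  set Φ : ℕ → 𝕂 := fun j => ∑ i ∈ Finset.range (m + 1 - j), c (i + j + 1) * w (i + 1) with hΦ
  have key : ∀ j < m + 1, Ψ j = Φ (j + 1) + c (j + 1) * w 0 := by
    intro j hj
    have h1 : m + 1 - j = (m + 1 - (j + 1)) + 1 := by omega
    rw [hΨ]
    simp only [h1, Finset.sum_range_succ']
    congr 1
    · apply Finset.sum_congr rfl
      intro i _
      rw [show i + 1 + j + 1 = i + (j + 1) + 1 from by omega]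
    · norm_num
  have hΦ0 : Φ 0 = - (c 0 * w 0) := by
    rw [Finset.sum_range_succ'] at hw
    rw [hΦ]
    simp only [Nat.sub_zero]
    linear_combination hw
  have hΨm : Ψ m = c (m + 1) * w 0 := by
    rw [key m (by omega)]
    have : Φ (m + 1) = 0 := by rw [hΦ]; simp
    rw [this]; ring
  calc ∑ j ∈ Finset.range (m + 1), (a (j + 1) * Ψ j - a j * Φ j)
      = ∑ j ∈ Finset.range (m + 1), a (j + 1) * Ψ j
        - ∑ j ∈ Finset.range (m + 1), a j * Φ j := Finset.sum_sub_distrib _ _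
    _ = (∑ j ∈ Finset.range m, a (j + 1) * Ψ j + a (m + 1) * Ψ m)
        - (∑ j ∈ Finset.range m, a (j + 1) * Φ (j + 1) + a 0 * Φ 0) := by
        rw [Finset.sum_range_succ]
        rw [Finset.sum_range_succ']
    _ = (∑ i ∈ Finset.range (m + 1 + 1), c i * a i) * w 0 := by
        have hrw : ∀ j ∈ Finset.range m, a (j + 1) * Φ (j + 1)
            = a (j + 1) * Ψ j - a (j + 1) * (c (j + 1) * w 0) := by
          intro j hj
          rw [Finset.mem_range] at hj
          rw [key j (by omega)]; ring
        rw [Finset.sum_congr rfl hrw, hΨm, hΦ0, Finset.sum_sub_distrib,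
          Finset.sum_range_succ, Finset.sum_range_succ', add_mul, add_mul, Finset.sum_mul]
        rw [Finset.sum_congr rfl (fun i _ => by ring :
          ∀ i ∈ Finset.range m, a (i + 1) * (c (i + 1) * w 0) = c (i + 1) * a (i + 1) * w 0)]
        rw [hc]
        ring

/-- Generalized Taylor theorem: with `D_c(f) = cₙ f⁽ⁿ⁾ + ⋯ + c₀ f`
(`cₙ = 1`) and `ω_c` the characteristic solution of `D_c ω = 0`
(i.e. `ω_c⁽ⁱ⁾(0) = δ_{i,n−1}` for `i < n`), every `f ∈ C^n([p,q],𝕂)` satisfies, for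
`x, y ∈ [p,q]`,
`f(x) = Σ_{j<n} f⁽ʲ⁾(y) Σ_{i<n−j} c_{i+j+1} ω_c⁽ⁱ⁾(x−y) + ∫_y^x D_c(f)(t) ω_c(x−t) dt`. -/
theorem stmt_7 {𝕂 : Type*} [RCLike 𝕂] (n : ℕ) (hn : 0 < n)
    (c : ℕ → 𝕂) (hc : c n = 1)
    (ω : ℝ → 𝕂) (hω : ContDiff ℝ n ω)
    (hωD : ∀ t : ℝ, ∑ i ∈ Finset.range (n + 1), c i * iteratedDeriv i ω t = 0)
    (hω0 : ∀ i < n, iteratedDeriv i ω 0 = if i = n - 1 then 1 else 0)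
    (p q : ℝ) (hpq : p < q)
    (f : ℝ → 𝕂) (hf : ContDiffOn ℝ n f (Set.Icc p q))
    (x y : ℝ) (hx : x ∈ Set.Icc p q) (hy : y ∈ Set.Icc p q) :
    f x = (∑ j ∈ Finset.range n, iteratedDerivWithin j f (Set.Icc p q) y *
          ∑ i ∈ Finset.range (n - j), c (i + j + 1) * iteratedDeriv i ω (x - y))
        + ∫ t in y..x,
            (∑ i ∈ Finset.range (n + 1),
              c i * iteratedDerivWithin i f (Set.Icc p q) t) * ω (x - t) := by
  set s : Set ℝ := Set.Icc p q with hs_def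
  have hs : UniqueDiffOn ℝ s := uniqueDiffOn_Icc hpq
  set F : ℝ → 𝕂 := fun t => ∑ j ∈ Finset.range n,
    iteratedDerivWithin j f s t *
      ∑ i ∈ Finset.range (n - j), c (i + j + 1) * iteratedDeriv i ω (x - t) with hF_def
  set G : ℝ → 𝕂 := fun t =>
    (∑ i ∈ Finset.range (n + 1), c i * iteratedDerivWithin i f s t) * ω (x - t) with hG_def
  -- derivative facts for ω
  have hωd : ∀ i, i < n → ∀ u : ℝ,
      HasDerivAt (iteratedDeriv i ω) (iteratedDeriv (i + 1) ω u) u := by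
    intro i hi u
    have hdiff : Differentiable ℝ (iteratedDeriv i ω) :=
      hω.differentiable_iteratedDeriv i (by exact_mod_cast hi)
    rw [iteratedDeriv_succ]
    exact (hdiff u).hasDerivAt
  -- derivative facts for f
  have hfd : ∀ j, j < n → ∀ t ∈ s, HasDerivWithinAt (iteratedDerivWithin j f s)
      (iteratedDerivWithin (j + 1) f s t) s t := by
    intro j hj t ht
    have hdiff := hf.differentiableOn_iteratedDerivWithin (m := j) (by exact_mod_cast hj) hs
    have h1 := (hdiff t ht).hasDerivWithinAt
    rwa [← iteratedDerivWithin_succ] at h1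
  -- F has derivative G within s
  have hFd : ∀ t ∈ s, HasDerivWithinAt F (G t) s t := by
    intro t ht
    have hterm : ∀ j ∈ Finset.range n, HasDerivWithinAt
        (fun u => iteratedDerivWithin j f s u *
          ∑ i ∈ Finset.range (n - j), c (i + j + 1) * iteratedDeriv i ω (x - u))
        (iteratedDerivWithin (j + 1) f s t *
            (∑ i ∈ Finset.range (n - j), c (i + j + 1) * iteratedDeriv i ω (x - t))
          - iteratedDerivWithin j f s t *
            (∑ i ∈ Finset.range (n - j), c (i + j + 1) * iteratedDeriv (i + 1) ω (x - t)))
        s t := by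
      intro j hj
      rw [Finset.mem_range] at hj
      have hinner : HasDerivAt (fun u : ℝ => x - u) (-1 : ℝ) t := by
        simpa using (hasDerivAt_id t).const_sub x
      have hψ : HasDerivAt (fun u : ℝ =>
            ∑ i ∈ Finset.range (n - j), c (i + j + 1) * iteratedDeriv i ω (x - u))
          (-(∑ i ∈ Finset.range (n - j), c (i + j + 1) * iteratedDeriv (i + 1) ω (x - t))) t := by
      -- each summand
        have hterm2 : ∀ i ∈ Finset.range (n - j),
            HasDerivAt (fun u : ℝ => c (i + j + 1) * iteratedDeriv i ω (x - u))
              (c (i + j + 1) * ((-1 : ℝ) • iteratedDeriv (i + 1) ω (x - t))) t := by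
          intro i hi
          rw [Finset.mem_range] at hi
          have := HasDerivAt.scomp (g₁ := iteratedDeriv i ω)
            t (hωd i (by omega) (x - t)) hinner
          exact this.const_mul _
        have hsum := HasDerivAt.fun_sum hterm2
        convert hsum using 1
        · rfl
        rw [← Finset.sum_neg_distrib]
        refine Finset.sum_congr rfl fun i _ => ?_
        simp
      have := (hfd j hj t ht).fun_mul hψ.hasDerivWithinAt
      convert this using 1
      ring
    have hsum := HasDerivWithinAt.fun_sum hterm
    have halg : G t = ∑ j ∈ Finset.range n,
        (iteratedDerivWithin (j + 1) f s t *
            (∑ i ∈ Finset.range (n - j), c (i + j + 1) * iteratedDeriv i ω (x - t))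
          - iteratedDerivWithin j f s t *
            (∑ i ∈ Finset.range (n - j), c (i + j + 1) * iteratedDeriv (i + 1) ω (x - t))) := by
      rw [alg7 n hn c hc (fun i => iteratedDeriv i ω (x - t))
        (fun j => iteratedDerivWithin j f s t) (hωD (x - t))]
      simp only [hG_def, iteratedDeriv_zero]
    rw [halg]
    exact hsum
  -- continuity of F and G on s
  have hFc : ContinuousOn F s := fun t ht => (hFd t ht).continuousWithinAt
  have hGc : ContinuousOn G s := by
    have h1 : ContinuousOn
        (fun t => ∑ i ∈ Finset.range (n + 1), c i * iteratedDerivWithin i f s t) s := by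
      apply continuousOn_finset_sum
      intro i hi
      rw [Finset.mem_range] at hi
      exact continuousOn_const.mul
        (hf.continuousOn_iteratedDerivWithin (by exact_mod_cast Nat.lt_succ_iff.mp hi) hs)
    exact h1.mul (hω.continuous.comp (continuous_const.sub continuous_id)).continuousOn
  have huIcc : Set.uIcc y x ⊆ s := Set.uIcc_subset_Icc hy hx
  -- FTC
  have hFTC : ∫ t in y..x, G t = F x - F y := by
    apply intervalIntegral.integral_eq_sub_of_hasDeriv_right (hFc.mono huIcc)
    · intro t ht
      have htpq : t ∈ Set.Ioo p q := by
        constructor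
        · exact lt_of_le_of_lt (le_min hy.1 hx.1) ht.1
        · exact lt_of_lt_of_le ht.2 (max_le hy.2 hx.2)
      have hmem : s ∈ nhds t := Icc_mem_nhds htpq.1 htpq.2
      exact ((hFd t (Set.Ioo_subset_Icc_self htpq)).hasDerivAt hmem).hasDerivWithinAt
    · exact (hGc.mono huIcc).intervalIntegrable
  -- F x = f x
  have hFx : F x = f x := by
    rw [hF_def]
    simp only [sub_self]
    rw [show (n : ℕ) = (n - 1) + 1 from by omega, Finset.sum_range_succ']
    have hzero : ∀ j ∈ Finset.range (n - 1), iteratedDerivWithin (j + 1) f s x *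
        ∑ i ∈ Finset.range (n - 1 + 1 - (j + 1)), c (i + (j + 1) + 1) * iteratedDeriv i ω 0 = 0 := by
      intro j hj
      rw [Finset.mem_range] at hj
      have : ∀ i ∈ Finset.range (n - 1 + 1 - (j + 1)),
          c (i + (j + 1) + 1) * iteratedDeriv i ω 0 = 0 := by
        intro i hi
        rw [Finset.mem_range] at hi
        rw [hω0 i (by omega), if_neg (by omega)]
        ring
      rw [Finset.sum_congr rfl this]
      simp
    rw [Finset.sum_congr rfl hzero]
    simp only [Finset.sum_const, smul_zero, zero_add]
    rw [show n - 1 + 1 - 0 = n from by omega]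
    have : ∑ i ∈ Finset.range n, c (i + 0 + 1) * iteratedDeriv i ω 0 = 1 := by
      have h1 : ∀ i ∈ Finset.range n, c (i + 0 + 1) * iteratedDeriv i ω 0
          = if i = n - 1 then 1 else 0 := by
        intro i hi
        rw [Finset.mem_range] at hi
        rw [hω0 i hi]
        by_cases h : i = n - 1
        · rw [if_pos h, h, show n - 1 + 0 + 1 = n from by omega, hc, mul_one]
        · rw [if_neg h, mul_zero]
      rw [Finset.sum_congr rfl h1, Finset.sum_ite_eq' (Finset.range n) (n-1)]
      rw [if_pos (Finset.mem_range.mpr (by omega))]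
    rw [this, mul_one, iteratedDerivWithin_zero]
  rw [← hFx, hFTC]
  ring
end

section
/- Let n ∈ ℕ, k ∈ ℕ₀ with k < n and γ ∈ 𝕂. Then for every n-times continuously differentiable function f : [a,b] → 𝕂 and all x, a ∈ [a,b], one has f(x) = Σ_{j=0}^{k−1} f^{(j)}(a) (x−a)^j / j! + Σ_{j=k}^{n−1} f^{(j)}(a) ζ_{n,k,γ}^{(n−j)}(x−a) + ∫_a^x ( f^{(n)}(t) − γ f^{(k)}(t) ) · ζ′_{n,k,γ}(x−t) dt. -/
/-- The function `ζ_{n,k,γ}(t) = Σ_{i=0}^∞ γ^i t^{i(n−k)+n}/(i(n−k)+n)!`. -/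
noncomputable def zeta (𝕂 : Type*) [RCLike 𝕂] (n k : ℕ) (γ : 𝕂) (t : ℝ) : 𝕂 :=
  ∑' i : ℕ, γ ^ i * (t : 𝕂) ^ (i * (n - k) + n) / (Nat.factorial (i * (n - k) + n) : 𝕂)

open Set Finset

/-- Auxiliary family of functions: `Zf d γ r` is the `(n-r)`-th derivative of `ζ`. -/
noncomputable def Zf (𝕂 : Type*) [RCLike 𝕂] (d : ℕ) (γ : 𝕂) (r : ℕ) (t : ℝ) : 𝕂 :=
  ∑' i : ℕ, γ ^ i * (t : 𝕂) ^ (i * d + r) / (Nat.factorial (i * d + r) : 𝕂)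

section Aux
variable {𝕂 : Type*} [RCLike 𝕂]

lemma summable_real_aux (d r : ℕ) (hd : 1 ≤ d) (C R : ℝ) (hC : 0 ≤ C) (hR : 0 ≤ R) :
    Summable (fun i : ℕ => C ^ i * R ^ (i * d + r) / (Nat.factorial (i * d + r) : ℝ)) := by
  set M : ℝ := max 1 (max C R) with hM
  have hM1 : (1:ℝ) ≤ M := le_max_left _ _
  have hMC : C ≤ M := le_trans (le_max_left _ _) (le_max_right _ _)
  have hMR : R ≤ M := le_trans (le_max_right _ _) (le_max_right _ _)
  have hM0 : (0:ℝ) ≤ M := le_trans zero_le_one hM1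
  have key : Summable (fun m : ℕ => (M ^ 2) ^ m / (Nat.factorial m : ℝ)) :=
    Real.summable_pow_div_factorial _
  have hinj : Function.Injective (fun i : ℕ => i * d + r) := by
    intro a b h
    simp only at h
    have : a * d = b * d := by omega
    exact Nat.eq_of_mul_eq_mul_right hd this
  have key2 := key.comp_injective hinj
  apply Summable.of_nonneg_of_le _ _ key2
  · intro i; positivity
  · intro i
    simp only [Function.comp]
    have h1 : C ^ i * R ^ (i * d + r) ≤ (M ^ 2) ^ (i * d + r) := by
      have e1 : C ^ i ≤ M ^ i := pow_le_pow_left₀ hC hMC i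
      have e2 : R ^ (i * d + r) ≤ M ^ (i * d + r) := pow_le_pow_left₀ hR hMR _
      calc C ^ i * R ^ (i * d + r) ≤ M ^ i * M ^ (i * d + r) := by
            apply mul_le_mul e1 e2 (by positivity) (by positivity)
        _ = M ^ (i + (i * d + r)) := by rw [← pow_add]
        _ ≤ M ^ (2 * (i * d + r)) := by
            apply pow_le_pow_right₀ hM1
            have : i ≤ i * d := Nat.le_mul_of_pos_right i (by omega)
            omega
        _ = (M ^ 2) ^ (i * d + r) := by rw [← pow_mul]
    gcongr

lemma summable_K (d r : ℕ) (hd : 1 ≤ d) (γ : 𝕂) (t : ℝ) :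
    Summable (fun i : ℕ => γ ^ i * (t : 𝕂) ^ (i * d + r) / (Nat.factorial (i * d + r) : 𝕂)) := by
  apply Summable.of_norm
  have heq : (fun i : ℕ => ‖γ ^ i * (t : 𝕂) ^ (i * d + r) / (Nat.factorial (i * d + r) : 𝕂)‖)
      = fun i : ℕ => ‖γ‖ ^ i * |t| ^ (i * d + r) / (Nat.factorial (i * d + r) : ℝ) := by
    funext i
    rw [norm_div, norm_mul, norm_pow, norm_pow, RCLike.norm_ofReal, RCLike.norm_natCast]
  rw [heq]
  exact summable_real_aux d r hd ‖γ‖ |t| (norm_nonneg _) (abs_nonneg _)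

lemma Zf_split (d r : ℕ) (hd : 1 ≤ d) (γ : 𝕂) (s : ℝ) :
    Zf 𝕂 d γ r s = (s : 𝕂) ^ r / (Nat.factorial r : 𝕂) + γ * Zf 𝕂 d γ (r + d) s := by
  rw [Zf, Summable.tsum_eq_zero_add (summable_K d r hd γ s)]
  congr 1
  · simp
  · rw [Zf, ← tsum_mul_left]
    congr 1
    funext i
    have he : (i + 1) * d + r = i * d + (r + d) := by ring
    rw [he, pow_succ]
    ring

lemma hasDerivAt_Zf_succ (d r : ℕ) (hd : 1 ≤ d) (γ : 𝕂) (t : ℝ) :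
    HasDerivAt (Zf 𝕂 d γ (r + 1)) (Zf 𝕂 d γ r t) t := by
  set R : ℝ := |t| + 1 with hR
  have hR0 : (0:ℝ) < R := by positivity
  have htball : t ∈ Metric.ball (0:ℝ) R := by
    simp only [Metric.mem_ball, dist_zero_right, Real.norm_eq_abs, hR]
    linarith
  have main := hasDerivAt_tsum_of_isPreconnected
    (u := fun i : ℕ => ‖γ‖ ^ i * R ^ (i * d + r) / (Nat.factorial (i * d + r) : ℝ))
    (g := fun (i : ℕ) (z : ℝ) => γ ^ i * (z : 𝕂) ^ (i * d + (r+1)) / (Nat.factorial (i * d + (r+1)) : 𝕂))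
    (g' := fun (i : ℕ) (z : ℝ) => γ ^ i * (z : 𝕂) ^ (i * d + r) / (Nat.factorial (i * d + r) : 𝕂))
    (summable_real_aux d r hd ‖γ‖ R (norm_nonneg _) (le_of_lt hR0))
    Metric.isOpen_ball (convex_ball (0:ℝ) R).isPreconnected
    ?_ ?_ htball (summable_K d (r+1) hd γ t) htball
  · exact main
  · -- HasDerivAt for each term
    intro i z hz
    set m : ℕ := i * d + r with hm
    have hre : HasDerivAt (fun w : ℝ => w ^ (m+1) / (Nat.factorial (m+1) : ℝ))
        (z ^ m / (Nat.factorial m : ℝ)) z := by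
      have hp := (hasDerivAt_pow (m+1) z).div_const (Nat.factorial (m+1) : ℝ)
      refine hp.congr_deriv ?_
      have : (0:ℝ) < (Nat.factorial m : ℝ) := by positivity
      rw [Nat.factorial_succ, Nat.add_sub_cancel]
      push_cast
      field_simp
    have hK := (RCLike.ofRealCLM (K := 𝕂)).hasFDerivAt.comp_hasDerivAt z hre
    have hK2 := hK.const_mul (γ ^ i)
    convert hK2 using 1
    · rfl
    · funext w
      simp only [Function.comp, RCLike.ofRealCLM_apply]
      push_cast
      simp only [hm]
      ring
    · simp only [RCLike.ofRealCLM_apply]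
      push_cast
      ring
  · -- bounds
    intro i z hz
    simp only [Metric.mem_ball, dist_zero_right, Real.norm_eq_abs] at hz
    rw [norm_div, norm_mul, norm_pow, norm_pow, RCLike.norm_ofReal, RCLike.norm_natCast]
    have hz' : |z| ≤ R := hz.le
    have h1 : |z| ^ (i * d + r) ≤ R ^ (i * d + r) := pow_le_pow_left₀ (abs_nonneg z) hz' _
    have h2 : ‖γ‖ ^ i * |z| ^ (i * d + r) ≤ ‖γ‖ ^ i * R ^ (i * d + r) :=
      mul_le_mul_of_nonneg_left h1 (pow_nonneg (norm_nonneg γ) i)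
    have hfac : (0:ℝ) < (Nat.factorial (i * d + r) : ℝ) := by positivity
    exact div_le_div_of_nonneg_right h2 hfac.le

lemma hasDerivAt_Zf_zero (d : ℕ) (hd : 1 ≤ d) (γ : 𝕂) (t : ℝ) :
    HasDerivAt (Zf 𝕂 d γ 0) (γ * Zf 𝕂 d γ (d - 1) t) t := by
  have heq : Zf 𝕂 d γ 0 = fun s : ℝ => 1 + γ * Zf 𝕂 d γ (0 + d) s := by
    funext s
    rw [Zf_split d 0 hd γ s]
    norm_num
  rw [heq]
  have hd' : d - 1 + 1 = d := by omega
  have h := ((hasDerivAt_Zf_succ d (d - 1) hd γ t).const_mul γ).const_add 1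
  rw [hd'] at h
  simpa [zero_add] using h

lemma continuous_Zf (d r : ℕ) (hd : 1 ≤ d) (γ : 𝕂) : Continuous (Zf 𝕂 d γ r) := by
  rw [continuous_iff_continuousAt]
  intro t
  cases r with
  | zero => exact (hasDerivAt_Zf_zero d hd γ t).continuousAt
  | succ m => exact (hasDerivAt_Zf_succ d m hd γ t).continuousAt

lemma Zf_succ_zero (d r : ℕ) (γ : 𝕂) : Zf 𝕂 d γ (r + 1) 0 = 0 := by
  have : (fun i : ℕ => γ ^ i * ((0:ℝ) : 𝕂) ^ (i * d + (r + 1)) /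
      (Nat.factorial (i * d + (r + 1)) : 𝕂)) = fun _ => (0 : 𝕂) := by
    funext i
    rw [show ((0:ℝ) : 𝕂) = (0 : 𝕂) by norm_num, zero_pow (by omega : i * d + (r + 1) ≠ 0)]
    simp
  rw [Zf, this, tsum_zero]

lemma Zf_zero_zero (d : ℕ) (hd : 1 ≤ d) (γ : 𝕂) : Zf 𝕂 d γ 0 0 = 1 := by
  rw [Zf_split d 0 hd γ 0]
  have hd' : 0 + d = (d - 1) + 1 := by omega
  rw [hd', Zf_succ_zero]
  norm_num

lemma iteratedDeriv_Zf (d : ℕ) (hd : 1 ≤ d) (γ : 𝕂) (n : ℕ) :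
    ∀ m, m ≤ n → iteratedDeriv m (Zf 𝕂 d γ n) = Zf 𝕂 d γ (n - m) := by
  intro m
  induction m with
  | zero => intro _; simp [iteratedDeriv_zero]
  | succ m ih =>
    intro hm
    rw [iteratedDeriv_succ, ih (by omega)]
    funext t
    have h1 : n - m = (n - (m + 1)) + 1 := by omega
    rw [h1]
    exact (hasDerivAt_Zf_succ d _ hd γ t).deriv

lemma hasDerivAt_polyterm (𝕂 : Type*) [RCLike 𝕂] (x t : ℝ) (m : ℕ) :
    HasDerivAt (fun u : ℝ => ((x - u : ℝ) : 𝕂) ^ (m + 1) / (Nat.factorial (m + 1) : 𝕂))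
      (-(((x - t : ℝ) : 𝕂) ^ m / (Nat.factorial m : 𝕂))) t := by
  have hin : HasDerivAt (fun u : ℝ => x - u) (-1 : ℝ) t := (hasDerivAt_id t).const_sub x
  have hre : HasDerivAt (fun u : ℝ => (x - u) ^ (m + 1) / (Nat.factorial (m + 1) : ℝ))
      (-((x - t) ^ m / (Nat.factorial m : ℝ))) t := by
    have hp := ((hasDerivAt_pow (m + 1) (x - t)).comp t hin).div_const
      (Nat.factorial (m + 1) : ℝ)
    refine hp.congr_deriv ?_
    have h0 : (0:ℝ) < (Nat.factorial m : ℝ) := by positivity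
    rw [Nat.factorial_succ, Nat.add_sub_cancel]
    push_cast
    field_simp
  have hK := (RCLike.ofRealCLM (K := 𝕂)).hasFDerivAt.comp_hasDerivAt t hre
  convert hK using 1
  · rfl
  · funext u
    simp only [Function.comp_apply, RCLike.ofRealCLM_apply]
    push_cast
    ring
  · simp only [RCLike.ofRealCLM_apply]
    push_cast
    ring

/-- The auxiliary function `g`. -/
noncomputable def gaux (𝕂 : Type*) [RCLike 𝕂] (d k n : ℕ) (γ : 𝕂) (f : ℝ → 𝕂)
    (p q x t : ℝ) : 𝕂 :=
  (∑ j ∈ Finset.range k, iteratedDerivWithin j f (Set.Icc p q) t *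
      (((x - t : ℝ) : 𝕂) ^ j / (Nat.factorial j : 𝕂)))
  + ∑ j ∈ Finset.Ico k n, iteratedDerivWithin j f (Set.Icc p q) t * Zf 𝕂 d γ j (x - t)

lemma gaux_x (n k : ℕ) (hk : k < n) (γ : 𝕂) (p q x : ℝ) (f : ℝ → 𝕂) :
    gaux 𝕂 (n - k) k n γ f p q x x = f x := by
  have hd1 : 1 ≤ n - k := by omega
  rw [gaux]
  have hxx : x - x = 0 := sub_self x
  cases k with
  | zero =>
    rw [Finset.range_zero, Finset.sum_empty, zero_add]
    have h0n : (0 : ℕ) ∈ Finset.Ico 0 n := by simp [Finset.mem_Ico]; omega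
    rw [Finset.sum_eq_single_of_mem 0 h0n ?h0]
    · rw [hxx]
      rw [Zf_zero_zero _ hd1, iteratedDerivWithin_zero, mul_one]
    case h0 =>
      intro j _ hj
      obtain ⟨m, rfl⟩ := Nat.exists_eq_succ_of_ne_zero hj
      rw [hxx, Zf_succ_zero, mul_zero]
  | succ m =>
    have h2 : ∑ j ∈ Finset.Ico (m + 1) n, iteratedDerivWithin j f (Set.Icc p q) x *
        Zf 𝕂 (n - (m+1)) γ j (x - x) = 0 := by
      apply Finset.sum_eq_zero
      intro j hj
      rw [Finset.mem_Ico] at hj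
      obtain ⟨l, rfl⟩ := Nat.exists_eq_succ_of_ne_zero (by omega : j ≠ 0)
      rw [hxx, Zf_succ_zero, mul_zero]
    rw [h2, add_zero]
    have h0m : (0 : ℕ) ∈ Finset.range (m + 1) := by simp
    rw [Finset.sum_eq_single_of_mem 0 h0m ?h1]
    · rw [hxx, iteratedDerivWithin_zero]
      norm_num
    case h1 =>
      intro j _ hj
      rw [hxx]
      rw [show ((0:ℝ):𝕂) = 0 by norm_num, zero_pow hj]
      simp

lemma gaux_hasDeriv (n k : ℕ) (hk : k < n) (γ : 𝕂) (p q : ℝ) (hpq : p < q)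
    (f : ℝ → 𝕂) (hf : ContDiffOn ℝ n f (Set.Icc p q)) (x : ℝ)
    (t : ℝ) (ht : t ∈ Set.Icc p q) :
    HasDerivWithinAt (gaux 𝕂 (n - k) k n γ f p q x)
      ((iteratedDerivWithin n f (Set.Icc p q) t - γ * iteratedDerivWithin k f (Set.Icc p q) t)
        * Zf 𝕂 (n - k) γ (n - 1) (x - t)) (Set.Icc p q) t := by
  have hq : UniqueDiffOn ℝ (Set.Icc p q) := uniqueDiffOn_Icc hpq
  set d := n - k with hdd
  have hd1 : 1 ≤ d := by omega
  set F : ℕ → ℝ → 𝕂 := fun j => iteratedDerivWithin j f (Set.Icc p q) with hFdef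
  have hF' : ∀ j, j < n → HasDerivWithinAt (F j) (F (j + 1) t) (Set.Icc p q) t := by
    intro j hj
    have hdiff : DifferentiableWithinAt ℝ (F j) (Set.Icc p q) t :=
      hf.differentiableOn_iteratedDerivWithin (by exact_mod_cast hj) hq t ht
    have h := hdiff.hasDerivWithinAt
    rwa [hFdef, ← iteratedDerivWithin_succ] at h
  have hin : HasDerivAt (fun u : ℝ => x - u) (-1 : ℝ) t := (hasDerivAt_id t).const_sub x
  -- telescoping targets
  set w : ℕ → 𝕂 := fun j => if j = 0 then 0 else
    F j t * (((x - t : ℝ) : 𝕂) ^ (j - 1) / (Nat.factorial (j - 1) : 𝕂)) with hwdef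
  set W : ℕ → 𝕂 := fun j => if j = 0 then γ * (F 0 t * Zf 𝕂 d γ (n - 1) (x - t)) else
    F j t * Zf 𝕂 d γ (j - 1) (x - t) with hWdef
  have hterm1 : ∀ j ∈ Finset.range k,
      HasDerivWithinAt (fun u => F j u * (((x - u : ℝ) : 𝕂) ^ j / (Nat.factorial j : 𝕂)))
        (w (j + 1) - w j) (Set.Icc p q) t := by
    intro j hj
    rw [Finset.mem_range] at hj
    cases j with
    | zero =>
      have hc : HasDerivAt (fun u : ℝ => ((x - u : ℝ) : 𝕂) ^ 0 / (Nat.factorial 0 : 𝕂))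
          (0 : 𝕂) t := by
        simp only [pow_zero, Nat.factorial_zero, Nat.cast_one, div_one]
        exact hasDerivAt_const t 1
      have h := (hF' 0 (by omega)).mul hc.hasDerivWithinAt
      convert h using 1
      · rfl
      simp [hwdef]
    | succ m =>
      have hc := hasDerivAt_polyterm 𝕂 x t m
      have h := (hF' (m + 1) (by omega)).mul hc.hasDerivWithinAt
      convert h using 1
      · rfl
      simp only [hwdef, Nat.succ_ne_zero, if_false, Nat.add_sub_cancel]
      ring
  have hterm2 : ∀ j ∈ Finset.Ico k n,
      HasDerivWithinAt (fun u => F j u * Zf 𝕂 d γ j (x - u))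
        (W (j + 1) - W j) (Set.Icc p q) t := by
    intro j hj
    rw [Finset.mem_Ico] at hj
    cases j with
    | zero =>
      have hk0 : k = 0 := by omega
      have hdn : d - 1 = n - 1 := by omega
      have hz := HasDerivAt.scomp t (hasDerivAt_Zf_zero d hd1 γ (x - t)) hin
      rw [hdn] at hz
      have h := (hF' 0 (by omega)).mul hz.hasDerivWithinAt
      convert h using 1
      · rfl
      simp [hWdef, neg_one_smul]
      ring
    | succ m =>
      have hz := HasDerivAt.scomp t (hasDerivAt_Zf_succ d m hd1 γ (x - t)) hin
      have h := (hF' (m + 1) (by omega)).mul hz.hasDerivWithinAt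
      convert h using 1
      · rfl
      simp [hWdef, neg_one_smul]
      ring
  have hsum1 := HasDerivWithinAt.fun_sum hterm1
  have hsum2 := HasDerivWithinAt.fun_sum hterm2
  have htot := hsum1.add hsum2
  rw [Finset.sum_range_sub w k] at htot
  have hIco : ∑ j ∈ Finset.Ico k n, (W (j + 1) - W j) = W n - W k := by
    rw [Finset.sum_Ico_eq_sub _ (le_of_lt hk), Finset.sum_range_sub W n,
      Finset.sum_range_sub W k]
    ring
  rw [hIco] at htot
  have hWn : W n = F n t * Zf 𝕂 d γ (n - 1) (x - t) := by
    rw [hWdef]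
    simp only [if_neg (by omega : n ≠ 0)]
  have hval : w k - w 0 + (W n - W k)
      = (F n t - γ * F k t) * Zf 𝕂 d γ (n - 1) (x - t) := by
    rw [hWn]
    cases k with
    | zero =>
      simp [hwdef, hWdef]
      ring
    | succ m =>
      have hsplit := Zf_split d m hd1 γ (x - t)
      have hmd : m + d = n - 1 := by omega
      rw [hmd] at hsplit
      simp [hwdef, hWdef, hsplit]
      ring
  rw [hval] at htot
  exact htot

end Aux

/-- Taylor-type formula: for `k < n`, `γ ∈ 𝕂`, every `f ∈ C^n([p,q],𝕂)`
and `x, y ∈ [p,q]`,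
`f(x) = Σ_{j<k} f⁽ʲ⁾(y)(x−y)^j/j! + Σ_{j=k}^{n−1} f⁽ʲ⁾(y) ζ_{n,k,γ}^{(n−j)}(x−y)
  + ∫_y^x (f⁽ⁿ⁾(t) − γ f⁽ᵏ⁾(t)) ζ′_{n,k,γ}(x−t) dt`. -/
theorem stmt_9 {𝕂 : Type*} [RCLike 𝕂] (n k : ℕ) (hk : k < n) (γ : 𝕂)
    (p q : ℝ) (hpq : p < q)
    (f : ℝ → 𝕂) (hf : ContDiffOn ℝ n f (Set.Icc p q))
    (x y : ℝ) (hx : x ∈ Set.Icc p q) (hy : y ∈ Set.Icc p q) :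
    f x = (∑ j ∈ Finset.range k, iteratedDerivWithin j f (Set.Icc p q) y *
          ((x - y : ℝ) : 𝕂) ^ j / (Nat.factorial j : 𝕂))
        + (∑ j ∈ Finset.Ico k n, iteratedDerivWithin j f (Set.Icc p q) y *
          iteratedDeriv (n - j) (zeta 𝕂 n k γ) (x - y))
        + ∫ t in y..x,
            (iteratedDerivWithin n f (Set.Icc p q) t
              - γ * iteratedDerivWithin k f (Set.Icc p q) t)
            * deriv (zeta 𝕂 n k γ) (x - t) := by
  have hq : UniqueDiffOn ℝ (Set.Icc p q) := uniqueDiffOn_Icc hpq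
  have hd1 : 1 ≤ n - k := by omega
  have hzeta : zeta 𝕂 n k γ = Zf 𝕂 (n - k) γ n := rfl
  have hderiv_zeta : deriv (zeta 𝕂 n k γ) = Zf 𝕂 (n - k) γ (n - 1) := by
    funext t
    have e : n - 1 + 1 = n := by omega
    have h := hasDerivAt_Zf_succ (n - k) (n - 1) hd1 γ t
    rw [e] at h
    rw [hzeta]
    exact h.deriv
  have hiter : ∀ j ∈ Finset.Ico k n,
      iteratedDeriv (n - j) (zeta 𝕂 n k γ) = Zf 𝕂 (n - k) γ j := by
    intro j hj
    rw [Finset.mem_Ico] at hj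
    have e : n - (n - j) = j := by omega
    rw [hzeta, iteratedDeriv_Zf (n - k) hd1 γ n (n - j) (by omega), e]
  -- rewrite the two sums
  have hA : (∑ j ∈ Finset.range k, iteratedDerivWithin j f (Set.Icc p q) y *
        ((x - y : ℝ) : 𝕂) ^ j / (Nat.factorial j : 𝕂))
      = ∑ j ∈ Finset.range k, iteratedDerivWithin j f (Set.Icc p q) y *
        (((x - y : ℝ) : 𝕂) ^ j / (Nat.factorial j : 𝕂)) :=
    Finset.sum_congr rfl fun j _ => by rw [mul_div_assoc]
  have hB : (∑ j ∈ Finset.Ico k n, iteratedDerivWithin j f (Set.Icc p q) y *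
        iteratedDeriv (n - j) (zeta 𝕂 n k γ) (x - y))
      = ∑ j ∈ Finset.Ico k n, iteratedDerivWithin j f (Set.Icc p q) y *
        Zf 𝕂 (n - k) γ j (x - y) :=
    Finset.sum_congr rfl fun j hj => by rw [hiter j hj]
  rw [hA, hB, hderiv_zeta]
  -- FTC
  have hsub : Set.uIcc y x ⊆ Set.Icc p q := Set.uIcc_subset_Icc hy hx
  have hcontF : ∀ j : ℕ, (j : WithTop ℕ∞) ≤ (n : WithTop ℕ∞) →
      ContinuousOn (iteratedDerivWithin j f (Set.Icc p q)) (Set.Icc p q) := fun j hj =>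
    hf.continuousOn_iteratedDerivWithin hj hq
  have hGcont : ContinuousOn (fun t =>
      (iteratedDerivWithin n f (Set.Icc p q) t - γ * iteratedDerivWithin k f (Set.Icc p q) t)
        * Zf 𝕂 (n - k) γ (n - 1) (x - t)) (Set.uIcc y x) := by
    apply ContinuousOn.mul
    · exact ((hcontF n le_rfl).mono hsub).sub
        (continuousOn_const.mul (((hcontF k (by exact_mod_cast hk.le)).mono hsub)))
    · exact ((continuous_Zf (n - k) (n - 1) hd1 γ).comp
        (continuous_const.sub continuous_id)).continuousOn
  have hFTC : (∫ t in y..x,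
      (iteratedDerivWithin n f (Set.Icc p q) t - γ * iteratedDerivWithin k f (Set.Icc p q) t)
        * Zf 𝕂 (n - k) γ (n - 1) (x - t))
      = gaux 𝕂 (n - k) k n γ f p q x x - gaux 𝕂 (n - k) k n γ f p q x y := by
    refine intervalIntegral.integral_eq_sub_of_hasDeriv_right
      (f := gaux 𝕂 (n - k) k n γ f p q x) ?_ ?_ ?_
    · intro t ht
      exact ((gaux_hasDeriv n k hk γ p q hpq f hf x t (hsub ht)).continuousWithinAt).mono hsub
    · intro t ht
      have h1 : p ≤ y ⊓ x := le_min hy.1 hx.1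
      have h2 : y ⊔ x ≤ q := max_le hy.2 hx.2
      have htpq : t ∈ Set.Ioo p q := ⟨lt_of_le_of_lt h1 ht.1, lt_of_lt_of_le ht.2 h2⟩
      have hdv := gaux_hasDeriv n k hk γ p q hpq f hf x t (Set.mem_Icc_of_Ioo htpq)
      exact (hdv.hasDerivAt (Icc_mem_nhds htpq.1 htpq.2)).hasDerivWithinAt
    · exact hGcont.intervalIntegrable
  rw [hFTC, gaux_x n k hk γ p q x f]
  have hgy : gaux 𝕂 (n - k) k n γ f p q x y
      = (∑ j ∈ Finset.range k, iteratedDerivWithin j f (Set.Icc p q) y *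
          (((x - y : ℝ) : 𝕂) ^ j / (Nat.factorial j : 𝕂)))
      + ∑ j ∈ Finset.Ico k n, iteratedDerivWithin j f (Set.Icc p q) y *
          Zf 𝕂 (n - k) γ j (x - y) := rfl
  rw [← hgy]
  ring
end

section
/- Let n ∈ ℕ, c = (c₀,…,cₙ) ∈ ℝ^{n+1} with cₙ = 1, and let ω_c : ℝ → ℝ be the characteristic solution of D_c(ω) = 0. Let f : [a,b] → ℝ be n-times continuously differentiable and let a, x ∈ [a,b] be such that ω_c has no zero strictly between 0 and x−a (i.e., ρ⁻(ω_c) ≤ x−a ≤ ρ⁺(ω_c)). Then there exists a point ξ between a and x such that f(x) = Σ_{j=0}^{n−1} ( f^{(j)}(a) · Σ_{i=0}^{n−1−j} c_{i+j+1} ω_c^{(i)}(x−a) ) + D_c(f)(ξ) · ∫_0^{x−a} ω_c(t) dt. -/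
lemma aux_alg (n : ℕ) (c A B : ℕ → ℝ) :
    ∑ j ∈ Finset.range n, (A (j+1) * ∑ i ∈ Finset.range (n-j), c (i+j+1) * B i
      - A j * ∑ i ∈ Finset.range (n-j), c (i+j+1) * B (i+1))
    = (∑ k ∈ Finset.range n, c (k+1) * A (k+1)) * B 0
      - A 0 * ∑ k ∈ Finset.range n, c (k+1) * B (k+1) := by
  induction n with
  | zero => simp
  | succ n ih =>
    have hsplit : ∀ j ∈ Finset.range n,
        (A (j+1) * ∑ i ∈ Finset.range (n+1-j), c (i+j+1) * B i
          - A j * ∑ i ∈ Finset.range (n+1-j), c (i+j+1) * B (i+1))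
        = (A (j+1) * ∑ i ∈ Finset.range (n-j), c (i+j+1) * B i
          - A j * ∑ i ∈ Finset.range (n-j), c (i+j+1) * B (i+1))
          + c (n+1) * (A (j+1) * B (n-j) - A j * B (n-j+1)) := by
      intro j hj
      rw [Finset.mem_range] at hj
      have h1 : n + 1 - j = (n - j) + 1 := by omega
      have h2 : n - j + j + 1 = n + 1 := by omega
      rw [h1, Finset.sum_range_succ, Finset.sum_range_succ, h2]
      ring
    rw [Finset.sum_range_succ, Finset.sum_congr rfl hsplit, Finset.sum_add_distrib,
      ← Finset.mul_sum, ih]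
    have htel : ∑ j ∈ Finset.range n, (A (j+1) * B (n-j) - A j * B (n-j+1))
        = A n * B 1 - A 0 * B (n+1) := by
      have hcongr : ∀ j ∈ Finset.range n,
          (A (j+1) * B (n-j) - A j * B (n-j+1))
          = A (j+1) * B (n+1-(j+1)) - A j * B (n+1-j) := by
        intro j hj; rw [Finset.mem_range] at hj
        have e1 : n + 1 - (j+1) = n - j := by omega
        have e2 : n + 1 - j = n - j + 1 := by omega
        rw [e1, e2]
      rw [Finset.sum_congr rfl hcongr,
        Finset.sum_range_sub (fun j => A j * B (n+1-j)) n]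
      norm_num
    rw [htel, Finset.sum_range_succ (f := fun k => c (k+1) * A (k+1)),
      Finset.sum_range_succ (f := fun k => c (k+1) * B (k+1))]
    have e3 : n + 1 - n = 1 := by omega
    rw [e3]
    simp only [Nat.sub_zero, Finset.sum_range_one, Nat.zero_add]
    ring

lemma aux_final (R I D w : ℝ) (hw : w ≠ 0) (h : (R - I * D) * w = 0) :
    R = I * D := by
  rcases mul_eq_zero.mp h with h6 | h6
  · linarith
  · exact absurd h6 hw

/-- Mean value form of the generalized Taylor theorem: with
`D_c(f) = cₙ f⁽ⁿ⁾ + ⋯ + c₀ f` (`cₙ = 1`) and `ω_c` the characteristic solution of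
`D_c ω = 0`, if `f ∈ C^n([p,q],ℝ)`, `x, y ∈ [p,q]` and `ω_c` has no zero strictly
between `0` and `x−y`, then there is `ξ` between `y` and `x` with
`f(x) = Σ_{j<n} f⁽ʲ⁾(y) Σ_{i<n−j} c_{i+j+1} ω_c⁽ⁱ⁾(x−y) + D_c(f)(ξ)·∫_0^{x−y} ω_c(t) dt`. -/
theorem stmt_10 (n : ℕ) (hn : 0 < n)
    (c : ℕ → ℝ) (hc : c n = 1)
    (ω : ℝ → ℝ) (hω : ContDiff ℝ n ω)
    (hωD : ∀ t : ℝ, ∑ i ∈ Finset.range (n + 1), c i * iteratedDeriv i ω t = 0)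
    (hω0 : ∀ i < n, iteratedDeriv i ω 0 = if i = n - 1 then 1 else 0)
    (p q : ℝ) (hpq : p < q)
    (f : ℝ → ℝ) (hf : ContDiffOn ℝ n f (Set.Icc p q))
    (x y : ℝ) (hx : x ∈ Set.Icc p q) (hy : y ∈ Set.Icc p q)
    (hroot : ∀ t ∈ Set.Ioo (min (x - y) 0) (max (x - y) 0), ω t ≠ 0) :
    ∃ ξ ∈ Set.uIcc y x,
      f x = (∑ j ∈ Finset.range n, iteratedDerivWithin j f (Set.Icc p q) y *
            ∑ i ∈ Finset.range (n - j), c (i + j + 1) * iteratedDeriv i ω (x - y))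
          + (∑ i ∈ Finset.range (n + 1),
              c i * iteratedDerivWithin i f (Set.Icc p q) ξ)
            * ∫ t in (0 : ℝ)..(x - y), ω t := by
  have hs : UniqueDiffOn ℝ (Set.Icc p q) := uniqueDiffOn_Icc hpq
  -- derivatives of iterated derivatives of ω
  have hωd : ∀ i, i < n → ∀ u : ℝ,
      HasDerivAt (iteratedDeriv i ω) (iteratedDeriv (i+1) ω u) u := by
    intro i hi u
    have h1 : Differentiable ℝ (iteratedDeriv i ω) :=
      hω.differentiable_iteratedDeriv i (by exact_mod_cast hi)
    have h2 := (h1 u).hasDerivAt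
    rw [iteratedDeriv_succ]
    exact h2
  have hWd : ∀ j, ∀ u : ℝ, HasDerivAt
      (fun v => ∑ i ∈ Finset.range (n - j), c (i+j+1) * iteratedDeriv i ω v)
      (∑ i ∈ Finset.range (n - j), c (i+j+1) * iteratedDeriv (i+1) ω u) u := by
    intro j u
    apply HasDerivAt.fun_sum
    intro i hi
    rw [Finset.mem_range] at hi
    exact (hωd i (by omega) u).const_mul (c (i+j+1))
  have hWcont : ∀ j, Continuous
      (fun v => ∑ i ∈ Finset.range (n - j), c (i+j+1) * iteratedDeriv i ω v) :=
    fun j => Differentiable.continuous (fun u => (hWd j u).differentiableAt)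
  -- value of W at 0
  have hW0 : ∀ j < n, (∑ i ∈ Finset.range (n - j), c (i+j+1) * iteratedDeriv i ω 0)
      = if j = 0 then 1 else 0 := by
    intro j hj
    have hterm : ∀ i ∈ Finset.range (n - j), c (i+j+1) * iteratedDeriv i ω 0
        = if i = n - 1 then c (i+j+1) else 0 := by
      intro i hi; rw [Finset.mem_range] at hi
      rw [hω0 i (by omega)]
      split <;> simp
    rw [Finset.sum_congr rfl hterm,
      Finset.sum_ite_eq' (Finset.range (n-j)) (n-1) (fun i => c (i+j+1))]
    by_cases hj0 : j = 0
    · subst hj0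
      rw [if_pos (Finset.mem_range.mpr (by omega)), if_pos rfl]
      have e : n - 1 + 0 + 1 = n := by omega
      rw [e, hc]
    · rw [if_neg (by rw [Finset.mem_range]; omega), if_neg hj0]
  -- the sum at shift 0 equals f
  have hsum0 : ∀ t : ℝ, (∑ j ∈ Finset.range n, iteratedDerivWithin j f (Set.Icc p q) t *
      ∑ i ∈ Finset.range (n - j), c (i+j+1) * iteratedDeriv i ω 0) = f t := by
    intro t
    have hterm : ∀ j ∈ Finset.range n, (iteratedDerivWithin j f (Set.Icc p q) t *
        ∑ i ∈ Finset.range (n - j), c (i+j+1) * iteratedDeriv i ω 0)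
        = if j = 0 then iteratedDerivWithin j f (Set.Icc p q) t else 0 := by
      intro j hj; rw [Finset.mem_range] at hj
      rw [hW0 j hj]
      split <;> simp
    rw [Finset.sum_congr rfl hterm,
      Finset.sum_ite_eq' (Finset.range n) 0 (fun j => iteratedDerivWithin j f (Set.Icc p q) t),
      if_pos (Finset.mem_range.mpr hn)]
    simp [iteratedDerivWithin_zero]
  -- derivatives of iterated derivatives of f within the interval
  have hgd : ∀ j, j < n → ∀ t ∈ Set.Icc p q,
      HasDerivWithinAt (iteratedDerivWithin j f (Set.Icc p q))
        (iteratedDerivWithin (j+1) f (Set.Icc p q) t) (Set.Icc p q) t := by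
    intro j hj t ht
    have h1 := (hf.differentiableOn_iteratedDerivWithin (by exact_mod_cast hj) hs t
      ht).hasDerivWithinAt
    rwa [← iteratedDerivWithin_succ] at h1
  have hgcont : ∀ j, j < n →
      ContinuousOn (iteratedDerivWithin j f (Set.Icc p q)) (Set.Icc p q) := by
    intro j hj
    exact (hf.differentiableOn_iteratedDerivWithin (by exact_mod_cast hj) hs).continuousOn
  -- derivative of F
  have hFd : ∀ t ∈ Set.Ioo p q,
      HasDerivAt (fun t => f x - ∑ j ∈ Finset.range n,
          iteratedDerivWithin j f (Set.Icc p q) t *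
            ∑ i ∈ Finset.range (n - j), c (i+j+1) * iteratedDeriv i ω (x - t))
        (-((∑ i ∈ Finset.range (n+1), c i * iteratedDerivWithin i f (Set.Icc p q) t)
            * ω (x - t))) t := by
    intro t ht
    have hts : t ∈ Set.Icc p q := ⟨ht.1.le, ht.2.le⟩
    have hnhds : Set.Icc p q ∈ nhds t := Icc_mem_nhds ht.1 ht.2
    have hinner : HasDerivAt (fun t : ℝ => x - t) (-1) t := by
      simpa using (hasDerivAt_id' t).const_sub x
    have hterm : ∀ j ∈ Finset.range n, HasDerivAt
        (fun t => iteratedDerivWithin j f (Set.Icc p q) t *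
          ∑ i ∈ Finset.range (n - j), c (i+j+1) * iteratedDeriv i ω (x - t))
        (iteratedDerivWithin (j+1) f (Set.Icc p q) t *
            (∑ i ∈ Finset.range (n - j), c (i+j+1) * iteratedDeriv i ω (x - t))
          - iteratedDerivWithin j f (Set.Icc p q) t *
            (∑ i ∈ Finset.range (n - j), c (i+j+1) * iteratedDeriv (i+1) ω (x - t))) t := by
      intro j hj
      rw [Finset.mem_range] at hj
      have h1 : HasDerivAt (iteratedDerivWithin j f (Set.Icc p q))
          (iteratedDerivWithin (j+1) f (Set.Icc p q) t) t :=
        (hgd j hj t hts).hasDerivAt hnhds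
      have h2 := HasDerivAt.comp t (hWd j (x - t)) hinner
      simp only [Function.comp_def] at h2
      have h3 := h1.mul h2
      exact h3.congr_deriv (by ring)
    have hsum := HasDerivAt.fun_sum hterm
    have h4 := hsum.const_sub (f x)
    refine h4.congr_deriv (Eq.symm ?_)
    have halg := aux_alg n c (fun j => iteratedDerivWithin j f (Set.Icc p q) t)
      (fun i => iteratedDeriv i ω (x - t))
    beta_reduce at halg
    have hode := hωD (x - t)
    rw [Finset.sum_range_succ'] at hode
    have hD := Finset.sum_range_succ'
      (fun i => c i * iteratedDerivWithin i f (Set.Icc p q) t) n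
    beta_reduce at hD
    simp only [iteratedDeriv_zero] at hode halg
    linear_combination halg - (iteratedDerivWithin 0 f (Set.Icc p q) t) * hode
      - ω (x - t) * hD
  -- continuity of F
  have hFc : ContinuousOn (fun t => f x - ∑ j ∈ Finset.range n,
      iteratedDerivWithin j f (Set.Icc p q) t *
        ∑ i ∈ Finset.range (n - j), c (i+j+1) * iteratedDeriv i ω (x - t))
      (Set.Icc p q) := by
    apply ContinuousOn.sub continuousOn_const
    apply continuousOn_finset_sum
    intro j hj
    rw [Finset.mem_range] at hj
    exact (hgcont j hj).mul
      (((hWcont j).comp (continuous_const.sub continuous_id)).continuousOn)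
  -- derivative of G
  have hGd : ∀ t : ℝ, HasDerivAt (fun t => ∫ u in (0:ℝ)..(x - t), ω u) (-(ω (x - t))) t := by
    intro t
    have h1 : HasDerivAt (fun v => ∫ u in (0:ℝ)..v, ω u) (ω (x - t)) (x - t) :=
      (hω.continuous.integral_hasStrictDerivAt 0 (x - t)).hasDerivAt
    have hinner : HasDerivAt (fun t : ℝ => x - t) (-1) t := by
      simpa using (hasDerivAt_id' t).const_sub x
    have h2 := HasDerivAt.comp t h1 hinner
    simp only [Function.comp_def] at h2
    exact h2.congr_deriv (by ring)
  have hGc : Continuous (fun t => ∫ u in (0:ℝ)..(x - t), ω u) :=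
    Differentiable.continuous (fun t => (hGd t).differentiableAt)
  rcases lt_trichotomy y x with hxy | hxy | hxy
  · -- y < x
    have hsub : Set.Icc y x ⊆ Set.Icc p q := Set.Icc_subset_Icc hy.1 hx.2
    have hsub' : Set.Ioo y x ⊆ Set.Ioo p q := fun t ht =>
      ⟨lt_of_le_of_lt hy.1 ht.1, lt_of_lt_of_le ht.2 hx.2⟩
    obtain ⟨ξ, hξI, heq⟩ := exists_ratio_hasDerivAt_eq_ratio_slope
      (fun t => f x - ∑ j ∈ Finset.range n,
          iteratedDerivWithin j f (Set.Icc p q) t *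
            ∑ i ∈ Finset.range (n - j), c (i+j+1) * iteratedDeriv i ω (x - t))
      (fun t => -((∑ i ∈ Finset.range (n+1), c i * iteratedDerivWithin i f (Set.Icc p q) t)
          * ω (x - t)))
      hxy (hFc.mono hsub) (fun t ht => hFd t (hsub' ht))
      (fun t => ∫ u in (0:ℝ)..(x - t), ω u)
      (fun t => -(ω (x - t)))
      (hGc.continuousOn) (fun t _ => hGd t)
    refine ⟨ξ, Set.Ioo_subset_Icc_self.trans Set.Icc_subset_uIcc hξI, ?_⟩
    rw [sub_self, intervalIntegral.integral_same, hsum0 x, sub_self] at heq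
    have hwnz : ω (x - ξ) ≠ 0 := by
      apply hroot
      rw [min_eq_right (by linarith : (0:ℝ) ≤ x - y), max_eq_left (by linarith : (0:ℝ) ≤ x - y)]
      exact ⟨by linarith [hξI.2], by linarith [hξI.1]⟩
    have h5 : ((f x - ∑ j ∈ Finset.range n,
          iteratedDerivWithin j f (Set.Icc p q) y *
            ∑ i ∈ Finset.range (n - j), c (i+j+1) * iteratedDeriv i ω (x - y))
        - (∫ u in (0:ℝ)..(x - y), ω u) *
          (∑ i ∈ Finset.range (n+1), c i * iteratedDerivWithin i f (Set.Icc p q) ξ))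
        * ω (x - ξ) = 0 := by linear_combination -heq
    have h6 := aux_final _ _ _ _ hwnz h5
    linear_combination h6
  · -- x = y
    refine ⟨y, Set.left_mem_uIcc, ?_⟩
    rw [hxy, sub_self, intervalIntegral.integral_same, mul_zero, add_zero, ← hsum0 x]
  · -- x < y
    have hsub : Set.Icc x y ⊆ Set.Icc p q := Set.Icc_subset_Icc hx.1 hy.2
    have hsub' : Set.Ioo x y ⊆ Set.Ioo p q := fun t ht =>
      ⟨lt_of_le_of_lt hx.1 ht.1, lt_of_lt_of_le ht.2 hy.2⟩
    obtain ⟨ξ, hξI, heq⟩ := exists_ratio_hasDerivAt_eq_ratio_slope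
      (fun t => f x - ∑ j ∈ Finset.range n,
          iteratedDerivWithin j f (Set.Icc p q) t *
            ∑ i ∈ Finset.range (n - j), c (i+j+1) * iteratedDeriv i ω (x - t))
      (fun t => -((∑ i ∈ Finset.range (n+1), c i * iteratedDerivWithin i f (Set.Icc p q) t)
          * ω (x - t)))
      hxy (hFc.mono hsub) (fun t ht => hFd t (hsub' ht))
      (fun t => ∫ u in (0:ℝ)..(x - t), ω u)
      (fun t => -(ω (x - t)))
      (hGc.continuousOn) (fun t _ => hGd t)
    refine ⟨ξ, Set.Ioo_subset_Icc_self.trans Set.Icc_subset_uIcc' hξI, ?_⟩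
    rw [sub_self, intervalIntegral.integral_same, hsum0 x, sub_self] at heq
    have hwnz : ω (x - ξ) ≠ 0 := by
      apply hroot
      rw [min_eq_left (by linarith : x - y ≤ (0:ℝ)), max_eq_right (by linarith : x - y ≤ (0:ℝ))]
      exact ⟨by linarith [hξI.2], by linarith [hξI.1]⟩
    have h5 : ((f x - ∑ j ∈ Finset.range n,
          iteratedDerivWithin j f (Set.Icc p q) y *
            ∑ i ∈ Finset.range (n - j), c (i+j+1) * iteratedDeriv i ω (x - y))
        - (∫ u in (0:ℝ)..(x - y), ω u) *
          (∑ i ∈ Finset.range (n+1), c i * iteratedDerivWithin i f (Set.Icc p q) ξ))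
        * ω (x - ξ) = 0 := by linear_combination heq
    have h6 := aux_final _ _ _ _ hwnz h5
    linear_combination h6
end

section
/- Let n ∈ ℕ, k ∈ ℕ₀ with k < n and γ ∈ ℝ. Let f : [a,b] → ℝ be n-times continuously differentiable and let a, x ∈ [a,b] be such that the derivative ζ′_{n,k,γ} has no zero strictly between 0 and x−a (i.e., ρ⁻(ζ′_{n,k,γ}) ≤ x−a ≤ ρ⁺(ζ′_{n,k,γ})). Then there exists a point ξ between a and x such that f(x) = Σ_{j=0}^{k−1} f^{(j)}(a)(x−a)^j/j! + Σ_{j=k}^{n−1} f^{(j)}(a) ζ_{n,k,γ}^{(n−j)}(x−a) + ( f^{(n)}(ξ) − γ f^{(k)}(ξ) ) · ζ_{n,k,γ}(x−a). -/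
open Set Finset

noncomputable def EE (d a : ℕ) (γ t : ℝ) : ℝ :=
  ∑' i : ℕ, γ ^ i * t ^ (i * d + a) / (Nat.factorial (i * d + a) : ℝ)

lemma EE_term_bound (d a i : ℕ) (hd : 0 < d) (γ s M : ℝ) (hM1 : 1 ≤ M) (hs : |s| ≤ M) :
    ‖γ ^ i * s ^ (i * d + a) / (Nat.factorial (i * d + a) : ℝ)‖
      ≤ M ^ a * ((|γ| * M ^ d) ^ i / (Nat.factorial i : ℝ)) := by
  have hM0 : (0:ℝ) ≤ M := by linarith
  have h1 : ‖γ ^ i * s ^ (i * d + a) / (Nat.factorial (i * d + a) : ℝ)‖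
      = |γ| ^ i * |s| ^ (i * d + a) / (Nat.factorial (i * d + a) : ℝ) := by
    rw [Real.norm_eq_abs, abs_div, abs_mul, abs_pow, abs_pow]
    congr 1
    exact abs_of_pos (by exact_mod_cast Nat.factorial_pos _)
  rw [h1]
  have hfac : (Nat.factorial i : ℝ) ≤ (Nat.factorial (i * d + a) : ℝ) := by
    exact_mod_cast Nat.factorial_le (le_trans (Nat.le_mul_of_pos_right i hd) (Nat.le_add_right _ _))
  have hfi : (0:ℝ) < Nat.factorial i := by exact_mod_cast Nat.factorial_pos _
  have hfa : (0:ℝ) < Nat.factorial (i * d + a) := by exact_mod_cast Nat.factorial_pos _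
  have ht : |s| ^ (i * d + a) ≤ M ^ (i * d + a) := pow_le_pow_left₀ (abs_nonneg _) hs _
  have hnum : |γ| ^ i * |s| ^ (i * d + a) ≤ M ^ a * (|γ| * M ^ d) ^ i := by
    rw [mul_pow, ← pow_mul]
    calc |γ| ^ i * |s| ^ (i * d + a) ≤ |γ| ^ i * M ^ (i * d + a) :=
          mul_le_mul_of_nonneg_left ht (pow_nonneg (abs_nonneg _) _)
      _ = M ^ a * (|γ| ^ i * M ^ (d * i)) := by rw [pow_add]; ring_nf
  calc |γ| ^ i * |s| ^ (i * d + a) / (Nat.factorial (i * d + a) : ℝ)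
      ≤ M ^ a * (|γ| * M ^ d) ^ i / (Nat.factorial i : ℝ) := by
        apply div_le_div₀ (by positivity) hnum hfi hfac
    _ = M ^ a * ((|γ| * M ^ d) ^ i / (Nat.factorial i : ℝ)) := by ring

lemma summable_EE (d a : ℕ) (hd : 0 < d) (γ t : ℝ) :
    Summable (fun i : ℕ => γ ^ i * t ^ (i * d + a) / (Nat.factorial (i * d + a) : ℝ)) := by
  apply Summable.of_norm
  exact Summable.of_nonneg_of_le (fun i => norm_nonneg _)
    (fun i => EE_term_bound d a i hd γ t (max |t| 1) (le_max_right _ _) (le_max_left _ _))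
    (((Real.summable_pow_div_factorial (|γ| * (max |t| 1) ^ d)).mul_left ((max |t| 1) ^ a)))

lemma EE_zero (d a : ℕ) (hd : 0 < d) (γ : ℝ) :
    EE d a γ 0 = if a = 0 then 1 else 0 := by
  unfold EE
  rw [tsum_eq_single 0]
  · rcases Nat.eq_zero_or_pos a with h | h
    · simp [h]
    · rw [zero_pow (by omega : 0 * d + a ≠ 0), if_neg (by omega : ¬ a = 0)]
      simp
  · intro i hi
    rw [zero_pow (by positivity : i * d + a ≠ 0)]
    simp

lemma EE_split (d a : ℕ) (hd : 0 < d) (γ t : ℝ) :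
    EE d a γ t = t ^ a / (Nat.factorial a : ℝ) + γ * EE d (a + d) γ t := by
  unfold EE
  rw [Summable.tsum_eq_zero_add (summable_EE d a hd γ t)]
  congr 1
  · simp
  rw [← tsum_mul_left]
  congr 1
  funext i
  have h : (i + 1) * d + a = i * d + (a + d) := by ring
  rw [h]
  ring

lemma hasDerivAt_EE (d a : ℕ) (hd : 0 < d) (γ : ℝ) (t : ℝ) :
    HasDerivAt (EE d (a + 1) γ) (EE d a γ t) t := by
  set R : ℝ := |t| + 1 with hR
  have htR : t ∈ Ioo (-R) R := by
    constructor <;> cases abs_cases t <;> simp_all <;> linarith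
  set M : ℝ := max R 1 with hM
  have hM1 : (1:ℝ) ≤ M := le_max_right _ _
  have key : HasDerivAt (fun s => ∑' i : ℕ, γ ^ i * s ^ (i * d + (a+1)) / (Nat.factorial (i * d + (a+1)) : ℝ))
      (∑' i : ℕ, γ ^ i * t ^ (i * d + a) / (Nat.factorial (i * d + a) : ℝ)) t := by
    apply hasDerivAt_tsum_of_isPreconnected
      (u := fun i : ℕ => M ^ a * ((|γ| * M ^ d) ^ i / (Nat.factorial i : ℝ)))
      (g' := fun i s => γ ^ i * s ^ (i * d + a) / (Nat.factorial (i * d + a) : ℝ))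
      ?_ isOpen_Ioo (isPreconnected_Ioo) ?_ ?_ htR ?_ htR
    · exact ((Real.summable_pow_div_factorial (|γ| * M ^ d)).mul_left (M ^ a))
    · intro i s _
      have h0 : HasDerivAt (fun s : ℝ => s ^ (i*d + (a+1))) ((i*d+(a+1)) * s ^ (i*d+a)) s := by
        simpa using hasDerivAt_pow (i*d + (a+1)) s
      have h2 := (h0.const_mul (γ ^ i)).div_const ((Nat.factorial (i * d + (a+1)) : ℝ))
      refine h2.congr_deriv ?_
      rw [show i * d + (a+1) = (i*d+a) + 1 by ring, Nat.factorial_succ]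
      have h : (0:ℝ) < Nat.factorial (i*d+a) := by exact_mod_cast Nat.factorial_pos _
      push_cast
      field_simp
      ring
    · intro i s hs
      apply EE_term_bound d a i hd γ s M hM1
      have : |s| ≤ R := by
        rw [abs_le]; exact ⟨hs.1.le, hs.2.le⟩
      exact le_trans this (le_max_left _ _)
    · exact summable_EE d (a+1) hd γ t
  exact key

lemma differentiable_EE (d a : ℕ) (hd : 0 < d) (γ : ℝ) : Differentiable ℝ (EE d a γ) := by
  rcases Nat.eq_zero_or_pos a with h | h
  · subst h
    have he : EE d 0 γ = fun t => 1 + γ * EE d d γ t := by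
      funext t; rw [EE_split d 0 hd γ t]; simp
    rw [he]
    rcases Nat.exists_eq_add_of_lt hd with ⟨e, he'⟩
    have : d = e + 1 := by omega
    subst this
    exact fun t => ((((hasDerivAt_EE (e+1) e hd γ t)).const_mul γ).const_add 1).differentiableAt
  · rcases Nat.exists_eq_add_of_lt h with ⟨b, hb⟩
    have : a = b + 1 := by omega
    subst this
    exact fun t => (hasDerivAt_EE d b hd γ t).differentiableAt

lemma continuous_EE (d a : ℕ) (hd : 0 < d) (γ : ℝ) : Continuous (EE d a γ) :=
  (differentiable_EE d a hd γ).continuous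

lemma deriv_EE (d a : ℕ) (hd : 0 < d) (γ : ℝ) :
    deriv (EE d (a+1) γ) = EE d a γ := by
  funext t; exact (hasDerivAt_EE d a hd γ t).deriv

lemma zeta_eq_EE (n k : ℕ) (γ : ℝ) : zeta ℝ n k γ = EE (n - k) n γ := by
  funext t
  simp [zeta, EE, RCLike.ofReal]

lemma iteratedDeriv_zeta_eq (n k m : ℕ) (hk : k < n) (hm : m ≤ n) (γ : ℝ) :
    iteratedDeriv m (zeta ℝ n k γ) = EE (n - k) (n - m) γ := by
  induction m with
  | zero => simpa [iteratedDeriv_zero] using zeta_eq_EE n k γ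
  | succ m ih =>
    rw [iteratedDeriv_succ, ih (by omega)]
    have h1 : n - m = (n - (m+1)) + 1 := by omega
    rw [h1, deriv_EE _ _ (by omega : 0 < n - k)]

lemma hasDerivAt_EE' (d a : ℕ) (hd : 0 < d) (γ t : ℝ) :
    HasDerivAt (EE d a γ)
      (if a = 0 then γ * EE d (d - 1) γ t else EE d (a - 1) γ t) t := by
  rcases a with _ | b
  · simp only [if_pos rfl]
    have he : EE d 0 γ = fun s => 1 + γ * EE d ((d-1)+1) γ s := by
      funext s
      rw [EE_split d 0 hd γ s]
      simp [show (d-1)+1 = d by omega]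
    rw [he]
    exact ((hasDerivAt_EE d (d-1) hd γ t).const_mul γ).const_add 1
  · simpa using hasDerivAt_EE d b hd γ t

theorem aux (n k : ℕ) (hk : k < n) (γ : ℝ) (p q : ℝ) (hpq : p < q)
    (fj : ℕ → ℝ → ℝ) (x y : ℝ) (hx : x ∈ Set.Icc p q) (hy : y ∈ Set.Icc p q)
    (hcont : ∀ j, j ≤ n → ContinuousOn (fj j) (Set.Icc p q))
    (hderiv : ∀ j, j < n → ∀ t ∈ Set.Ioo p q, HasDerivAt (fj j) (fj (j+1) t) t)
    (hroot : ∀ t ∈ Set.Ioo (min (x - y) 0) (max (x - y) 0),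
      EE (n - k) (n - 1) γ t ≠ 0) :
    ∃ ξ ∈ Set.uIcc y x,
      fj 0 x = (∑ j ∈ Finset.range k, fj j y * (x - y) ^ j / (Nat.factorial j : ℝ))
          + (∑ j ∈ Finset.Ico k n, fj j y * EE (n - k) j γ (x - y))
          + (fj n ξ - γ * fj k ξ) * EE (n - k) n γ (x - y) := by
  have hn : 0 < n := by omega
  set d := n - k with hdd
  have hd : 0 < d := by omega
  have hkd : k + d = n := by omega
  set DE : ℕ → ℝ → ℝ := fun j s =>
    if j = 0 then γ * EE d (d - 1) γ s else EE d (j - 1) γ s with hDE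
  have hDEn : DE n = EE d (n - 1) γ := by
    funext s; simp only [hDE, if_neg (by omega : ¬ n = 0)]
  have hDEcomp : ∀ (j : ℕ) (t : ℝ),
      HasDerivAt (fun u : ℝ => EE d j γ (x - u)) (-(DE j (x - t))) t := by
    intro j t
    have h1 : HasDerivAt (fun u : ℝ => x - u) (-1) t := by
      simpa using (hasDerivAt_id t).const_sub x
    have h2 := (hasDerivAt_EE' d j hd γ (x - t)).comp t h1
    refine h2.congr_deriv ?_
    simp [hDE]
  set F : ℝ → ℝ := fun t =>
    (∑ j ∈ Finset.range k, fj j t * (x - t) ^ j / (Nat.factorial j : ℝ))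
      + (∑ j ∈ Finset.Ico k n, fj j t * EE d j γ (x - t)) with hF
  -- derivative of F
  have hFderiv : ∀ t ∈ Set.Ioo p q,
      HasDerivAt F ((fj n t - γ * fj k t) * EE d (n - 1) γ (x - t)) t := by
    intro t ht
    set G1 : ℕ → ℝ := fun j =>
      if j = 0 then 0 else fj j t * (x - t) ^ (j - 1) / (Nat.factorial (j - 1) : ℝ) with hG1
    set H : ℕ → ℝ := fun j => fj j t * DE j (x - t) with hH
    have hsum1 : HasDerivAt
        (fun u => ∑ j ∈ Finset.range k, fj j u * (x - u) ^ j / (Nat.factorial j : ℝ))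
        (∑ j ∈ Finset.range k, (G1 (j+1) - G1 j)) t := by
      apply HasDerivAt.fun_sum
      intro j hj
      have hjk : j < k := Finset.mem_range.mp hj
      have h1 : HasDerivAt (fun u : ℝ => x - u) (-1) t := by
        simpa using (hasDerivAt_id t).const_sub x
      have hpow : HasDerivAt (fun u : ℝ => (x - u) ^ j)
          ((j : ℝ) * (x - t) ^ (j - 1) * (-1)) t := h1.pow j
      have hm := ((hderiv j (by omega) t ht).fun_mul hpow).div_const (Nat.factorial j : ℝ)
      refine hm.congr_deriv ?_
      rcases j with _ | m
      · simp [hG1]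
      · simp only [hG1, if_neg (Nat.succ_ne_zero m), if_neg (Nat.succ_ne_zero (m+1)),
          Nat.add_sub_cancel, Nat.succ_sub_one]
        rw [Nat.factorial_succ]
        have hm0 : (0:ℝ) < Nat.factorial m := by exact_mod_cast Nat.factorial_pos m
        push_cast
        field_simp
        ring
    have hsum2 : HasDerivAt
        (fun u => ∑ j ∈ Finset.Ico k n, fj j u * EE d j γ (x - u))
        (∑ j ∈ Finset.Ico k n, (H (j+1) - H j)) t := by
      apply HasDerivAt.fun_sum
      intro j hj
      have hjn : j < n := (Finset.mem_Ico.mp hj).2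
      have hm := (hderiv j hjn t ht).fun_mul (hDEcomp j t)
      refine hm.congr_deriv ?_
      have hDEj : DE (j+1) = EE d j γ := by
        funext s; simp only [hDE, if_neg (Nat.succ_ne_zero j), Nat.add_sub_cancel]
      simp only [hH, hDEj]
      ring
    have hadd := hsum1.add hsum2
    have htel1 : (∑ j ∈ Finset.range k, (G1 (j+1) - G1 j)) = G1 k := by
      rw [Finset.sum_range_sub]; simp [hG1]
    have htel2 : (∑ j ∈ Finset.Ico k n, (H (j+1) - H j)) = H n - H k := by
      rw [Finset.sum_Ico_eq_sub _ (le_of_lt hk), Finset.sum_range_sub, Finset.sum_range_sub]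
      ring
    rw [htel1, htel2] at hadd
    have hval : G1 k + (H n - H k) = (fj n t - γ * fj k t) * EE d (n - 1) γ (x - t) := by
      have e2 : H n = fj n t * EE d (n - 1) γ (x - t) := by simp only [hH, hDEn]
      rcases Nat.eq_zero_or_pos k with rfl | hk0
      · have e1 : G1 0 = 0 := by simp [hG1]
        have e3 : H 0 = fj 0 t * (γ * EE d (n - 1) γ (x - t)) := by
          simp [hH, hDE, show d - 1 = n - 1 by omega]
        rw [e1, e2, e3]; ring
      · have e1 : G1 k = fj k t * (x - t) ^ (k-1) / (Nat.factorial (k-1) : ℝ) := by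
          simp only [hG1, if_neg (by omega : ¬ k = 0)]
        have e3 : H k = fj k t * ((x - t) ^ (k-1) / (Nat.factorial (k-1) : ℝ)
            + γ * EE d (n-1) γ (x - t)) := by
          simp only [hH, hDE, if_neg (by omega : ¬ k = 0)]
          rw [EE_split d (k-1) hd γ (x - t), show k - 1 + d = n - 1 by omega]
        rw [e1, e2, e3]; ring
    rw [hval] at hadd
    exact hadd
  -- value of F at x
  have hFx : F x = fj 0 x := by
    have h1 : (∑ j ∈ Finset.range k, fj j x * (x - x) ^ j / (Nat.factorial j : ℝ))
        = if k = 0 then 0 else fj 0 x := by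
      rcases Nat.eq_zero_or_pos k with rfl | hk0
      · simp
      · rw [if_neg (by omega)]
        rw [Finset.sum_eq_single 0]
        · simp
        · intro j hj hj0
          rw [sub_self, zero_pow hj0]
          ring
        · intro h; exact absurd (Finset.mem_range.mpr hk0) h
    have h2 : (∑ j ∈ Finset.Ico k n, fj j x * EE d j γ (x - x))
        = if k = 0 then fj 0 x else 0 := by
      rw [sub_self]
      rcases Nat.eq_zero_or_pos k with rfl | hk0
      · rw [if_pos rfl, Finset.sum_eq_single 0]
        · rw [EE_zero d 0 hd γ]; simp
        · intro j hj hj0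
          rw [EE_zero d j hd γ, if_neg hj0]; ring
        · intro h; exact absurd (Finset.mem_Ico.mpr ⟨Nat.zero_le 0, hn⟩) h
      · rw [if_neg (by omega)]
        apply Finset.sum_eq_zero
        intro j hj
        have : j ≠ 0 := by have := (Finset.mem_Ico.mp hj).1; omega
        rw [EE_zero d j hd γ, if_neg this]; ring
    simp only [hF, h1, h2]
    rcases Nat.eq_zero_or_pos k with rfl | hk0
    · rw [if_pos rfl, if_pos rfl]; ring
    · rw [if_neg (by omega), if_neg (by omega)]; ring
  -- continuity of F
  have hFc : ContinuousOn F (Set.Icc p q) := by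
    apply ContinuousOn.add
    · apply continuousOn_finset_sum
      intro j hj
      have hjn : j ≤ n := le_of_lt (lt_trans (Finset.mem_range.mp hj) hk)
      exact ((hcont j hjn).mul
        (((continuous_const.sub continuous_id).pow j).continuousOn)).div_const _
    · apply continuousOn_finset_sum
      intro j hj
      apply ContinuousOn.mul (hcont j (le_of_lt (Finset.mem_Ico.mp hj).2))
      exact ((continuous_EE d j hd γ).comp (continuous_const.sub continuous_id)).continuousOn
  -- G facts
  have hGc : Continuous (fun u : ℝ => EE d n γ (x - u)) :=
    (continuous_EE d n hd γ).comp (continuous_const.sub continuous_id)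
  have hGderiv : ∀ t : ℝ,
      HasDerivAt (fun u : ℝ => EE d n γ (x - u)) (-(EE d (n-1) γ (x - t))) t := by
    intro t
    have h0 := hDEcomp n t
    rwa [hDEn] at h0
  have hGx : EE d n γ (x - x) = 0 := by
    rw [sub_self, EE_zero d n hd γ, if_neg (by omega)]
  have hFy : F y = (∑ j ∈ Finset.range k, fj j y * (x - y) ^ j / (Nat.factorial j : ℝ))
      + (∑ j ∈ Finset.Ico k n, fj j y * EE d j γ (x - y)) := by rw [hF]
  rcases lt_trichotomy y x with hyx | hyx | hyx
  · -- y < x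
    have hsub : Set.Icc y x ⊆ Set.Icc p q := Set.Icc_subset_Icc hy.1 hx.2
    have hsubo : Set.Ioo y x ⊆ Set.Ioo p q :=
      fun t ht => ⟨lt_of_le_of_lt hy.1 ht.1, lt_of_lt_of_le ht.2 hx.2⟩
    obtain ⟨c, hc, heq⟩ := exists_ratio_hasDerivAt_eq_ratio_slope F
      (fun t => (fj n t - γ * fj k t) * EE d (n-1) γ (x - t)) hyx (hFc.mono hsub)
      (fun t ht => hFderiv t (hsubo ht))
      (fun u => EE d n γ (x - u)) (fun t => -(EE d (n-1) γ (x - t)))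
      (hGc.continuousOn) (fun t _ => hGderiv t)
    refine ⟨c, Set.mem_uIcc.mpr (Or.inl ⟨hc.1.le, hc.2.le⟩), ?_⟩
    have hEne : EE d (n-1) γ (x - c) ≠ 0 := by
      apply hroot
      rw [min_eq_right (by linarith : (0:ℝ) ≤ x - y), max_eq_left (by linarith : (0:ℝ) ≤ x - y)]
      exact ⟨by linarith [hc.2], by linarith [hc.1]⟩
    rw [hGx, hFx] at heq
    have h4 : ((0 - EE d n γ (x - y)) * (fj n c - γ * fj k c)) * EE d (n-1) γ (x - c)
        = (-(fj 0 x - F y)) * EE d (n-1) γ (x - c) := by linear_combination heq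
    have h5 := mul_right_cancel₀ hEne h4
    rw [hFy] at h5
    linear_combination h5
  · -- y = x
    subst hyx
    refine ⟨y, Set.left_mem_uIcc, ?_⟩
    rw [hGx, mul_zero, add_zero, ← hFy]
    exact hFx.symm
  · -- x < y
    have hsub : Set.Icc x y ⊆ Set.Icc p q := Set.Icc_subset_Icc hx.1 hy.2
    have hsubo : Set.Ioo x y ⊆ Set.Ioo p q :=
      fun t ht => ⟨lt_of_le_of_lt hx.1 ht.1, lt_of_lt_of_le ht.2 hy.2⟩
    obtain ⟨c, hc, heq⟩ := exists_ratio_hasDerivAt_eq_ratio_slope F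
      (fun t => (fj n t - γ * fj k t) * EE d (n-1) γ (x - t)) hyx (hFc.mono hsub)
      (fun t ht => hFderiv t (hsubo ht))
      (fun u => EE d n γ (x - u)) (fun t => -(EE d (n-1) γ (x - t)))
      (hGc.continuousOn) (fun t _ => hGderiv t)
    refine ⟨c, Set.mem_uIcc.mpr (Or.inr ⟨hc.1.le, hc.2.le⟩), ?_⟩
    have hEne : EE d (n-1) γ (x - c) ≠ 0 := by
      apply hroot
      rw [min_eq_left (by linarith : x - y ≤ (0:ℝ)), max_eq_right (by linarith : x - y ≤ (0:ℝ))]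
      exact ⟨by linarith [hc.2], by linarith [hc.1]⟩
    rw [hGx, hFx] at heq
    have h4 : ((EE d n γ (x - y) - 0) * (fj n c - γ * fj k c)) * EE d (n-1) γ (x - c)
        = ((fj 0 x - F y)) * EE d (n-1) γ (x - c) := by linear_combination heq
    have h5 := mul_right_cancel₀ hEne h4
    rw [hFy] at h5
    linear_combination -h5

/-- Mean value form: for `k < n`, `γ ∈ ℝ`, `f ∈ C^n([p,q],ℝ)`,
`x, y ∈ [p,q]` such that `ζ′_{n,k,γ}` has no zero strictly between `0` and `x−y`,
there is `ξ` between `y` and `x` with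
`f(x) = Σ_{j<k} f⁽ʲ⁾(y)(x−y)^j/j! + Σ_{j=k}^{n−1} f⁽ʲ⁾(y) ζ_{n,k,γ}^{(n−j)}(x−y)
  + (f⁽ⁿ⁾(ξ) − γ f⁽ᵏ⁾(ξ)) ζ_{n,k,γ}(x−y)`. -/
theorem stmt_11 (n k : ℕ) (hk : k < n) (γ : ℝ)
    (p q : ℝ) (hpq : p < q)
    (f : ℝ → ℝ) (hf : ContDiffOn ℝ n f (Set.Icc p q))
    (x y : ℝ) (hx : x ∈ Set.Icc p q) (hy : y ∈ Set.Icc p q)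
    (hroot : ∀ t ∈ Set.Ioo (min (x - y) 0) (max (x - y) 0),
      deriv (zeta ℝ n k γ) t ≠ 0) :
    ∃ ξ ∈ Set.uIcc y x,
      f x = (∑ j ∈ Finset.range k, iteratedDerivWithin j f (Set.Icc p q) y *
            (x - y) ^ j / (Nat.factorial j : ℝ))
          + (∑ j ∈ Finset.Ico k n, iteratedDerivWithin j f (Set.Icc p q) y *
            iteratedDeriv (n - j) (zeta ℝ n k γ) (x - y))
          + (iteratedDerivWithin n f (Set.Icc p q) ξ
              - γ * iteratedDerivWithin k f (Set.Icc p q) ξ)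
            * zeta ℝ n k γ (x - y) := by
  have hn : 0 < n := by omega
  have hus : UniqueDiffOn ℝ (Set.Icc p q) := uniqueDiffOn_Icc hpq
  have hcont : ∀ j, j ≤ n →
      ContinuousOn (iteratedDerivWithin j f (Set.Icc p q)) (Set.Icc p q) :=
    fun j hj => hf.continuousOn_iteratedDerivWithin (by exact_mod_cast hj) hus
  have hderiv : ∀ j, j < n → ∀ t ∈ Set.Ioo p q,
      HasDerivAt (iteratedDerivWithin j f (Set.Icc p q))
        (iteratedDerivWithin (j+1) f (Set.Icc p q) t) t := by
    intro j hj t ht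
    have hts : t ∈ Set.Icc p q := Set.Ioo_subset_Icc_self ht
    have hdiff : DifferentiableOn ℝ (iteratedDerivWithin j f (Set.Icc p q)) (Set.Icc p q) :=
      hf.differentiableOn_iteratedDerivWithin (by exact_mod_cast hj) hus
    have h2 : HasDerivAt (iteratedDerivWithin j f (Set.Icc p q))
        (derivWithin (iteratedDerivWithin j f (Set.Icc p q)) (Set.Icc p q) t) t :=
      ((hdiff t hts).hasDerivWithinAt).hasDerivAt (Icc_mem_nhds ht.1 ht.2)
    rwa [← iteratedDerivWithin_succ] at h2
  have hroot' : ∀ t ∈ Set.Ioo (min (x - y) 0) (max (x - y) 0),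
      EE (n - k) (n - 1) γ t ≠ 0 := by
    intro t ht
    have h0 := hroot t ht
    rwa [← iteratedDeriv_one, iteratedDeriv_zeta_eq n k 1 hk (by omega) γ] at h0
  obtain ⟨ξ, hξ, hval⟩ := aux n k hk γ p q hpq
    (fun j => iteratedDerivWithin j f (Set.Icc p q)) x y hx hy hcont hderiv hroot'
  refine ⟨ξ, hξ, ?_⟩
  simp only [iteratedDerivWithin_zero] at hval
  have hsumeq : ∀ j ∈ Finset.Ico k n,
      iteratedDerivWithin j f (Set.Icc p q) y * iteratedDeriv (n - j) (zeta ℝ n k γ) (x - y)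
        = iteratedDerivWithin j f (Set.Icc p q) y * EE (n - k) j γ (x - y) := by
    intro j hj
    have hjn : j < n := (Finset.mem_Ico.mp hj).2
    rw [iteratedDeriv_zeta_eq n k (n - j) hk (by omega) γ,
      show n - (n - j) = j by omega]
  rw [Finset.sum_congr rfl hsumeq, show zeta ℝ n k γ (x - y) = EE (n - k) n γ (x - y) by
    rw [zeta_eq_EE]]
  exact hval
end

section
/- Let n ∈ ℕ with n ≥ 1, let a < b be real numbers and set λ := 2τ_n/(b−a). Then for every twice continuously differentiable f : [a,b] → 𝕂, (f(a)+f(b))/2 − (1/(b−a))∫_a^b f = ∫_a^b ( f″(t) + λ² f(t) ) · [ sin(λ(b−t)/2) · sin(λ(t−a)/2) / ( λ sin(λ(b−a)/2) ) ] dt. Moreover, in the degenerate case n = 0 (so λ = 0), (f(a)+f(b))/2 − (1/(b−a))∫_a^b f = ∫_a^b f″(t) · (b−t)(t−a)/(2(b−a)) dt. -/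
open Set MeasureTheory intervalIntegral


lemma ofReal_hasDerivAt {𝕂 : Type*} [RCLike 𝕂] {u : ℝ → ℝ} {u' x : ℝ}
    (h : HasDerivAt u u' x) :
    HasDerivAt (fun t => ((u t : ℝ) : 𝕂)) ((u' : ℝ) : 𝕂) x := by
  exact (RCLike.ofRealCLM (K := 𝕂)).hasFDerivAt.comp_hasDerivAt x h

lemma parts_aux {𝕂 : Type*} [RCLike 𝕂] {a b : ℝ} (hab : a < b)
    (f : ℝ → 𝕂) (hf : ContDiffOn ℝ 2 f (Set.Icc a b))
    (g g' g'' : ℝ → ℝ)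
    (hg : ∀ x, HasDerivAt g (g' x) x)
    (hg' : ∀ x, HasDerivAt g' (g'' x) x)
    (hg''c : Continuous g'')
    (hga : g a = 0) (hgb : g b = 0) :
    ∫ t in a..b, iteratedDerivWithin 2 f (Set.Icc a b) t * ((g t : ℝ) : 𝕂)
      = ((g' a : ℝ) : 𝕂) * f a - ((g' b : ℝ) : 𝕂) * f b
        + ∫ t in a..b, f t * ((g'' t : ℝ) : 𝕂) := by
  have hs : UniqueDiffOn ℝ (Set.Icc a b) := uniqueDiffOn_Icc hab
  set s := Set.Icc a b with hsdef
  set f1 := derivWithin f s with hf1def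
  set f2 := iteratedDerivWithin 2 f s with hf2def
  have hf1 : ContDiffOn ℝ 1 f1 s := hf.derivWithin hs (by norm_num)
  have hf2c : ContinuousOn f2 s := hf.continuousOn_iteratedDerivWithin le_rfl hs
  have hgc : Continuous g := by
    rw [continuous_iff_continuousAt]; exact fun x => (hg x).continuousAt
  have hg'c : Continuous g' := by
    rw [continuous_iff_continuousAt]; exact fun x => (hg' x).continuousAt
  have hfc : ContinuousOn f s := hf.continuousOn
  have hf1c : ContinuousOn f1 s := hf1.continuousOn
  -- derivatives in the interior
  have hff : ∀ x ∈ Set.Ioo a b, HasDerivAt f (f1 x) x := by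
    intro x hx
    have hxs : x ∈ s := Set.Ioo_subset_Icc_self hx
    have := (hf.differentiableOn (by norm_num) x hxs).hasDerivWithinAt
    exact this.hasDerivAt (Icc_mem_nhds hx.1 hx.2)
  have hf1f2 : ∀ x ∈ Set.Ioo a b, HasDerivAt f1 (f2 x) x := by
    intro x hx
    have hxs : x ∈ s := Set.Ioo_subset_Icc_self hx
    have h1 := (hf1.differentiableOn one_ne_zero x hxs).hasDerivWithinAt
    have h2 : f2 x = derivWithin f1 s x := by
      rw [hf2def, iteratedDerivWithin_succ]
      exact derivWithin_congr (fun y hy => congrFun iteratedDerivWithin_one y)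
        (congrFun iteratedDerivWithin_one x)
    rw [h2]
    exact h1.hasDerivAt (Icc_mem_nhds hx.1 hx.2)
  -- the auxiliary function
  set F : ℝ → 𝕂 := fun t => f1 t * ((g t : ℝ) : 𝕂) - f t * ((g' t : ℝ) : 𝕂) with hF
  have hFc : ContinuousOn F s :=
    (hf1c.mul (RCLike.continuous_ofReal.comp hgc).continuousOn).sub
      (hfc.mul (RCLike.continuous_ofReal.comp hg'c).continuousOn)
  have hFd : ∀ x ∈ Set.Ioo a b,
      HasDerivAt F (f2 x * ((g x : ℝ) : 𝕂) - f x * ((g'' x : ℝ) : 𝕂)) x := by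
    intro x hx
    have h1 := (hf1f2 x hx).mul (ofReal_hasDerivAt (𝕂 := 𝕂) (hg x))
    have h2 := (hff x hx).mul (ofReal_hasDerivAt (𝕂 := 𝕂) (hg' x))
    have := h1.sub h2
    refine this.congr_deriv ?_
    ring
  have hintF' : IntervalIntegrable
      (fun x => f2 x * ((g x : ℝ) : 𝕂) - f x * ((g'' x : ℝ) : 𝕂)) volume a b := by
    apply ContinuousOn.intervalIntegrable
    rw [Set.uIcc_of_le hab.le]
    exact (hf2c.mul (RCLike.continuous_ofReal.comp hgc).continuousOn).sub
      (hfc.mul (RCLike.continuous_ofReal.comp hg''c).continuousOn)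
  have key := intervalIntegral.integral_eq_sub_of_hasDeriv_right_of_le hab.le hFc
    (fun x hx => (hFd x hx).hasDerivWithinAt) hintF'
  have hi1 : IntervalIntegrable (fun x => f2 x * ((g x : ℝ) : 𝕂)) volume a b := by
    apply ContinuousOn.intervalIntegrable
    rw [Set.uIcc_of_le hab.le]
    exact hf2c.mul (RCLike.continuous_ofReal.comp hgc).continuousOn
  have hi2 : IntervalIntegrable (fun x => f x * ((g'' x : ℝ) : 𝕂)) volume a b := by
    apply ContinuousOn.intervalIntegrable
    rw [Set.uIcc_of_le hab.le]
    exact hfc.mul (RCLike.continuous_ofReal.comp hg''c).continuousOn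
  rw [intervalIntegral.integral_sub hi1 hi2] at key
  have hFb : F b = - f b * ((g' b : ℝ) : 𝕂) := by simp [hF, hgb]
  have hFa : F a = - f a * ((g' a : ℝ) : 𝕂) := by simp [hF, hga]
  rw [hFb, hFa] at key
  have := sub_eq_iff_eq_add.mp key
  rw [this]; ring

/-- For `n ≥ 1`, `τ = τ_n` the unique fixed point of `tan` in
`((n−1/2)π,(n+1/2)π)` and `λ = 2τ_n/(b−a)`, every `f ∈ C²([a,b],𝕂)` satisfies
`(f(a)+f(b))/2 − (1/(b−a))∫_a^b f
  = ∫_a^b (f″(t)+λ²f(t)) · sin(λ(b−t)/2) sin(λ(t−a)/2)/(λ sin(λ(b−a)/2)) dt`;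
in the degenerate case `n = 0` (so `λ = 0`),
`(f(a)+f(b))/2 − (1/(b−a))∫_a^b f = ∫_a^b f″(t)·(b−t)(t−a)/(2(b−a)) dt`. -/
theorem stmt_15 {𝕂 : Type*} [RCLike 𝕂] (n : ℕ) (hn : 1 ≤ n)
    (a b : ℝ) (hab : a < b)
    (τ : ℝ)
    (hτ : τ ∈ Set.Ioo (((n : ℝ) - 1/2) * Real.pi) (((n : ℝ) + 1/2) * Real.pi))
    (hfix : Real.tan τ = τ)
    (l : ℝ) (hl : l = 2 * τ / (b - a)) :
    (∀ f : ℝ → 𝕂, ContDiffOn ℝ 2 f (Set.Icc a b) →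
      (f a + f b) / 2 - (((b - a : ℝ)) : 𝕂)⁻¹ * ∫ x in a..b, f x
        = ∫ t in a..b,
            (iteratedDerivWithin 2 f (Set.Icc a b) t + ((l ^ 2 : ℝ) : 𝕂) * f t)
              * ((Real.sin (l * (b - t) / 2) * Real.sin (l * (t - a) / 2)
                  / (l * Real.sin (l * (b - a) / 2)) : ℝ) : 𝕂)) ∧
    (∀ f : ℝ → 𝕂, ContDiffOn ℝ 2 f (Set.Icc a b) →
      (f a + f b) / 2 - (((b - a : ℝ)) : 𝕂)⁻¹ * ∫ x in a..b, f x
        = ∫ t in a..b, iteratedDerivWithin 2 f (Set.Icc a b) t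
            * (((b - t) * (t - a) / (2 * (b - a)) : ℝ) : 𝕂)) := by
  constructor
  · intro f hf
    have hba : b - a ≠ 0 := sub_ne_zero.mpr hab.ne'
    have hban : (0:ℝ) < b - a := sub_pos.mpr hab
    have hπ := Real.pi_pos
    have hn1 : (1:ℝ) ≤ (n:ℝ) := by exact_mod_cast hn
    have hτpos : 0 < τ := by nlinarith [hτ.1]
    have hτ0 : τ ≠ 0 := ne_of_gt hτpos
    have hcos : Real.cos τ ≠ 0 := by
      intro h
      rw [Real.tan_eq_sin_div_cos, h, div_zero] at hfix
      exact hτ0 hfix.symm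
    have hsin : Real.sin τ ≠ 0 := by
      intro h
      rw [Real.tan_eq_sin_div_cos, h, zero_div] at hfix
      exact hτ0 hfix.symm
    have hsc : Real.sin τ = τ * Real.cos τ := by
      rw [Real.tan_eq_sin_div_cos] at hfix
      field_simp at hfix
      linarith
    have hlpos : 0 < l := by rw [hl]; positivity
    have hl0 : l ≠ 0 := ne_of_gt hlpos
    have hlba : l * (b - a) / 2 = τ := by rw [hl]; field_simp
    have hD0 : l * Real.sin (l * (b - a) / 2) ≠ 0 := by
      rw [hlba]; exact mul_ne_zero hl0 hsin
    -- basic derivative facts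
    have hA : ∀ x : ℝ, HasDerivAt (fun t => l * (b - t) / 2) (-(l/2)) x := by
      intro x
      have h := (((hasDerivAt_id x).const_sub b).const_mul l).div_const 2
      refine h.congr_deriv ?_
      ring
    have hB : ∀ x : ℝ, HasDerivAt (fun t => l * (t - a) / 2) (l/2) x := by
      intro x
      have h := (((hasDerivAt_id x).sub_const a).const_mul l).div_const 2
      refine h.congr_deriv ?_
      ring
    have hsA : ∀ x : ℝ, HasDerivAt (fun t => Real.sin (l * (b - t) / 2))
        (Real.cos (l * (b - x) / 2) * (-(l/2))) x :=
      fun x => (Real.hasDerivAt_sin _).comp x (hA x)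
    have hcA : ∀ x : ℝ, HasDerivAt (fun t => Real.cos (l * (b - t) / 2))
        (-Real.sin (l * (b - x) / 2) * (-(l/2))) x :=
      fun x => (Real.hasDerivAt_cos _).comp x (hA x)
    have hsB : ∀ x : ℝ, HasDerivAt (fun t => Real.sin (l * (t - a) / 2))
        (Real.cos (l * (x - a) / 2) * (l/2)) x :=
      fun x => (Real.hasDerivAt_sin _).comp x (hB x)
    have hcB : ∀ x : ℝ, HasDerivAt (fun t => Real.cos (l * (t - a) / 2))
        (-Real.sin (l * (x - a) / 2) * (l/2)) x :=
      fun x => (Real.hasDerivAt_cos _).comp x (hB x)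
    have hg : ∀ x : ℝ, HasDerivAt
        (fun t => Real.sin (l * (b - t) / 2) * Real.sin (l * (t - a) / 2)
          / (l * Real.sin (l * (b - a) / 2)))
        ((-(l/2) * Real.cos (l * (b - x) / 2) * Real.sin (l * (x - a) / 2)
          + Real.sin (l * (b - x) / 2) * (l/2 * Real.cos (l * (x - a) / 2)))
          / (l * Real.sin (l * (b - a) / 2))) x := by
      intro x
      have h := ((hsA x).mul (hsB x)).div_const (l * Real.sin (l * (b - a) / 2))
      refine h.congr_deriv ?_
      ring
    have hg' : ∀ x : ℝ, HasDerivAt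
        (fun t => (-(l/2) * Real.cos (l * (b - t) / 2) * Real.sin (l * (t - a) / 2)
          + Real.sin (l * (b - t) / 2) * (l/2 * Real.cos (l * (t - a) / 2)))
          / (l * Real.sin (l * (b - a) / 2)))
        (-l^2 * (Real.sin (l * (b - x) / 2) * Real.sin (l * (x - a) / 2)
          / (l * Real.sin (l * (b - a) / 2))) - 1/(b - a)) x := by
      intro x
      have h1 := (((hcA x).const_mul (-(l/2))).mul (hsB x))
      have h2 := (hsA x).mul ((hcB x).const_mul (l/2))
      have h3 := (h1.add h2).div_const (l * Real.sin (l * (b - a) / 2))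
      have hsum : l * (b - x) / 2 + l * (x - a) / 2 = τ := by rw [← hlba]; ring
      have hAB : Real.cos (l * (b - x) / 2) * Real.cos (l * (x - a) / 2)
          = Real.cos τ + Real.sin (l * (b - x) / 2) * Real.sin (l * (x - a) / 2) := by
        have h4 := Real.cos_add (l * (b - x) / 2) (l * (x - a) / 2)
        rw [hsum] at h4
        linarith
      have hkey : l * Real.cos τ * (b - a) = 2 * Real.sin τ := by
        rw [hl, hsc]; field_simp
      refine h3.congr_deriv ?_
      rw [hlba]
      set sA := Real.sin (l * (b - x) / 2)
      set cA := Real.cos (l * (b - x) / 2)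
      set sB := Real.sin (l * (x - a) / 2)
      set cB := Real.cos (l * (x - a) / 2)
      field_simp
      linear_combination (-2*l*(b-a))*hAB + (-2)*hkey
    -- continuity facts
    have hGc : Continuous (fun t => Real.sin (l * (b - t) / 2) * Real.sin (l * (t - a) / 2)
        / (l * Real.sin (l * (b - a) / 2))) := by
      rw [continuous_iff_continuousAt]; exact fun x => (hg x).continuousAt
    have hg''c : Continuous (fun x => -l^2 * (Real.sin (l * (b - x) / 2) * Real.sin (l * (x - a) / 2)
        / (l * Real.sin (l * (b - a) / 2))) - 1/(b - a)) :=
      (continuous_const.mul hGc).sub continuous_const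
    -- boundary values
    have hg'a : (-(l/2) * Real.cos (l * (b - a) / 2) * Real.sin (l * (a - a) / 2)
        + Real.sin (l * (b - a) / 2) * (l/2 * Real.cos (l * (a - a) / 2)))
        / (l * Real.sin (l * (b - a) / 2)) = 1/2 := by
      simp only [sub_self, mul_zero, zero_div, Real.sin_zero, Real.cos_zero, mul_one, mul_zero,
        zero_add]
      rw [hlba]
      field_simp
    have hg'b : (-(l/2) * Real.cos (l * (b - b) / 2) * Real.sin (l * (b - a) / 2)
        + Real.sin (l * (b - b) / 2) * (l/2 * Real.cos (l * (b - a) / 2)))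
        / (l * Real.sin (l * (b - a) / 2)) = -(1/2) := by
      simp only [sub_self, mul_zero, zero_div, Real.sin_zero, Real.cos_zero, mul_one, zero_mul,
        add_zero]
      rw [hlba]
      field_simp
    have h := parts_aux hab f hf _ _ _ hg hg' hg''c
      (by simp) (by simp)
    beta_reduce at h
    rw [hg'a, hg'b] at h
    -- integrability facts
    have hs : UniqueDiffOn ℝ (Set.Icc a b) := uniqueDiffOn_Icc hab
    have hf2c : ContinuousOn (iteratedDerivWithin 2 f (Set.Icc a b)) (Set.Icc a b) :=
      hf.continuousOn_iteratedDerivWithin le_rfl hs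
    have hfc : ContinuousOn f (Set.Icc a b) := hf.continuousOn
    have hGK : Continuous (fun t => ((Real.sin (l * (b - t) / 2) * Real.sin (l * (t - a) / 2)
        / (l * Real.sin (l * (b - a) / 2)) : ℝ) : 𝕂)) := RCLike.continuous_ofReal.comp hGc
    have hi1 : IntervalIntegrable (fun t => iteratedDerivWithin 2 f (Set.Icc a b) t
        * ((Real.sin (l * (b - t) / 2) * Real.sin (l * (t - a) / 2)
          / (l * Real.sin (l * (b - a) / 2)) : ℝ) : 𝕂)) volume a b := by
      apply ContinuousOn.intervalIntegrable
      rw [Set.uIcc_of_le hab.le]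
      exact hf2c.mul hGK.continuousOn
    have hi2 : IntervalIntegrable (fun t => f t
        * ((Real.sin (l * (b - t) / 2) * Real.sin (l * (t - a) / 2)
          / (l * Real.sin (l * (b - a) / 2)) : ℝ) : 𝕂)) volume a b := by
      apply ContinuousOn.intervalIntegrable
      rw [Set.uIcc_of_le hab.le]
      exact hfc.mul hGK.continuousOn
    have hi3 : IntervalIntegrable f volume a b := by
      apply ContinuousOn.intervalIntegrable
      rw [Set.uIcc_of_le hab.le]
      exact hfc
    have hsplit : (∫ t in a..b, (iteratedDerivWithin 2 f (Set.Icc a b) t + ((l ^ 2 : ℝ) : 𝕂) * f t)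
          * ((Real.sin (l * (b - t) / 2) * Real.sin (l * (t - a) / 2)
            / (l * Real.sin (l * (b - a) / 2)) : ℝ) : 𝕂))
        = (∫ t in a..b, iteratedDerivWithin 2 f (Set.Icc a b) t
            * ((Real.sin (l * (b - t) / 2) * Real.sin (l * (t - a) / 2)
              / (l * Real.sin (l * (b - a) / 2)) : ℝ) : 𝕂))
          + ((l ^ 2 : ℝ) : 𝕂) * ∫ t in a..b, f t
            * ((Real.sin (l * (b - t) / 2) * Real.sin (l * (t - a) / 2)
              / (l * Real.sin (l * (b - a) / 2)) : ℝ) : 𝕂) := by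
      rw [← intervalIntegral.integral_const_mul,
        ← intervalIntegral.integral_add hi1 (hi2.const_mul _)]
      congr 1
      funext t
      ring
    have hsplit2 : (∫ t in a..b, f t * ((-l^2 * (Real.sin (l * (b - t) / 2)
            * Real.sin (l * (t - a) / 2) / (l * Real.sin (l * (b - a) / 2))) - 1/(b - a) : ℝ) : 𝕂))
        = -((l ^ 2 : ℝ) : 𝕂) * (∫ t in a..b, f t
            * ((Real.sin (l * (b - t) / 2) * Real.sin (l * (t - a) / 2)
              / (l * Real.sin (l * (b - a) / 2)) : ℝ) : 𝕂))
          - ((1/(b - a) : ℝ) : 𝕂) * ∫ t in a..b, f t := by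
      rw [← intervalIntegral.integral_const_mul, ← intervalIntegral.integral_const_mul,
        ← intervalIntegral.integral_sub (hi2.const_mul _) (hi3.const_mul _)]
      congr 1
      funext t
      push_cast
      ring
    rw [hsplit, h, hsplit2]
    have hba' : ((b : ℝ) : 𝕂) - ((a : ℝ) : 𝕂) ≠ 0 := by
      have := (RCLike.ofReal_ne_zero (K := 𝕂)).mpr hba
      push_cast at this
      exact this
    push_cast
    field_simp
    ring
  · intro f hf
    have hba : b - a ≠ 0 := sub_ne_zero.mpr hab.ne'
    have hg : ∀ x : ℝ, HasDerivAt (fun t => (b - t) * (t - a) / (2 * (b - a)))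
        ((a + b - 2*x) / (2 * (b - a))) x := by
      intro x
      have h := (((hasDerivAt_id x).const_sub b).mul ((hasDerivAt_id x).sub_const a)).div_const
        (2 * (b - a))
      refine h.congr_deriv ?_
      simp only [id_eq]
      ring
    have hg' : ∀ x : ℝ, HasDerivAt (fun t => (a + b - 2*t) / (2 * (b - a)))
        (-(1 / (b - a))) x := by
      intro x
      have h := (((hasDerivAt_id x).const_mul 2).const_sub (a + b)).div_const (2 * (b - a))
      refine h.congr_deriv ?_
      field_simp
    have H : (∫ t in a..b, iteratedDerivWithin 2 f (Set.Icc a b) t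
          * (((b - t) * (t - a) / (2 * (b - a)) : ℝ) : 𝕂))
        = (((a + b - 2*a) / (2 * (b - a)) : ℝ) : 𝕂) * f a
          - (((a + b - 2*b) / (2 * (b - a)) : ℝ) : 𝕂) * f b
          + ∫ t in a..b, f t * ((-(1 / (b - a)) : ℝ) : 𝕂) :=
      parts_aux hab f hf
        (fun t => (b - t) * (t - a) / (2 * (b - a)))
        (fun t => (a + b - 2*t) / (2 * (b - a)))
        (fun _ => -(1 / (b - a)))
        hg hg' continuous_const (by simp) (by simp)
    rw [H, intervalIntegral.integral_mul_const]
    have hba' : ((b : ℝ) : 𝕂) - ((a : ℝ) : 𝕂) ≠ 0 := by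
      have := (RCLike.ofReal_ne_zero (K := 𝕂)).mpr hba
      push_cast at this
      exact this
    push_cast
    field_simp
    ring
end

section
/- Let n ∈ ℕ ∪ {0}, let a < b be real numbers and set λ_n := 2τ_n/(b−a). Then for every twice continuously differentiable f : [a,b] → 𝕂, the trapezoidal error E(f) := (f(a)+f(b))/2 − (1/(b−a))∫_a^b f satisfies: |E(f)| ≤ (b−a)²/12 · ‖f″‖_∞ and |E(f)| ≤ (b−a)/8 · ‖f″‖₁ if n = 0; and |E(f)| ≤ ((n+1)nπ / (2τ_n³)) (b−a)² · ‖f″ + λ_n² f‖_∞ and |E(f)| ≤ ((1+|cos τ_n|)/(4τ_n |sin τ_n|)) (b−a) · ‖f″ + λ_n² f‖₁ if n > 0. -/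
open Set intervalIntegral MeasureTheory Real

lemma sin_shift' (j : ℕ) (x : ℝ) : Real.sin (x + j * Real.pi) = (-1)^j * Real.sin x := by
  induction j with
  | zero => simp
  | succ k ih =>
    have h : x + (k+1 : ℕ) * Real.pi = (x + k * Real.pi) + Real.pi := by push_cast; ring
    rw [h, Real.sin_add_pi, ih, pow_succ]
    ring


lemma master {𝕂 : Type*} [RCLike 𝕂] {a b : ℝ} (hab : a < b)
    (K K' K'' : ℝ → ℝ) (μ : ℝ)
    (hK : ∀ t, HasDerivAt K (K' t) t) (hK' : ∀ t, HasDerivAt K' (K'' t) t)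
    (hode : ∀ t, K'' t = -1 - μ * K t)
    (hKa : K a = 0) (hKb : K b = 0)
    (hK'a : K' a = (b - a) / 2) (hK'b : K' b = -((b - a) / 2))
    (f : ℝ → 𝕂) (hf : ContDiffOn ℝ 2 f (Set.Icc a b)) :
    ((b - a : ℝ) : 𝕂) * ((f a + f b) / 2 - ((b - a : ℝ) : 𝕂)⁻¹ * ∫ x in a..b, f x)
      = ∫ t in a..b, K t • (iteratedDerivWithin 2 f (Set.Icc a b) t + μ • f t) := by
  have hs : UniqueDiffOn ℝ (Set.Icc a b) := uniqueDiffOn_Icc hab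
  set s := Set.Icc a b with hsdef
  set f1 := derivWithin f s with hf1def
  set g := iteratedDerivWithin 2 f s with hgdef
  have hf1 : ContDiffOn ℝ 1 f1 s := hf.derivWithin hs (by norm_num)
  have hgeq : ∀ x ∈ s, g x = derivWithin f1 s x := by
    intro x hx
    rw [hgdef, iteratedDerivWithin_succ]
    exact derivWithin_congr (fun y hy => congrFun iteratedDerivWithin_one y)
      (congrFun iteratedDerivWithin_one x)
  have hgcont : ContinuousOn g s := hf.continuousOn_iteratedDerivWithin le_rfl hs
  have hKc : Continuous K := continuous_iff_continuousAt.2 fun t => (hK t).differentiableAt.continuousAt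
  have hK'c : Continuous K' := continuous_iff_continuousAt.2 fun t => (hK' t).differentiableAt.continuousAt
  have hfc : ContinuousOn f s := hf.continuousOn
  have hf1c : ContinuousOn f1 s := hf1.continuousOn
  -- pointwise derivative of F on Ioo
  set F : ℝ → 𝕂 := fun t => K t • f1 t - K' t • f t with hFdef
  set F' : ℝ → 𝕂 := fun t => K t • (g t + μ • f t) + f t with hF'def
  have hFd : ∀ t ∈ Set.Ioo a b, HasDerivAt F (F' t) t := by
    intro t ht
    have hmem : s ∈ nhds t := by
      rw [hsdef]; exact Icc_mem_nhds ht.1 ht.2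
    have hts : t ∈ s := Set.mem_Icc.2 ⟨ht.1.le, ht.2.le⟩
    have hfd : HasDerivAt f (f1 t) t :=
      ((hf.differentiableOn two_ne_zero t hts).hasDerivWithinAt).hasDerivAt hmem
    have hf1d : HasDerivAt f1 (g t) t := by
      rw [hgeq t hts]
      exact ((hf1.differentiableOn one_ne_zero t hts).hasDerivWithinAt).hasDerivAt hmem
    have h1 : HasDerivAt (fun u => K u • f1 u) (K t • g t + K' t • f1 t) t :=
      (hK t).smul hf1d
    have h2 : HasDerivAt (fun u => K' u • f u) (K' t • f1 t + K'' t • f t) t :=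
      (hK' t).smul hfd
    have := h1.sub h2
    refine this.congr_deriv ?_
    rw [hode t]
    module
  have hGint : IntervalIntegrable (fun t => K t • (g t + μ • f t)) volume a b := by
    apply ContinuousOn.intervalIntegrable
    rw [uIcc_of_le hab.le]
    exact hKc.continuousOn.smul (hgcont.add (hfc.const_smul μ))
  have hfint : IntervalIntegrable f volume a b := by
    apply ContinuousOn.intervalIntegrable
    rw [uIcc_of_le hab.le]
    exact hfc
  have hF'int : IntervalIntegrable F' volume a b := by
    rw [hF'def]
    exact hGint.add hfint
  have hFcont : ContinuousOn F s :=
    (hKc.continuousOn.smul hf1c).sub (hK'c.continuousOn.smul hfc)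
  have hftc : ∫ t in a..b, F' t = F b - F a :=
    integral_eq_sub_of_hasDerivAt_of_le hab.le hFcont hFd hF'int
  have hsplit : ∫ t in a..b, F' t = (∫ t in a..b, K t • (g t + μ • f t)) + ∫ t in a..b, f t := by
    rw [hF'def]
    exact integral_add hGint hfint
  have hFb : F b - F a = ((b - a) / 2) • (f a + f b) := by
    rw [hFdef]
    simp only [hKa, hKb, hK'a, hK'b, zero_smul, zero_sub, sub_zero]
    module
  have key : (∫ t in a..b, K t • (g t + μ • f t))
      = ((b - a) / 2) • (f a + f b) - ∫ t in a..b, f t := by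
    rw [← hFb, ← hftc, hsplit]; ring
  rw [key]
  have hba : ((b - a : ℝ) : 𝕂) ≠ 0 :=
    RCLike.ofReal_ne_zero.2 (sub_ne_zero.2 hab.ne')
  rw [mul_sub, ← mul_assoc, mul_inv_cancel₀ hba, one_mul, RCLike.real_smul_eq_coe_mul]
  congr 1
  push_cast
  ring


lemma bound1 {𝕂 : Type*} [RCLike 𝕂] {a b : ℝ} (hab : a < b) (K : ℝ → ℝ) (G : ℝ → 𝕂)
    (hKc : Continuous K) (hGc : ContinuousOn G (Set.Icc a b)) (M : ℝ)
    (hM : ∀ t ∈ Set.Icc a b, ‖G t‖ ≤ M) :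
    ‖∫ t in a..b, K t • G t‖ ≤ (∫ t in a..b, |K t|) * M := by
  have hi1 : IntervalIntegrable (fun t => |K t| * ‖G t‖) volume a b := by
    apply ContinuousOn.intervalIntegrable
    rw [uIcc_of_le hab.le]
    exact (hKc.abs.continuousOn).mul hGc.norm
  have hi2 : IntervalIntegrable (fun t => |K t| * M) volume a b := by
    apply ContinuousOn.intervalIntegrable
    rw [uIcc_of_le hab.le]
    exact (hKc.abs.continuousOn).mul continuousOn_const
  calc ‖∫ t in a..b, K t • G t‖ ≤ ∫ t in a..b, ‖K t • G t‖ :=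
        intervalIntegral.norm_integral_le_integral_norm hab.le
    _ = ∫ t in a..b, |K t| * ‖G t‖ := by
        apply integral_congr; intro x _; simp [norm_smul]
    _ ≤ ∫ t in a..b, |K t| * M := by
        apply integral_mono_on hab.le hi1 hi2
        intro t ht
        exact mul_le_mul_of_nonneg_left (hM t ht) (abs_nonneg _)
    _ = (∫ t in a..b, |K t|) * M := integral_mul_const M _

lemma bound2 {𝕂 : Type*} [RCLike 𝕂] {a b : ℝ} (hab : a < b) (K : ℝ → ℝ) (G : ℝ → 𝕂)
    (hKc : Continuous K) (hGc : ContinuousOn G (Set.Icc a b)) (S : ℝ)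
    (hS : ∀ t ∈ Set.Icc a b, |K t| ≤ S) :
    ‖∫ t in a..b, K t • G t‖ ≤ S * ∫ t in a..b, ‖G t‖ := by
  have hi1 : IntervalIntegrable (fun t => |K t| * ‖G t‖) volume a b := by
    apply ContinuousOn.intervalIntegrable
    rw [uIcc_of_le hab.le]
    exact (hKc.abs.continuousOn).mul hGc.norm
  have hi2 : IntervalIntegrable (fun t => S * ‖G t‖) volume a b := by
    apply ContinuousOn.intervalIntegrable
    rw [uIcc_of_le hab.le]
    exact continuousOn_const.mul hGc.norm
  calc ‖∫ t in a..b, K t • G t‖ ≤ ∫ t in a..b, ‖K t • G t‖ :=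
        intervalIntegral.norm_integral_le_integral_norm hab.le
    _ = ∫ t in a..b, |K t| * ‖G t‖ := by
        apply integral_congr; intro x _; simp [norm_smul]
    _ ≤ ∫ t in a..b, S * ‖G t‖ := by
        apply integral_mono_on hab.le hi1 hi2
        intro t ht
        exact mul_le_mul_of_nonneg_right (hS t ht) (norm_nonneg _)
    _ = S * ∫ t in a..b, ‖G t‖ := integral_const_mul S _

lemma int_poly (a b : ℝ) : (∫ t in a..b, (t-a)*(b-t)) = (b-a)^3/6 := by
  have h : (∫ t in a..b, (t-a)*(b-t)) = ∫ t in a..b, (-(a*b) + ((a+b)*t - t^2)) := by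
    apply integral_congr; intro x _; ring
  rw [h, intervalIntegral.integral_add, intervalIntegral.integral_sub,
    intervalIntegral.integral_const_mul, intervalIntegral.integral_const, integral_id,
    integral_pow]
  · simp only [smul_eq_mul]; push_cast; ring
  · exact (continuous_const.mul continuous_id).intervalIntegrable a b
  · exact (continuous_pow 2).intervalIntegrable a b
  · exact continuous_const.intervalIntegrable a b
  · exact ((continuous_const.mul continuous_id).sub (continuous_pow 2)).intervalIntegrable a b

lemma cos_shift (j : ℕ) (x : ℝ) : Real.cos (x + j * Real.pi) = (-1)^j * Real.cos x := by
  induction j with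
  | zero => simp
  | succ k ih =>
    have : x + (k+1 : ℕ) * Real.pi = (x + k * Real.pi) + Real.pi := by push_cast; ring
    rw [this, Real.cos_add_pi, ih, pow_succ]
    ring


lemma lemA (α : ℝ) (hα0 : 0 < α) (hα : α < Real.pi/2) (ε : ℝ) (hε : ε = 1 ∨ ε = -1) :
    ∫ u in (0:ℝ)..Real.pi, |Real.cos u - ε * Real.cos α| =
      2*Real.sin α + (Real.pi - 2*α)*Real.cos α := by
  have hπ := Real.pi_pos
  have hcont : Continuous (fun u => |Real.cos u - ε * Real.cos α|) :=
    (Real.continuous_cos.sub continuous_const).abs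
  rcases hε with hε | hε
  · subst hε
    have hαπ : α ≤ Real.pi := by linarith
    rw [← integral_add_adjacent_intervals (a := (0:ℝ)) (b := α) (c := Real.pi)
      (hcont.intervalIntegrable _ _) (hcont.intervalIntegrable _ _)]
    have h1 : ∫ u in (0:ℝ)..α, |Real.cos u - 1 * Real.cos α|
        = ∫ u in (0:ℝ)..α, (Real.cos u - Real.cos α) := by
      apply integral_congr
      intro x hx
      rw [uIcc_of_le hα0.le] at hx
      dsimp only
      rw [one_mul, abs_of_nonneg]
      have := Real.cos_le_cos_of_nonneg_of_le_pi hx.1 hαπ hx.2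
      linarith
    have h2 : ∫ u in α..Real.pi, |Real.cos u - 1 * Real.cos α|
        = ∫ u in α..Real.pi, (Real.cos α - Real.cos u) := by
      apply integral_congr
      intro x hx
      rw [uIcc_of_le hαπ] at hx
      dsimp only
      rw [one_mul, abs_of_nonpos]
      · ring
      have := Real.cos_le_cos_of_nonneg_of_le_pi hα0.le hx.2 hx.1
      linarith
    rw [h1, h2, intervalIntegral.integral_sub (Real.continuous_cos.intervalIntegrable _ _)
      (continuous_const.intervalIntegrable _ _),
      intervalIntegral.integral_sub (continuous_const.intervalIntegrable _ _)
      (Real.continuous_cos.intervalIntegrable _ _),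
      integral_cos, integral_cos, intervalIntegral.integral_const,
      intervalIntegral.integral_const]
    simp [smul_eq_mul]
    ring
  · subst hε
    have hαπ : Real.pi - α ≤ Real.pi := by linarith
    have h0πα : (0:ℝ) ≤ Real.pi - α := by linarith
    rw [← integral_add_adjacent_intervals (a := (0:ℝ)) (b := Real.pi - α) (c := Real.pi)
      (hcont.intervalIntegrable _ _) (hcont.intervalIntegrable _ _)]
    have h1 : ∫ u in (0:ℝ)..(Real.pi - α), |Real.cos u - (-1) * Real.cos α|
        = ∫ u in (0:ℝ)..(Real.pi - α), (Real.cos u + Real.cos α) := by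
      apply integral_congr
      intro x hx
      rw [uIcc_of_le h0πα] at hx
      dsimp only
      rw [abs_of_nonneg]
      · ring
      have := Real.cos_le_cos_of_nonneg_of_le_pi hx.1 hαπ hx.2
      rw [Real.cos_pi_sub] at this
      linarith
    have h2 : ∫ u in (Real.pi - α)..Real.pi, |Real.cos u - (-1) * Real.cos α|
        = ∫ u in (Real.pi - α)..Real.pi, (-Real.cos α - Real.cos u) := by
      apply integral_congr
      intro x hx
      rw [uIcc_of_le hαπ] at hx
      dsimp only
      rw [abs_of_nonpos]
      · ring
      have := Real.cos_le_cos_of_nonneg_of_le_pi h0πα hx.2 hx.1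
      rw [Real.cos_pi_sub] at this
      linarith
    rw [h1, h2, intervalIntegral.integral_add (Real.continuous_cos.intervalIntegrable _ _)
      (continuous_const.intervalIntegrable _ _),
      intervalIntegral.integral_sub (continuous_const.intervalIntegrable _ _)
      (Real.continuous_cos.intervalIntegrable _ _),
      integral_cos, integral_cos, intervalIntegral.integral_const,
      intervalIntegral.integral_const]
    simp [smul_eq_mul, Real.sin_pi_sub]
    ring

lemma cos_shift' (j : ℕ) (x : ℝ) : Real.cos (x + j * Real.pi) = (-1)^j * Real.cos x := by
  induction j with
  | zero => simp
  | succ k ih =>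
    have h : x + (k+1 : ℕ) * Real.pi = (x + k * Real.pi) + Real.pi := by push_cast; ring
    rw [h, Real.cos_add_pi, ih, pow_succ]
    ring

lemma J_eq (n : ℕ) (α : ℝ) (hα0 : 0 < α) (hα : α < Real.pi/2) :
    (∫ u in (0:ℝ)..(n*Real.pi + α), |Real.cos u - (-1)^n * Real.cos α|)
      = n*(2*Real.sin α + (Real.pi - 2*α)*Real.cos α) + (Real.sin α - α*Real.cos α) := by
  have hπ := Real.pi_pos
  set h : ℝ → ℝ := fun u => |Real.cos u - (-1)^n * Real.cos α| with hh
  have hcont : Continuous h := (Real.continuous_cos.sub continuous_const).abs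
  have hαπ : α ≤ Real.pi := by linarith
  -- each middle interval
  have hmid : ∀ j : ℕ, (∫ u in ((j:ℝ)*Real.pi)..(((j:ℕ)+1:ℝ)*Real.pi), h u)
      = 2*Real.sin α + (Real.pi - 2*α)*Real.cos α := by
    intro j
    have hshift : (∫ u in (0:ℝ)..Real.pi, h (u + j*Real.pi))
        = ∫ u in ((j:ℝ)*Real.pi)..(((j:ℕ)+1:ℝ)*Real.pi), h u := by
      rw [integral_comp_add_right h ((j:ℝ)*Real.pi)]
      norm_num
      ring_nf
    rw [← hshift]
    have heq : ∀ u : ℝ, h (u + j*Real.pi) = |Real.cos u - (-1)^(n+j) * Real.cos α| := by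
      intro u
      rw [hh]
      dsimp only
      rw [cos_shift']
      have hjj : ((-1:ℝ))^j * ((-1:ℝ))^j = 1 := by
        rw [← pow_add]
        exact Even.neg_one_pow ⟨j, by ring⟩
      rw [show (-1:ℝ)^j * Real.cos u - (-1)^n * Real.cos α
          = (-1)^j * (Real.cos u - (-1)^(n+j) * Real.cos α) by
        rw [pow_add, mul_sub, show (-1:ℝ)^j * ((-1)^n * (-1)^j * Real.cos α)
          = ((-1:ℝ)^j * (-1)^j) * ((-1)^n * Real.cos α) by ring, hjj]; ring]
      rw [abs_mul, abs_pow, abs_neg, abs_one, one_pow, one_mul]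
    rw [integral_congr (fun x _ => heq x)]
    apply lemA α hα0 hα
    rcases Nat.even_or_odd (n+j) with he | ho
    · left; exact he.neg_one_pow
    · right; exact ho.neg_one_pow
  -- sum of middle intervals
  have hsum : (∫ u in (0:ℝ)..((n:ℝ)*Real.pi), h u)
      = n*(2*Real.sin α + (Real.pi - 2*α)*Real.cos α) := by
    have := intervalIntegral.sum_integral_adjacent_intervals (μ := volume)
      (a := fun j : ℕ => (j:ℝ)*Real.pi) (n := n) (f := h)
      (fun k _ => hcont.intervalIntegrable _ _)
    simp only [Nat.cast_zero, zero_mul] at this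
    rw [← this]
    rw [Finset.sum_congr rfl (fun j _ => by
      have := hmid j
      push_cast at this ⊢
      exact this)]
    rw [Finset.sum_const, Finset.card_range, nsmul_eq_mul]
  -- tail
  have htail : (∫ u in ((n:ℝ)*Real.pi)..((n:ℝ)*Real.pi + α), h u)
      = Real.sin α - α*Real.cos α := by
    have hshift : (∫ u in (0:ℝ)..α, h (u + n*Real.pi))
        = ∫ u in ((n:ℝ)*Real.pi)..((n:ℝ)*Real.pi + α), h u := by
      rw [integral_comp_add_right h ((n:ℝ)*Real.pi)]
      norm_num
      ring_nf
    rw [← hshift]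
    have heq2 : ∫ u in (0:ℝ)..α, h (u + n*Real.pi) = ∫ u in (0:ℝ)..α, (Real.cos u - Real.cos α) := by
      apply integral_congr
      intro x hx
      rw [uIcc_of_le hα0.le] at hx
      rw [hh]
      dsimp only
      rw [cos_shift']
      rw [show (-1:ℝ)^n * Real.cos x - (-1)^n * Real.cos α
          = (-1)^n * (Real.cos x - Real.cos α) by ring]
      rw [abs_mul, abs_pow, abs_neg, abs_one, one_pow, one_mul, abs_of_nonneg]
      have := Real.cos_le_cos_of_nonneg_of_le_pi hx.1 hαπ hx.2
      linarith
    rw [heq2, intervalIntegral.integral_sub (Real.continuous_cos.intervalIntegrable _ _)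
      (continuous_const.intervalIntegrable _ _), integral_cos, intervalIntegral.integral_const]
    simp [smul_eq_mul]
  rw [← integral_add_adjacent_intervals (a := (0:ℝ)) (b := (n:ℝ)*Real.pi)
    (c := (n:ℝ)*Real.pi + α) (hcont.intervalIntegrable _ _) (hcont.intervalIntegrable _ _),
    hsum, htail]

/-- Error estimates for the trapezoidal rule.  Here `τ = τ_n` is the
unique fixed point of `tan` in `((n−1/2)π,(n+1/2)π)` (so `τ₀ = 0`), `λ_n = 2τ_n/(b−a)`,
`‖h‖_∞ = sup_{t∈[a,b]} |h(t)|` and `‖h‖₁ = ∫_a^b |h(t)| dt`. -/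
theorem stmt_16 {𝕂 : Type*} [RCLike 𝕂] (n : ℕ)
    (a b : ℝ) (hab : a < b)
    (τ : ℝ)
    (hτ : τ ∈ Set.Ioo (((n : ℝ) - 1/2) * Real.pi) (((n : ℝ) + 1/2) * Real.pi))
    (hfix : Real.tan τ = τ)
    (l : ℝ) (hl : l = 2 * τ / (b - a))
    (f : ℝ → 𝕂) (hf : ContDiffOn ℝ 2 f (Set.Icc a b))
    (E : 𝕂)
    (hE : E = (f a + f b) / 2 - (((b - a : ℝ)) : 𝕂)⁻¹ * ∫ x in a..b, f x) :
    (n = 0 →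
      ‖E‖ ≤ (b - a) ^ 2 / 12 *
          sSup ((fun t => ‖iteratedDerivWithin 2 f (Set.Icc a b) t‖) '' Set.Icc a b) ∧
      ‖E‖ ≤ (b - a) / 8 * ∫ t in a..b, ‖iteratedDerivWithin 2 f (Set.Icc a b) t‖) ∧
    (0 < n →
      ‖E‖ ≤ ((n : ℝ) + 1) * (n : ℝ) * Real.pi / (2 * τ ^ 3) * (b - a) ^ 2 *
          sSup ((fun t =>
            ‖iteratedDerivWithin 2 f (Set.Icc a b) t + ((l ^ 2 : ℝ) : 𝕂) * f t‖) '' Set.Icc a b) ∧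
      ‖E‖ ≤ (1 + |Real.cos τ|) / (4 * τ * |Real.sin τ|) * (b - a) *
          ∫ t in a..b, ‖iteratedDerivWithin 2 f (Set.Icc a b) t + ((l ^ 2 : ℝ) : 𝕂) * f t‖) := by
  have hπ := Real.pi_pos
  have hba0 : (0:ℝ) < b - a := sub_pos.2 hab
  have hs : UniqueDiffOn ℝ (Set.Icc a b) := uniqueDiffOn_Icc hab
  have hgcont : ContinuousOn (iteratedDerivWithin 2 f (Set.Icc a b)) (Set.Icc a b) :=
    hf.continuousOn_iteratedDerivWithin le_rfl hs
  set g := iteratedDerivWithin 2 f (Set.Icc a b) with hg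
  constructor
  · -- n = 0 case
    intro _
    set K : ℝ → ℝ := fun t => (t-a)*(b-t)/2 with hK
    set K' : ℝ → ℝ := fun t => (a + b - 2*t)/2 with hK'
    have hKd : ∀ t, HasDerivAt K (K' t) t := by
      intro t
      have := (((hasDerivAt_id t).sub_const a).mul
        ((hasDerivAt_const t b).sub (hasDerivAt_id t))).div_const 2
      refine this.congr_deriv ?_
      simp only [hK', id_eq, Pi.sub_apply]
      ring
    have hK'd : ∀ t, HasDerivAt K' ((fun _ : ℝ => (-1:ℝ)) t) t := by
      intro t
      have := (((hasDerivAt_id t).const_mul (2:ℝ)).const_sub (a+b)).div_const 2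
      refine this.congr_deriv ?_
      norm_num
    have hiden := master (𝕂 := 𝕂) hab K K' (fun _ => (-1:ℝ)) 0 hKd hK'd
      (fun t => by ring) (by rw [hK]; ring) (by rw [hK]; ring)
      (by rw [hK']; ring) (by rw [hK']; ring) f hf
    have hiden2 : ((b - a : ℝ) : 𝕂) * E = ∫ t in a..b, K t • g t := by
      rw [hE, hiden]
      apply integral_congr
      intro x _
      simp
      rfl
    have hnorm : (b - a) * ‖E‖ = ‖∫ t in a..b, K t • g t‖ := by
      rw [← hiden2, norm_mul, RCLike.norm_ofReal, abs_of_pos hba0]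
    have hKc : Continuous K := by
      rw [hK]; fun_prop
    constructor
    · -- sup bound
      set M := sSup ((fun t => ‖g t‖) '' Set.Icc a b) with hM
      have hMb : BddAbove ((fun t => ‖g t‖) '' Set.Icc a b) :=
        (isCompact_Icc.image_of_continuousOn hgcont.norm).bddAbove
      have hMle : ∀ t ∈ Set.Icc a b, ‖g t‖ ≤ M := fun t ht => le_csSup hMb ⟨t, ht, rfl⟩
      have hb1 := bound1 hab K g hKc hgcont M hMle
      have hintK : (∫ t in a..b, |K t|) = (b-a)^3/12 := by
        have h1 : (∫ t in a..b, |K t|) = ∫ t in a..b, (t-a)*(b-t)/2 := by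
          apply integral_congr
          intro x hx
          rw [uIcc_of_le hab.le] at hx
          rw [hK]
          dsimp only
          rw [abs_of_nonneg]
          have h1 := sub_nonneg.2 hx.1
          have h2 := sub_nonneg.2 hx.2
          positivity
        rw [h1, intervalIntegral.integral_div, int_poly]
        ring
      refine le_of_mul_le_mul_left ?_ hba0
      calc (b-a) * ‖E‖ = ‖∫ t in a..b, K t • g t‖ := hnorm
        _ ≤ (∫ t in a..b, |K t|) * M := hb1
        _ = (b-a) * ((b - a) ^ 2 / 12 * M) := by rw [hintK]; ring
    · -- L1 bound
      have hS : ∀ t ∈ Set.Icc a b, |K t| ≤ (b-a)^2/8 := by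
        intro t ht
        rw [hK]
        dsimp only
        rw [abs_of_nonneg]
        · nlinarith [ht.1, ht.2, sq_nonneg (a + b - 2*t)]
        have h1 := sub_nonneg.2 ht.1
        have h2 := sub_nonneg.2 ht.2
        positivity
      have hb2 := bound2 hab K g hKc hgcont ((b-a)^2/8) hS
      refine le_of_mul_le_mul_left ?_ hba0
      calc (b-a) * ‖E‖ = ‖∫ t in a..b, K t • g t‖ := hnorm
        _ ≤ (b-a)^2/8 * ∫ t in a..b, ‖g t‖ := hb2
        _ = (b-a) * ((b-a)/8 * ∫ t in a..b, ‖g t‖) := by ring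
  · intro hn
    have hn1 : (1:ℝ) ≤ (n:ℝ) := by exact_mod_cast hn
    have hτpos : 0 < τ := by
      have h1 := hτ.1
      nlinarith
    set m : ℝ := (a+b)/2 with hm
    set α : ℝ := τ - n*Real.pi with hα
    have hτeq : τ = α + n*Real.pi := by rw [hα]; ring
    have hα2 : α < Real.pi/2 := by
      have h2 := hτ.2
      have : ((n:ℝ) + 1/2)*Real.pi = n*Real.pi + Real.pi/2 := by ring
      rw [this] at h2
      rw [hα]; linarith
    have hαlo : -(Real.pi/2) < α := by
      have h1 := hτ.1
      have : ((n:ℝ) - 1/2)*Real.pi = n*Real.pi - Real.pi/2 := by ring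
      rw [this] at h1
      rw [hα]; linarith
    have htanα : Real.tan α = τ := by
      have hper := Real.tan_periodic.sub_nat_mul_eq (x := τ) (n := n)
      rw [hα, hper, hfix]
    have hcosα : 0 < Real.cos α := Real.cos_pos_of_mem_Ioo ⟨hαlo, hα2⟩
    have hα0 : 0 < α := by
      by_contra hcon
      push_neg at hcon
      have hsin : Real.sin α ≤ 0 :=
        Real.sin_nonpos_of_nonpos_of_neg_pi_le hcon (by linarith)
      have : Real.tan α ≤ 0 := by
        rw [Real.tan_eq_sin_div_cos]
        exact div_nonpos_of_nonpos_of_nonneg hsin hcosα.le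
      rw [htanα] at this
      linarith
    have hsinα : Real.sin α = τ * Real.cos α := by
      have h := Real.tan_eq_sin_div_cos α
      rw [htanα] at h
      field_simp at h
      linarith
    have hsinαpos : 0 < Real.sin α := by rw [hsinα]; positivity
    have hcosτ : Real.cos τ = (-1)^n * Real.cos α := by
      rw [hτeq]; exact cos_shift' n α
    have hsinτeq : Real.sin τ = (-1)^n * Real.sin α := by
      rw [hτeq]; exact sin_shift' n α
    have habsc : |Real.cos τ| = Real.cos α := by
      rw [hcosτ, abs_mul, abs_pow, abs_neg, abs_one, one_pow, one_mul, abs_of_pos hcosα]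
    have habss : |Real.sin τ| = Real.sin α := by
      rw [hsinτeq, abs_mul, abs_pow, abs_neg, abs_one, one_pow, one_mul, abs_of_pos hsinαpos]
    have hc0 : Real.cos τ ≠ 0 := by
      intro h
      rw [h, abs_zero] at habsc
      linarith
    have hl0 : 0 < l := by
      rw [hl]; positivity
    have hsinτc : Real.sin τ = τ * Real.cos τ := by
      have h := Real.tan_eq_sin_div_cos τ
      rw [hfix] at h
      field_simp at h
      linarith
    have hlba : l * (b - a) = 2*τ := by
      rw [hl]; field_simp
    set c : ℝ := Real.cos τ with hc
    set K : ℝ → ℝ := fun t => (Real.cos (l*(t-m)) - c)/(l^2*c) with hKdef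
    set K' : ℝ → ℝ := fun t => -(Real.sin (l*(t-m))/(l*c)) with hK'def
    set K'' : ℝ → ℝ := fun t => -(Real.cos (l*(t-m))/c) with hK''def
    have hu : ∀ t : ℝ, HasDerivAt (fun t : ℝ => l*(t-m)) l t := by
      intro t
      simpa using ((hasDerivAt_id t).sub_const m).const_mul l
    have hKd : ∀ t, HasDerivAt K (K' t) t := by
      intro t
      have h1 : HasDerivAt (fun t : ℝ => Real.cos (l*(t-m))) (-Real.sin (l*(t-m)) * l) t :=
        (hu t).cos
      have h2 := (h1.sub_const c).div_const (l^2*c)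
      refine h2.congr_deriv ?_
      rw [hK'def]
      dsimp only
      field_simp
    have hK'd : ∀ t, HasDerivAt K' (K'' t) t := by
      intro t
      have h1 : HasDerivAt (fun t : ℝ => Real.sin (l*(t-m))) (Real.cos (l*(t-m)) * l) t :=
        (hu t).sin
      have h2 := (h1.div_const (l*c)).neg
      refine h2.congr_deriv ?_
      rw [hK''def]
      dsimp only
      field_simp
    have hode : ∀ t, K'' t = -1 - l^2 * K t := by
      intro t
      rw [hK''def, hKdef]
      dsimp only
      field_simp
      ring
    have ham : l*(a-m) = -τ := by
      have : l*(a-m) = -(l*(b-a))/2 := by rw [hm]; ring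
      rw [this, hlba]; ring
    have hbm : l*(b-m) = τ := by
      have : l*(b-m) = (l*(b-a))/2 := by rw [hm]; ring
      rw [this, hlba]; ring
    have hKa : K a = 0 := by
      rw [hKdef]; dsimp only
      rw [ham, Real.cos_neg, hc, sub_self, zero_div]
    have hKb : K b = 0 := by
      rw [hKdef]; dsimp only
      rw [hbm, hc, sub_self, zero_div]
    have hK'a : K' a = (b-a)/2 := by
      rw [hK'def]; dsimp only
      rw [ham, Real.sin_neg, hsinτc]
      field_simp
      linear_combination (-1) * hlba
    have hK'b : K' b = -((b-a)/2) := by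
      rw [hK'def]; dsimp only
      rw [hbm, hsinτc]
      field_simp
      linear_combination hlba
    have hiden := master (𝕂 := 𝕂) hab K K' K'' (l^2) hKd hK'd hode hKa hKb hK'a hK'b f hf
    have hGc : ContinuousOn (fun t => g t + (l^2 : ℝ) • f t) (Set.Icc a b) :=
      hgcont.add (hf.continuousOn.const_smul _)
    have hiden2 : ((b-a:ℝ):𝕂) * E = ∫ t in a..b, K t • (g t + (l^2 : ℝ) • f t) := by
      rw [hE, hiden, hg]
    have hnorm : (b - a) * ‖E‖ = ‖∫ t in a..b, K t • (g t + (l^2 : ℝ) • f t)‖ := by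
      rw [← hiden2, norm_mul, RCLike.norm_ofReal, abs_of_pos hba0]
    have hKc : Continuous K := by
      rw [hKdef]; fun_prop
    -- the value of the integral of |cos u - c| over 0..τ
    have hJ : (∫ u in (0:ℝ)..τ, |Real.cos u - c|) = Real.cos α * (2*n*(n+1)*Real.pi) := by
      have hJe := J_eq n α hα0 hα2
      rw [show τ = (n:ℝ)*Real.pi + α by rw [hτeq]; ring, hcosτ, hJe, hsinα, hτeq]
      ring
    -- change of variables
    have hcos_int : (∫ t in a..b, |Real.cos (l*(t-m)) - c|)
        = l⁻¹ * (2 * (Real.cos α * (2*n*(n+1)*Real.pi))) := by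
      have hfun : (fun x : ℝ => |Real.cos (l*x + -(l*m)) - c|)
          = fun x => |Real.cos (l*(x-m)) - c| := by
        funext x
        rw [show l*x + -(l*m) = l*(x-m) by ring]
      have hstep1 := intervalIntegral.integral_comp_mul_add
        (fun u => |Real.cos u - c|) hl0.ne' (-(l*m)) (a := a) (b := b)
      rw [hfun] at hstep1
      have hea : l*a + -(l*m) = -τ := by
        rw [show l*a + -(l*m) = l*(a-m) by ring, ham]
      have heb : l*b + -(l*m) = τ := by
        rw [show l*b + -(l*m) = l*(b-m) by ring, hbm]
      rw [hea, heb] at hstep1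
      have hintc : ∀ (x y : ℝ), IntervalIntegrable (fun u => |Real.cos u - c|) volume x y :=
        fun x y => ((Real.continuous_cos.sub continuous_const).abs).intervalIntegrable x y
      have hneg : (∫ u in (-τ)..(0:ℝ), |Real.cos u - c|) = ∫ u in (0:ℝ)..τ, |Real.cos u - c| := by
        have h := intervalIntegral.integral_comp_neg (fun u => |Real.cos u - c|) (a := (0:ℝ)) (b := τ)
        simp only [Real.cos_neg, neg_zero] at h
        exact h.symm
      have hsplit : (∫ u in (-τ)..τ, |Real.cos u - c|)
          = 2 * ∫ u in (0:ℝ)..τ, |Real.cos u - c| := by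
        rw [← integral_add_adjacent_intervals (a := -τ) (b := (0:ℝ)) (c := τ)
          (hintc _ _) (hintc _ _), hneg]
        ring
      rw [hstep1, hsplit, hJ, smul_eq_mul]
    -- integral of |K|
    have hintK : (∫ t in a..b, |K t|)
        = (∫ t in a..b, |Real.cos (l*(t-m)) - c|) / (l^2 * Real.cos α) := by
      have : (∫ t in a..b, |K t|) = ∫ t in a..b, |Real.cos (l*(t-m)) - c| / (l^2 * Real.cos α) := by
        apply integral_congr
        intro x _
        rw [hKdef]
        dsimp only
        rw [abs_div, abs_mul, abs_of_pos (by positivity : (0:ℝ) < l^2), hc, habsc]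
      rw [this, intervalIntegral.integral_div]
    have hcast : ∀ t, ((l^2 : ℝ) : 𝕂) * f t = (l^2 : ℝ) • f t :=
      fun t => (RCLike.real_smul_eq_coe_mul (l^2) (f t)).symm
    constructor
    · -- sup bound
      simp only [hcast]
      set M := sSup ((fun t => ‖g t + (l^2 : ℝ) • f t‖) '' Set.Icc a b) with hM
      have hMb : BddAbove ((fun t => ‖g t + (l^2 : ℝ) • f t‖) '' Set.Icc a b) :=
        (isCompact_Icc.image_of_continuousOn hGc.norm).bddAbove
      have hMle : ∀ t ∈ Set.Icc a b, ‖g t + (l^2 : ℝ) • f t‖ ≤ M := fun t ht =>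
        le_csSup hMb ⟨t, ht, rfl⟩
      have hb1 := bound1 hab K _ hKc hGc M hMle
      refine le_of_mul_le_mul_left ?_ hba0
      calc (b-a) * ‖E‖ = ‖∫ t in a..b, K t • (g t + (l^2 : ℝ) • f t)‖ := hnorm
        _ ≤ (∫ t in a..b, |K t|) * M := hb1
        _ = (b-a) * (((n : ℝ) + 1) * (n : ℝ) * Real.pi / (2 * τ ^ 3) * (b - a) ^ 2 * M) := by
            rw [hintK, hcos_int, hl]
            have hba' : b - a ≠ 0 := hba0.ne'
            have hτ' : τ ≠ 0 := hτpos.ne'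
            field_simp
    · -- L1 bound
      have hS : ∀ t ∈ Set.Icc a b, |K t| ≤ (1 + Real.cos α)/(l^2 * Real.cos α) := by
        intro t _
        rw [hKdef]
        dsimp only
        rw [abs_div, abs_mul, abs_of_pos (by positivity : (0:ℝ) < l^2), hc, habsc]
        apply div_le_div_of_nonneg_right ?_ (by positivity)
        rw [sub_eq_add_neg]
        refine (abs_add_le _ _).trans ?_
        rw [abs_neg, habsc]
        have h1 := Real.abs_cos_le_one (l*(t-m))
        linarith
      have hb2 := bound2 hab K _ hKc hGc _ hS
      simp only [hcast]
      refine le_of_mul_le_mul_left ?_ hba0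
      calc (b-a) * ‖E‖ = ‖∫ t in a..b, K t • (g t + (l^2 : ℝ) • f t)‖ := hnorm
        _ ≤ (1 + Real.cos α)/(l^2 * Real.cos α) * ∫ t in a..b, ‖g t + (l^2 : ℝ) • f t‖ := hb2
        _ = (b-a) * ((1 + |Real.cos τ|) / (4 * τ * |Real.sin τ|) * (b - a) *
              ∫ t in a..b, ‖g t + (l^2 : ℝ) • f t‖) := by
            rw [habsc, habss, hsinα, hl]
            have hba' : b - a ≠ 0 := hba0.ne'
            have hτ' : τ ≠ 0 := hτpos.ne'
            field_simp
            ring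
end

section
/- Let a < b be real numbers. Then for every four-times continuously differentiable f : [a,b] → 𝕂, the Simpson-rule error E(f) := (1/6) f(a) + (2/3) f((a+b)/2) + (1/6) f(b) − (1/(b−a))∫_a^b f satisfies both |E(f)| ≤ (b−a)³/1152 · ‖f⁗‖₁ and |E(f)| ≤ (b−a)⁴/2880 · ‖f⁗‖_∞. -/
set_option maxHeartbeats 1000000
open Set intervalIntegral MeasureTheory

lemma hd_pow' (c : ℝ) (n : ℕ) (t : ℝ) :
    HasDerivAt (fun t : ℝ => (c - t)^n) (-(n * (c - t)^(n-1))) t := by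
  have h := ((hasDerivAt_id t).const_sub c).pow n
  simp only [id_eq] at h
  refine h.congr_deriv ?_
  ring

lemma parts4 {𝕂 : Type*} [RCLike 𝕂] {a b c d : ℝ} (hab : a < b) (hcd : c ≤ d)
    (hac : a ≤ c) (hdb : d ≤ b)
    {f : ℝ → 𝕂} (hf : ContDiffOn ℝ 4 f (Set.Icc a b))
    {p q r s : ℝ → ℝ}
    (hp : ∀ t, HasDerivAt p (q t) t) (hq : ∀ t, HasDerivAt q (r t) t)
    (hr : ∀ t, HasDerivAt r (s t) t) (hs : ∀ t, HasDerivAt s (-(b-a)⁻¹) t) :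
    ∫ t in c..d, p t • iteratedDerivWithin 4 f (Set.Icc a b) t
      = (p d • iteratedDerivWithin 3 f (Set.Icc a b) d
          - q d • iteratedDerivWithin 2 f (Set.Icc a b) d
          + r d • iteratedDerivWithin 1 f (Set.Icc a b) d
          - s d • f d - (b-a)⁻¹ • ∫ x in a..d, f x)
        - (p c • iteratedDerivWithin 3 f (Set.Icc a b) c
          - q c • iteratedDerivWithin 2 f (Set.Icc a b) c
          + r c • iteratedDerivWithin 1 f (Set.Icc a b) c
          - s c • f c - (b-a)⁻¹ • ∫ x in a..c, f x) := by
  have hu : UniqueDiffOn ℝ (Set.Icc a b) := uniqueDiffOn_Icc hab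
  set D : ℕ → ℝ → 𝕂 := fun k => iteratedDerivWithin k f (Set.Icc a b) with hD
  have hsub : Set.Icc c d ⊆ Set.Icc a b := Icc_subset_Icc hac hdb
  have hCD : ∀ k : ℕ, k ≤ 4 → ContinuousOn (D k) (Set.Icc a b) := fun k hk =>
    hf.continuousOn_iteratedDerivWithin (by exact_mod_cast hk) hu
  have hfc : ContinuousOn f (Set.Icc a b) := hf.continuousOn
  have hioo : Set.Ioo c d ⊆ Set.Ioo a b := Ioo_subset_Ioo hac hdb
  have hderivD : ∀ k : ℕ, k < 4 → ∀ t ∈ Set.Ioo a b, HasDerivAt (D k) (D (k+1) t) t := by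
    intro k hk t ht
    have htm : t ∈ Set.Icc a b := Ioo_subset_Icc_self ht
    have hdiff : DifferentiableOn ℝ (D k) (Set.Icc a b) :=
      hf.differentiableOn_iteratedDerivWithin (by exact_mod_cast hk) hu
    have h1 : HasDerivWithinAt (D k) (derivWithin (D k) (Set.Icc a b) t) (Set.Icc a b) t :=
      (hdiff t htm).hasDerivWithinAt
    have h2 := h1.hasDerivAt (Icc_mem_nhds ht.1 ht.2)
    rwa [hD, ← iteratedDerivWithin_succ] at h2
  have hfD1 : ∀ t ∈ Set.Ioo a b, HasDerivAt f (D 1 t) t := by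
    intro t ht
    have := hderivD 0 (by norm_num) t ht
    simp only [hD, iteratedDerivWithin_zero] at this
    exact this
  have hprim : ∀ t ∈ Set.Ioo a b, HasDerivAt (fun u => ∫ x in a..u, f x) (f t) t := by
    intro t ht
    apply intervalIntegral.integral_hasDerivAt_right
    · apply ContinuousOn.intervalIntegrable
      rw [uIcc_of_le ht.1.le]
      exact hfc.mono (Icc_subset_Icc le_rfl ht.2.le)
    · exact AEStronglyMeasurable.stronglyMeasurableAtFilter_of_mem
        (hfc.aestronglyMeasurable measurableSet_Icc) (Icc_mem_nhds ht.1 ht.2)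
    · exact hfc.continuousAt (Icc_mem_nhds ht.1 ht.2)
  -- derivative of G
  have hG : ∀ t ∈ Set.Ioo c d, HasDerivAt (fun t =>
      p t • D 3 t - q t • D 2 t + r t • D 1 t - s t • f t - (b-a)⁻¹ • ∫ x in a..t, f x)
      (p t • D 4 t) t := by
    intro t ht
    have ht' := hioo ht
    have h1 := (hp t).smul (hderivD 3 (by norm_num) t ht')
    have h2 := (hq t).smul (hderivD 2 (by norm_num) t ht')
    have h3 := (hr t).smul (hderivD 1 (by norm_num) t ht')
    have h4 := (hs t).smul (hfD1 t ht')
    have h5 := (hprim t ht').const_smul ((b-a)⁻¹)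
    have := (((h1.sub h2).add h3).sub h4).sub h5
    refine this.congr_deriv ?_
    module
  -- continuity of G on [c,d]
  have hGc : ContinuousOn (fun t =>
      p t • D 3 t - q t • D 2 t + r t • D 1 t - s t • f t - (b-a)⁻¹ • ∫ x in a..t, f x)
      (Set.Icc c d) := by
    have cp : Continuous p := continuous_iff_continuousAt.mpr fun t => (hp t).continuousAt
    have cq : Continuous q := continuous_iff_continuousAt.mpr fun t => (hq t).continuousAt
    have cr : Continuous r := continuous_iff_continuousAt.mpr fun t => (hr t).continuousAt
    have cs : Continuous s := continuous_iff_continuousAt.mpr fun t => (hs t).continuousAt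
    have cD : ∀ k : ℕ, k ≤ 4 → ContinuousOn (D k) (Set.Icc c d) := fun k hk =>
      (hCD k hk).mono hsub
    have cprim : ContinuousOn (fun t => ∫ x in a..t, f x) (Set.Icc c d) := by
      have : ContinuousOn (fun t => ∫ x in a..t, f x) (Set.Icc a b) := by
        have h1 := intervalIntegral.continuousOn_primitive_interval
          (μ := volume) (a := a) (b := b) (f := f) ?_
        · rwa [uIcc_of_le hab.le] at h1
        · rw [uIcc_of_le hab.le]
          exact hfc.integrableOn_Icc
      exact this.mono hsub
    exact ((((((cp.continuousOn.smul (cD 3 (by norm_num))).sub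
      (cq.continuousOn.smul (cD 2 (by norm_num)))).add
      (cr.continuousOn.smul (cD 1 (by norm_num)))).sub
      (cs.continuousOn.smul (hfc.mono hsub)))).sub
      (cprim.const_smul _))
  -- integrability of the integrand
  have hint : IntervalIntegrable (fun t => p t • D 4 t) volume c d := by
    apply ContinuousOn.intervalIntegrable
    rw [uIcc_of_le hcd]
    exact (continuous_iff_continuousAt.mpr fun t => (hp t).continuousAt).continuousOn.smul
      ((hCD 4 le_rfl).mono hsub)
  exact intervalIntegral.integral_eq_sub_of_hasDerivAt_of_le hcd hGc hG hint


/-- Error estimates for the Simpson rule: for `a < b` and every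
`f ∈ C⁴([a,b],𝕂)`, the error
`E(f) = (1/6)f(a) + (2/3)f((a+b)/2) + (1/6)f(b) − (1/(b−a))∫_a^b f` satisfies
`|E(f)| ≤ (b−a)³/1152 · ‖f⁗‖₁` and `|E(f)| ≤ (b−a)⁴/2880 · ‖f⁗‖_∞`. -/
theorem stmt_18 {𝕂 : Type*} [RCLike 𝕂] (a b : ℝ) (hab : a < b)
    (f : ℝ → 𝕂) (hf : ContDiffOn ℝ 4 f (Set.Icc a b))
    (E : 𝕂)
    (hE : E = (1 / 6 : 𝕂) * f a + (2 / 3 : 𝕂) * f ((a + b) / 2) + (1 / 6 : 𝕂) * f b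
      - (((b - a : ℝ)) : 𝕂)⁻¹ * ∫ x in a..b, f x) :
    ‖E‖ ≤ (b - a) ^ 3 / 1152 * ∫ t in a..b, ‖iteratedDerivWithin 4 f (Set.Icc a b) t‖ ∧
    ‖E‖ ≤ (b - a) ^ 4 / 2880 *
        sSup ((fun t => ‖iteratedDerivWithin 4 f (Set.Icc a b) t‖) '' Set.Icc a b) := by
  have hba : b - a ≠ 0 := sub_ne_zero.2 hab.ne'
  have hba' : (0:ℝ) < b - a := sub_pos.2 hab
  have hm1 : a ≤ (a+b)/2 := by linarith
  have hm2 : (a+b)/2 ≤ b := by linarith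
  -- derivative chains
  have hK1 : ∀ t : ℝ, HasDerivAt (fun t => ((a+b)/2 - t)^3/9 + (b-t)^3/36 - (b-t)^4/(24*(b-a)))
      (-(((a+b)/2 - t)^2)/3 - (b-t)^2/12 + (b-t)^3/(6*(b-a))) t := by
    intro t
    have h := (((hd_pow' ((a+b)/2) 3 t).div_const 9).add ((hd_pow' b 3 t).div_const 36)).sub
      ((hd_pow' b 4 t).div_const (24*(b-a)))
    refine h.congr_deriv ?_
    field_simp
    ring
  have hK1' : ∀ t : ℝ, HasDerivAt (fun t => -(((a+b)/2 - t)^2)/3 - (b-t)^2/12 + (b-t)^3/(6*(b-a)))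
      (2*((a+b)/2 - t)/3 + (b-t)/6 - (b-t)^2/(2*(b-a))) t := by
    intro t
    have h := ((((hd_pow' ((a+b)/2) 2 t).neg).div_const 3).sub ((hd_pow' b 2 t).div_const 12)).add
      ((hd_pow' b 3 t).div_const (6*(b-a)))
    refine h.congr_deriv ?_
    field_simp
    ring
  have hK1'' : ∀ t : ℝ, HasDerivAt (fun t => 2*((a+b)/2 - t)/3 + (b-t)/6 - (b-t)^2/(2*(b-a)))
      (-5/6 + (b-t)/(b-a)) t := by
    intro t
    have h1 := (((hasDerivAt_id t).const_sub ((a+b)/2)).const_mul 2).div_const 3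
    have h2 := ((hasDerivAt_id t).const_sub b).div_const 6
    have h3 := ((hd_pow' b 2 t).div_const (2*(b-a)))
    have h := (h1.add h2).sub h3
    simp only [id_eq] at h
    refine h.congr_deriv ?_
    field_simp
    ring
  have hK1''' : ∀ t : ℝ, HasDerivAt (fun t => -5/6 + (b-t)/(b-a)) (-(b-a)⁻¹) t := by
    intro t
    have h := ((((hasDerivAt_id t).const_sub b).div_const (b-a)).const_add (-5/6))
    simp only [id_eq] at h
    refine h.congr_deriv ?_
    ring
  have hK2 : ∀ t : ℝ, HasDerivAt (fun t => (b-t)^3/36 - (b-t)^4/(24*(b-a)))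
      (-(b-t)^2/12 + (b-t)^3/(6*(b-a))) t := by
    intro t
    have h := ((hd_pow' b 3 t).div_const 36).sub ((hd_pow' b 4 t).div_const (24*(b-a)))
    refine h.congr_deriv ?_
    field_simp
    ring
  have hK2' : ∀ t : ℝ, HasDerivAt (fun t => -(b-t)^2/12 + (b-t)^3/(6*(b-a)))
      ((b-t)/6 - (b-t)^2/(2*(b-a))) t := by
    intro t
    have h := (((hd_pow' b 2 t).neg).div_const 12).add ((hd_pow' b 3 t).div_const (6*(b-a)))
    refine h.congr_deriv ?_
    field_simp
    ring
  have hK2'' : ∀ t : ℝ, HasDerivAt (fun t => (b-t)/6 - (b-t)^2/(2*(b-a)))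
      (-1/6 + (b-t)/(b-a)) t := by
    intro t
    have h2 := ((hasDerivAt_id t).const_sub b).div_const 6
    have h3 := ((hd_pow' b 2 t).div_const (2*(b-a)))
    have h := h2.sub h3
    simp only [id_eq] at h
    refine h.congr_deriv ?_
    field_simp
    ring
  have hK2''' : ∀ t : ℝ, HasDerivAt (fun t => -1/6 + (b-t)/(b-a)) (-(b-a)⁻¹) t := by
    intro t
    have h := ((((hasDerivAt_id t).const_sub b).div_const (b-a)).const_add (-1/6))
    simp only [id_eq] at h
    refine h.congr_deriv ?_
    ring
  -- the two integration-by-parts identities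
  have h₁ := parts4 (a := a) (b := b) (c := a) (d := (a+b)/2) hab hm1 le_rfl hm2 hf
    hK1 hK1' hK1'' hK1'''
  have h₂ := parts4 (a := a) (b := b) (c := (a+b)/2) (d := b) hab hm2 hm1 le_rfl hf
    hK2 hK2' hK2'' hK2'''
  -- integrability of f on subintervals
  have hfc : ContinuousOn f (Set.Icc a b) := hf.continuousOn
  have hfint1 : IntervalIntegrable f volume a ((a+b)/2) := by
    apply ContinuousOn.intervalIntegrable
    rw [uIcc_of_le hm1]
    exact hfc.mono (Icc_subset_Icc le_rfl hm2)
  have hfint2 : IntervalIntegrable f volume ((a+b)/2) b := by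
    apply ContinuousOn.intervalIntegrable
    rw [uIcc_of_le hm2]
    exact hfc.mono (Icc_subset_Icc hm1 le_rfl)
  have hsplit := intervalIntegral.integral_add_adjacent_intervals hfint1 hfint2
  have hbk : ((b:𝕂) - (a:𝕂)) ≠ 0 := by
    rw [show (b:𝕂) - (a:𝕂) = ((b - a : ℝ) : 𝕂) by push_cast; ring]
    exact_mod_cast hba
  have hE' : E = (1/6 : ℝ) • f a + (2/3 : ℝ) • f ((a+b)/2) + (1/6 : ℝ) • f b
      - (b-a)⁻¹ • (∫ x in a..b, f x) := by
    rw [hE]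
    simp only [RCLike.real_smul_eq_coe_mul]
    push_cast
    ring
  have hEsum : E = (∫ t in a..((a+b)/2), (((a+b)/2 - t)^3/9 + (b-t)^3/36 - (b-t)^4/(24*(b-a))) • iteratedDerivWithin 4 f (Set.Icc a b) t)
      + ∫ t in ((a+b)/2)..b, ((b-t)^3/36 - (b-t)^4/(24*(b-a))) • iteratedDerivWithin 4 f (Set.Icc a b) t := by
    rw [h₁, h₂, hE']
    simp only [intervalIntegral.integral_same]
    match_scalars <;> field_simp <;> ring
  -- continuity facts
  have hD4c : ContinuousOn (fun t => iteratedDerivWithin 4 f (Set.Icc a b) t) (Set.Icc a b) :=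
    hf.continuousOn_iteratedDerivWithin (by exact_mod_cast le_rfl) (uniqueDiffOn_Icc hab)
  have hgc : ContinuousOn (fun t => ‖iteratedDerivWithin 4 f (Set.Icc a b) t‖) (Set.Icc a b) :=
    hD4c.norm
  have cK1 : Continuous (fun t:ℝ => ((a+b)/2 - t)^3/9 + (b-t)^3/36 - (b-t)^4/(24*(b-a))) :=
    ((((continuous_const.sub continuous_id).pow 3).div_const 9).add
      (((continuous_const.sub continuous_id).pow 3).div_const 36)).sub
      (((continuous_const.sub continuous_id).pow 4).div_const (24*(b-a)))
  have cK2 : Continuous (fun t:ℝ => (b-t)^3/36 - (b-t)^4/(24*(b-a))) :=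
    (((continuous_const.sub continuous_id).pow 3).div_const 36).sub
      (((continuous_const.sub continuous_id).pow 4).div_const (24*(b-a)))
  -- pointwise kernel bounds
  have hbound : ∀ u : ℝ, 0 ≤ u → u ≤ (b-a)/2 →
      0 ≤ u^3*(4*((b-a)/2)-3*u)/(144*((b-a)/2)) ∧
      u^3*(4*((b-a)/2)-3*u)/(144*((b-a)/2)) ≤ (b-a)^3/1152 := by
    intro u h0 h1
    constructor
    · apply div_nonneg
      · apply mul_nonneg (pow_nonneg h0 3)
        linarith
      · linarith
    · rw [div_le_div_iff₀ (by linarith) (by norm_num)]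
      nlinarith [mul_nonneg (sq_nonneg ((b-a)/2 - u))
        (by nlinarith : (0:ℝ) ≤ ((b-a)/2)^2 + 2*((b-a)/2)*u + 3*u^2), sq_nonneg u]
  have hK1b : ∀ t ∈ Set.Icc a ((a+b)/2),
      0 ≤ (((a+b)/2 - t)^3/9 + (b-t)^3/36 - (b-t)^4/(24*(b-a))) ∧
      (((a+b)/2 - t)^3/9 + (b-t)^3/36 - (b-t)^4/(24*(b-a))) ≤ (b-a)^3/1152 := by
    intro t ht
    have hform : (((a+b)/2 - t)^3/9 + (b-t)^3/36 - (b-t)^4/(24*(b-a)))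
        = (t-a)^3*(4*((b-a)/2)-3*(t-a))/(144*((b-a)/2)) := by
      field_simp
      ring
    rw [hform]
    exact hbound (t-a) (by linarith [ht.1]) (by linarith [ht.2])
  have hK2b : ∀ t ∈ Set.Icc ((a+b)/2) b,
      0 ≤ ((b-t)^3/36 - (b-t)^4/(24*(b-a))) ∧
      ((b-t)^3/36 - (b-t)^4/(24*(b-a))) ≤ (b-a)^3/1152 := by
    intro t ht
    have hform : ((b-t)^3/36 - (b-t)^4/(24*(b-a)))
        = (b-t)^3*(4*((b-a)/2)-3*(b-t))/(144*((b-a)/2)) := by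
      field_simp
      ring
    rw [hform]
    exact hbound (b-t) (by linarith [ht.2]) (by linarith [ht.1])
  -- kernel integrals
  have hintK1 : (∫ t in a..((a+b)/2), (((a+b)/2 - t)^3/9 + (b-t)^3/36 - (b-t)^4/(24*(b-a))))
      = (b-a)^4/5760 := by
    have hA : ∀ t ∈ uIcc a ((a+b)/2), HasDerivAt
        (fun t => (b-t)^5/(120*(b-a)) - ((a+b)/2 - t)^4/36 - (b-t)^4/144)
        (((a+b)/2 - t)^3/9 + (b-t)^3/36 - (b-t)^4/(24*(b-a))) t := by
      intro t _
      have h := (((hd_pow' b 5 t).div_const (120*(b-a))).sub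
        ((hd_pow' ((a+b)/2) 4 t).div_const 36)).sub ((hd_pow' b 4 t).div_const 144)
      refine h.congr_deriv ?_
      field_simp
      ring
    rw [intervalIntegral.integral_eq_sub_of_hasDerivAt hA (cK1.intervalIntegrable _ _)]
    field_simp
    ring
  have hintK2 : (∫ t in ((a+b)/2)..b, ((b-t)^3/36 - (b-t)^4/(24*(b-a)))) = (b-a)^4/5760 := by
    have hA : ∀ t ∈ uIcc ((a+b)/2) b, HasDerivAt
        (fun t => (b-t)^5/(120*(b-a)) - (b-t)^4/144)
        ((b-t)^3/36 - (b-t)^4/(24*(b-a))) t := by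
      intro t _
      have h := ((hd_pow' b 5 t).div_const (120*(b-a))).sub ((hd_pow' b 4 t).div_const 144)
      refine h.congr_deriv ?_
      field_simp
      ring
    rw [intervalIntegral.integral_eq_sub_of_hasDerivAt hA (cK2.intervalIntegrable _ _)]
    field_simp
    ring
  -- norm bounds for the two pieces
  have n1 : ‖∫ t in a..((a+b)/2), (((a+b)/2 - t)^3/9 + (b-t)^3/36 - (b-t)^4/(24*(b-a))) •
        iteratedDerivWithin 4 f (Set.Icc a b) t‖
      ≤ ∫ t in a..((a+b)/2), (((a+b)/2 - t)^3/9 + (b-t)^3/36 - (b-t)^4/(24*(b-a))) *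
        ‖iteratedDerivWithin 4 f (Set.Icc a b) t‖ := by
    have h := intervalIntegral.norm_integral_le_integral_norm (μ := volume) (a := a)
      (b := (a+b)/2)
      (f := fun t => (((a+b)/2 - t)^3/9 + (b-t)^3/36 - (b-t)^4/(24*(b-a))) •
        iteratedDerivWithin 4 f (Set.Icc a b) t) hm1
    refine h.trans (le_of_eq ?_)
    apply intervalIntegral.integral_congr
    intro t ht
    rw [uIcc_of_le hm1] at ht
    simp only [norm_smul, Real.norm_eq_abs, abs_of_nonneg (hK1b t ht).1]
  have n2 : ‖∫ t in ((a+b)/2)..b, ((b-t)^3/36 - (b-t)^4/(24*(b-a))) •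
        iteratedDerivWithin 4 f (Set.Icc a b) t‖
      ≤ ∫ t in ((a+b)/2)..b, ((b-t)^3/36 - (b-t)^4/(24*(b-a))) *
        ‖iteratedDerivWithin 4 f (Set.Icc a b) t‖ := by
    have h := intervalIntegral.norm_integral_le_integral_norm (μ := volume) (a := (a+b)/2)
      (b := b)
      (f := fun t => ((b-t)^3/36 - (b-t)^4/(24*(b-a))) •
        iteratedDerivWithin 4 f (Set.Icc a b) t) hm2
    refine h.trans (le_of_eq ?_)
    apply intervalIntegral.integral_congr
    intro t ht
    rw [uIcc_of_le hm2] at ht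
    simp only [norm_smul, Real.norm_eq_abs, abs_of_nonneg (hK2b t ht).1]
  -- integrability facts
  have sub1 : Set.Icc a ((a+b)/2) ⊆ Set.Icc a b := Set.Icc_subset_Icc le_rfl hm2
  have sub2 : Set.Icc ((a+b)/2) b ⊆ Set.Icc a b := Set.Icc_subset_Icc hm1 le_rfl
  have ig1 : IntervalIntegrable (fun t => ‖iteratedDerivWithin 4 f (Set.Icc a b) t‖)
      volume a ((a+b)/2) := by
    apply ContinuousOn.intervalIntegrable
    rw [uIcc_of_le hm1]
    exact hgc.mono sub1
  have ig2 : IntervalIntegrable (fun t => ‖iteratedDerivWithin 4 f (Set.Icc a b) t‖)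
      volume ((a+b)/2) b := by
    apply ContinuousOn.intervalIntegrable
    rw [uIcc_of_le hm2]
    exact hgc.mono sub2
  have iK1g : IntervalIntegrable (fun t => (((a+b)/2 - t)^3/9 + (b-t)^3/36 - (b-t)^4/(24*(b-a))) *
      ‖iteratedDerivWithin 4 f (Set.Icc a b) t‖) volume a ((a+b)/2) := by
    apply ContinuousOn.intervalIntegrable
    rw [uIcc_of_le hm1]
    exact cK1.continuousOn.mul (hgc.mono sub1)
  have iK2g : IntervalIntegrable (fun t => ((b-t)^3/36 - (b-t)^4/(24*(b-a))) *
      ‖iteratedDerivWithin 4 f (Set.Icc a b) t‖) volume ((a+b)/2) b := by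
    apply ContinuousOn.intervalIntegrable
    rw [uIcc_of_le hm2]
    exact cK2.continuousOn.mul (hgc.mono sub2)
  constructor
  · -- L¹ bound
    have m1 : (∫ t in a..((a+b)/2), (((a+b)/2 - t)^3/9 + (b-t)^3/36 - (b-t)^4/(24*(b-a))) *
          ‖iteratedDerivWithin 4 f (Set.Icc a b) t‖)
        ≤ ∫ t in a..((a+b)/2), (b-a)^3/1152 * ‖iteratedDerivWithin 4 f (Set.Icc a b) t‖ := by
      apply intervalIntegral.integral_mono_on hm1 iK1g (ig1.const_mul _)
      intro t ht
      exact mul_le_mul_of_nonneg_right (hK1b t ht).2 (norm_nonneg _)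
    have m2 : (∫ t in ((a+b)/2)..b, ((b-t)^3/36 - (b-t)^4/(24*(b-a))) *
          ‖iteratedDerivWithin 4 f (Set.Icc a b) t‖)
        ≤ ∫ t in ((a+b)/2)..b, (b-a)^3/1152 * ‖iteratedDerivWithin 4 f (Set.Icc a b) t‖ := by
      apply intervalIntegral.integral_mono_on hm2 iK2g (ig2.const_mul _)
      intro t ht
      exact mul_le_mul_of_nonneg_right (hK2b t ht).2 (norm_nonneg _)
    rw [hEsum]
    calc ‖(∫ t in a..((a+b)/2), (((a+b)/2 - t)^3/9 + (b-t)^3/36 - (b-t)^4/(24*(b-a))) •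
            iteratedDerivWithin 4 f (Set.Icc a b) t)
          + ∫ t in ((a+b)/2)..b, ((b-t)^3/36 - (b-t)^4/(24*(b-a))) •
            iteratedDerivWithin 4 f (Set.Icc a b) t‖ ≤ _ + _ := norm_add_le _ _
      _ ≤ (∫ t in a..((a+b)/2), (b-a)^3/1152 * ‖iteratedDerivWithin 4 f (Set.Icc a b) t‖)
          + ∫ t in ((a+b)/2)..b, (b-a)^3/1152 * ‖iteratedDerivWithin 4 f (Set.Icc a b) t‖ :=
        add_le_add (n1.trans m1) (n2.trans m2)
      _ = (b-a)^3/1152 * ((∫ t in a..((a+b)/2), ‖iteratedDerivWithin 4 f (Set.Icc a b) t‖)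
          + ∫ t in ((a+b)/2)..b, ‖iteratedDerivWithin 4 f (Set.Icc a b) t‖) := by
        rw [intervalIntegral.integral_const_mul, intervalIntegral.integral_const_mul]
        ring
      _ = (b-a)^3/1152 * ∫ t in a..b, ‖iteratedDerivWithin 4 f (Set.Icc a b) t‖ := by
        rw [intervalIntegral.integral_add_adjacent_intervals ig1 ig2]
  · -- sup bound
    set M := sSup ((fun t => ‖iteratedDerivWithin 4 f (Set.Icc a b) t‖) '' Set.Icc a b) with hM
    have hbdd : BddAbove ((fun t => ‖iteratedDerivWithin 4 f (Set.Icc a b) t‖) '' Set.Icc a b) :=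
      (isCompact_Icc.image_of_continuousOn hgc).bddAbove
    have hgM : ∀ t ∈ Set.Icc a b, ‖iteratedDerivWithin 4 f (Set.Icc a b) t‖ ≤ M :=
      fun t ht => le_csSup hbdd (Set.mem_image_of_mem _ ht)
    have m1 : (∫ t in a..((a+b)/2), (((a+b)/2 - t)^3/9 + (b-t)^3/36 - (b-t)^4/(24*(b-a))) *
          ‖iteratedDerivWithin 4 f (Set.Icc a b) t‖)
        ≤ ∫ t in a..((a+b)/2), (((a+b)/2 - t)^3/9 + (b-t)^3/36 - (b-t)^4/(24*(b-a))) * M := by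
      apply intervalIntegral.integral_mono_on hm1 iK1g
        ((cK1.intervalIntegrable _ _).mul_const _)
      intro t ht
      exact mul_le_mul_of_nonneg_left (hgM t (sub1 ht)) (hK1b t ht).1
    have m2 : (∫ t in ((a+b)/2)..b, ((b-t)^3/36 - (b-t)^4/(24*(b-a))) *
          ‖iteratedDerivWithin 4 f (Set.Icc a b) t‖)
        ≤ ∫ t in ((a+b)/2)..b, ((b-t)^3/36 - (b-t)^4/(24*(b-a))) * M := by
      apply intervalIntegral.integral_mono_on hm2 iK2g
        ((cK2.intervalIntegrable _ _).mul_const _)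
      intro t ht
      exact mul_le_mul_of_nonneg_left (hgM t (sub2 ht)) (hK2b t ht).1
    rw [hEsum]
    calc ‖(∫ t in a..((a+b)/2), (((a+b)/2 - t)^3/9 + (b-t)^3/36 - (b-t)^4/(24*(b-a))) •
            iteratedDerivWithin 4 f (Set.Icc a b) t)
          + ∫ t in ((a+b)/2)..b, ((b-t)^3/36 - (b-t)^4/(24*(b-a))) •
            iteratedDerivWithin 4 f (Set.Icc a b) t‖ ≤ _ + _ := norm_add_le _ _
      _ ≤ (∫ t in a..((a+b)/2), (((a+b)/2 - t)^3/9 + (b-t)^3/36 - (b-t)^4/(24*(b-a))) * M)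
          + ∫ t in ((a+b)/2)..b, ((b-t)^3/36 - (b-t)^4/(24*(b-a))) * M :=
        add_le_add (n1.trans m1) (n2.trans m2)
      _ = (b-a)^4/5760 * M + (b-a)^4/5760 * M := by
        rw [intervalIntegral.integral_mul_const, intervalIntegral.integral_mul_const,
          hintK1, hintK2]
      _ = (b-a)^4/2880 * M := by ring
end

section
/- For all real numbers w > 0, v ∈ (0,π) and s ∈ (0,1), the following two strict inequalities hold: v·(cot(sv) − cot(v)) > (1−s)/s > w·(coth(sw) − coth(w)). -/
open Real Set

lemma my_hasDerivAt_cot {x : ℝ} (h : Real.sin x ≠ 0) :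
    HasDerivAt Real.cot (-(1 / Real.sin x ^ 2)) x := by
  have hcot : Real.cot = fun y => Real.cos y / Real.sin y :=
    funext fun y => Real.cot_eq_cos_div_sin y
  rw [hcot]
  have hd : HasDerivAt (fun y => Real.cos y / Real.sin y) _ x :=
    (Real.hasDerivAt_cos x).div (Real.hasDerivAt_sin x) h
  convert hd using 1
  have := Real.sin_sq_add_cos_sq x
  field_simp
  nlinarith [this]

lemma aux1 : StrictAntiOn (fun x : ℝ => Real.cot x - 1 / x) (Set.Ioo 0 Real.pi) := by
  apply strictAntiOn_of_deriv_neg (convex_Ioo 0 Real.pi)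
  · intro x hx
    have hs : Real.sin x ≠ 0 := ne_of_gt (Real.sin_pos_of_pos_of_lt_pi hx.1 hx.2)
    have hinv : HasDerivAt (fun y : ℝ => 1 / y) (-(1 / x ^ 2)) x := by
      simpa [one_div] using hasDerivAt_inv (ne_of_gt hx.1)
    exact ((my_hasDerivAt_cot hs).sub hinv).continuousAt.continuousWithinAt
  · rw [interior_Ioo]
    intro x hx
    have hx0 := hx.1
    have hs : 0 < Real.sin x := Real.sin_pos_of_pos_of_lt_pi hx.1 hx.2
    have hinv : HasDerivAt (fun y : ℝ => 1 / y) (-(1 / x ^ 2)) x := by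
      simpa [one_div] using hasDerivAt_inv hx0.ne'
    have hd : HasDerivAt (fun x : ℝ => Real.cot x - 1 / x)
        (-(1 / Real.sin x ^ 2) - (-(1 / x ^ 2))) x := (my_hasDerivAt_cot hs.ne').sub hinv
    rw [hd.deriv]
    have hsl : Real.sin x < x := Real.sin_lt hx0
    have h1 : Real.sin x ^ 2 < x ^ 2 := by nlinarith
    have : 1 / x ^ 2 < 1 / Real.sin x ^ 2 := by
      apply div_lt_div_of_pos_left one_pos (by positivity) h1
    linarith

lemma aux2 : StrictMonoOn (fun x : ℝ => Real.cosh x / Real.sinh x - 1 / x)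
    (Set.Ioi 0) := by
  apply strictMonoOn_of_deriv_pos (convex_Ioi 0)
  · intro x hx
    have hsh : Real.sinh x ≠ 0 := ne_of_gt (Real.sinh_pos_iff.2 hx)
    exact (((Real.continuous_cosh.continuousAt.div Real.continuous_sinh.continuousAt hsh).sub
      (continuousAt_const.div continuousAt_id (ne_of_gt hx)))).continuousWithinAt
  · rw [interior_Ioi]
    intro x hx
    have hx0 : 0 < x := hx
    have hsh : 0 < Real.sinh x := Real.sinh_pos_iff.2 hx0
    have hinv : HasDerivAt (fun y : ℝ => 1 / y) (-(1 / x ^ 2)) x := by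
      simpa [one_div] using hasDerivAt_inv hx0.ne'
    have hd : HasDerivAt (fun x : ℝ => Real.cosh x / Real.sinh x - 1 / x)
        ((Real.sinh x * Real.sinh x - Real.cosh x * Real.cosh x) / Real.sinh x ^ 2
          - (-(1 / x ^ 2))) x :=
      (((Real.hasDerivAt_cosh x).div (Real.hasDerivAt_sinh x) hsh.ne')).sub hinv
    rw [hd.deriv]
    have hc : Real.cosh x ^ 2 - Real.sinh x ^ 2 = 1 := Real.cosh_sq_sub_sinh_sq x
    have h1 : (Real.sinh x * Real.sinh x - Real.cosh x * Real.cosh x) / Real.sinh x ^ 2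
        = -(1 / Real.sinh x ^ 2) := by
      rw [div_eq_iff (by positivity : (Real.sinh x ^ 2) ≠ 0)]
      have h2 : -(1 / Real.sinh x ^ 2) * Real.sinh x ^ 2 = -1 := by field_simp
      rw [h2]; linear_combination (-1 : ℝ) * hc
    rw [h1]
    have hxl : x < Real.sinh x := Real.self_lt_sinh_iff.2 hx0
    have h2 : x ^ 2 < Real.sinh x ^ 2 := by nlinarith
    have : 1 / Real.sinh x ^ 2 < 1 / x ^ 2 :=
      div_lt_div_of_pos_left one_pos (by positivity) h2
    linarith

/-- For all reals `w > 0`, `v ∈ (0,π)` and `s ∈ (0,1)`: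
`v(cot(sv) − cot(v)) > (1−s)/s > w(coth(sw) − coth(w))`. -/
theorem stmt_19 (w v s : ℝ) (hw : 0 < w) (hv : v ∈ Set.Ioo 0 Real.pi)
    (hs : s ∈ Set.Ioo (0 : ℝ) 1) :
    v * (Real.cot (s * v) - Real.cot v) > (1 - s) / s ∧
    (1 - s) / s > w * (Real.cosh (s * w) / Real.sinh (s * w)
      - Real.cosh w / Real.sinh w) := by
  obtain ⟨hv0, hvpi⟩ := hv
  obtain ⟨hs0, hs1⟩ := hs
  have hsv0 : 0 < s * v := mul_pos hs0 hv0
  have hsvlt : s * v < v := by nlinarith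
  constructor
  · have h := aux1 ⟨hsv0, hsvlt.trans hvpi⟩ ⟨hv0, hvpi⟩ hsvlt
    -- h : cot v - 1/v < cot (s*v) - 1/(s*v)
    simp only at h
    have key : v * (Real.cot (s * v) - Real.cot v) > v * (1 / (s * v) - 1 / v) := by
      nlinarith [h]
    have : v * (1 / (s * v) - 1 / v) = (1 - s) / s := by
      field_simp
    linarith [key, this.symm.le]
  · have hsw0 : 0 < s * w := mul_pos hs0 hw
    have hswlt : s * w < w := by nlinarith
    have h := aux2 (Set.mem_Ioi.2 hsw0) (Set.mem_Ioi.2 hw) hswlt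
    simp only at h
    have key : w * (Real.cosh (s * w) / Real.sinh (s * w) - Real.cosh w / Real.sinh w)
        < w * (1 / (s * w) - 1 / w) := by
      nlinarith [h]
    have : w * (1 / (s * w) - 1 / w) = (1 - s) / s := by
      field_simp
    linarith
end
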